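/- arXiv:1403.1681 — 5 statements merged into one kernel-verified Lean document; each statement's English description precedes it below -/
import Mathlib

section
/- Let p and q be positive integers with gcd(p,q) = 1, and let C be the integral closure of the ideal (x^p, y^q) in R = k[x,y] (a block ideal). Then C is simple: there do not exist complete ideals I₁, I₂ of R, both proper (different from R), such that C = I₁·I₂. -/
open MvPolynomial Pointwise

noncomputable section

/-- `f` is integral over the ideal `I`: it satisfies an equation
`f^n + c₁ f^(n-1) + ⋯ + c_n = 0` with `c_j ∈ I^j`. -/
def IsIntegralOverIdeal {A : Type*} [CommRing A] (I : Ideal A) (f : A) : Prop :=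
  ∃ n : ℕ, 0 < n ∧ ∃ c : ℕ → A, (∀ j ∈ Finset.Icc 1 n, c j ∈ I ^ j) ∧
    f ^ n + ∑ j ∈ Finset.Icc 1 n, c j * f ^ (n - j) = 0

/-- `I` is complete (integrally closed): it coincides with its integral closure. -/
def IsCompleteIdeal {A : Type*} [CommRing A] (I : Ideal A) : Prop :=
  ∀ f, IsIntegralOverIdeal I f ↔ f ∈ I

/-- `J` is the integral closure of the ideal `I`. -/
def IsIntegralClosureOfIdeal {A : Type*} [CommRing A] (J I : Ideal A) : Prop :=
  ∀ f, f ∈ J ↔ IsIntegralOverIdeal I f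

/-- A monomial ideal is an ideal generated by monomials. -/
def IsMonomialIdeal {k : Type*} [Field k] {σ : Type*} (I : Ideal (MvPolynomial σ k)) : Prop :=
  ∃ S : Set (σ →₀ ℕ), I = Ideal.span ((fun s => (MvPolynomial.monomial s (1 : k))) '' S)

/-- The Newton polyhedron of a monomial ideal in two variables: the convex hull in `ℝ²`
of the exponent vectors of the monomials lying in the ideal. -/
def newton {k : Type*} [Field k] (I : Ideal (MvPolynomial (Fin 2) k)) : Set (ℝ × ℝ) :=
  convexHull ℝ {p : ℝ × ℝ |
    ∃ s : Fin 2 →₀ ℕ, (MvPolynomial.monomial s (1 : k)) ∈ I ∧ p = ((s 0 : ℝ), (s 1 : ℝ))}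

/-- The Newton boundary: the union of the compact faces (compact extreme subsets)
of the Newton polyhedron. -/
def newtonBoundary {k : Type*} [Field k] (I : Ideal (MvPolynomial (Fin 2) k)) : Set (ℝ × ℝ) :=
  ⋃₀ {F : Set (ℝ × ℝ) | IsExtreme ℝ (newton I) F ∧ IsCompact F}

/-- The set of lattice points (points of `ℤ²`) of `ℝ × ℝ`. -/
def latticePts : Set (ℝ × ℝ) := {p | ∃ z : ℤ × ℤ, p = ((z.1 : ℝ), (z.2 : ℝ))}

/-- `l_I`: the number of lattice points on the Newton boundary of `I`. -/
def lcount {k : Type*} [Field k] (I : Ideal (MvPolynomial (Fin 2) k)) : ℕ :=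
  (newtonBoundary I ∩ latticePts).ncard

/-- `a_I`: the Newton boundary of `I` meets the first coordinate axis in `(a_I, 0)`. -/
def aEnd {k : Type*} [Field k] (I : Ideal (MvPolynomial (Fin 2) k)) : ℝ :=
  sInf {t : ℝ | (t, 0) ∈ newton I}

/-- `b_I`: the Newton boundary of `I` meets the second coordinate axis in `(0, b_I)`. -/
def bEnd {k : Type*} [Field k] (I : Ideal (MvPolynomial (Fin 2) k)) : ℝ :=
  sInf {t : ℝ | (0, t) ∈ newton I}

/-- `s_I`: the area (two-dimensional Lebesgue measure) of the bounded region
`ℝ₊² \ N(I)`. -/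
def sArea {k : Type*} [Field k] (I : Ideal (MvPolynomial (Fin 2) k)) : ℝ :=
  (MeasureTheory.volume ({p : ℝ × ℝ | 0 ≤ p.1 ∧ 0 ≤ p.2} \ newton I)).toReal

/-- `ℓ(A/I)`: the length of the `A`-module `A ⧸ I`, expressed as the Krull dimension
of its lattice of submodules. -/
def colength {A : Type*} [CommRing A] (I : Ideal A) : WithBot ℕ∞ :=
  Order.krullDim (Submodule A (A ⧸ I))

/-- The maximal homogeneous ideal `𝔪 = (x, y)` of `k[x,y]`. -/
def mxy (k : Type*) [Field k] : Ideal (MvPolynomial (Fin 2) k) :=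
  Ideal.span {MvPolynomial.X 0, MvPolynomial.X 1}

/-- An `𝔪`-primary ideal of `k[x,y]`: a primary ideal whose radical is `𝔪 = (x,y)`. -/
def IsMPrimary {k : Type*} [Field k] (I : Ideal (MvPolynomial (Fin 2) k)) : Prop :=
  I.IsPrimary ∧ I.radical = mxy k

/-- `ℓ(M/N)` for ideals `N ≤ M`: the length of the subquotient module `M ⧸ N`,
expressed as the Krull dimension of its lattice of submodules. -/
def quotLength {A : Type*} [CommRing A] (M N : Ideal A) : WithBot ℕ∞ :=
  Order.krullDim (Submodule A (↥M ⧸ (Submodule.comap M.subtype N)))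

/-- The minimal number of generators of an ideal. -/
def minGens {A : Type*} [CommRing A] (I : Ideal A) : ℕ :=
  sInf {n : ℕ | ∃ s : Finset A, s.card = n ∧ Ideal.span (s : Set A) = I}

/-- The rectangle `Q(I) = [0, a_I] × [0, b_I]`. -/
def Qset {k : Type*} [Field k] (I : Ideal (MvPolynomial (Fin 2) k)) : Set (ℝ × ℝ) :=
  Set.Icc (0 : ℝ) (aEnd I) ×ˢ Set.Icc (0 : ℝ) (bEnd I)

/-- The convex polygon `P(I) = N(I) ∩ Q(I)`, i.e. the polygon bounded by `B(I)` and the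
segments joining `(a_I, 0)` and `(0, b_I)` to `(a_I, b_I)`. -/
def Pset {k : Type*} [Field k] (I : Ideal (MvPolynomial (Fin 2) k)) : Set (ℝ × ℝ) :=
  newton I ∩ Qset I

/-- The Minkowski sum of `m` copies of `P` (with the empty sum being `{0}`). -/
def iterMink (P : Set (ℝ × ℝ)) : ℕ → Set (ℝ × ℝ)
  | 0 => {0}
  | n + 1 => P + iterMink P n

namespace BlockSimpleAux

variable {k : Type*} [Field k]

/-- weighted degree of an exponent vector -/
def sw (w : ℕ × ℕ) (u : Fin 2 →₀ ℕ) : ℕ := w.1 * u 0 + w.2 * u 1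

lemma sw_add (w : ℕ × ℕ) (u v : Fin 2 →₀ ℕ) : sw w (u + v) = sw w u + sw w v := by
  simp only [sw, Finsupp.add_apply]; ring

/-- the substitution `x ↦ x·t^{w₁}`, `y ↦ y·t^{w₂}` into `(k[x,y])[t]`. -/
noncomputable def Psi (w : ℕ × ℕ) :
    MvPolynomial (Fin 2) k →ₐ[k] Polynomial (MvPolynomial (Fin 2) k) :=
  MvPolynomial.aeval fun i => Polynomial.C (MvPolynomial.X i) * Polynomial.X ^ ![w.1, w.2] i

lemma mon2 (u : Fin 2 →₀ ℕ) (c : k) :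
    (monomial u c : MvPolynomial (Fin 2) k) = C c * X 0 ^ u 0 * X 1 ^ u 1 := by
  rw [monomial_eq, Finsupp.prod_fintype _ _ fun i => pow_zero _, Fin.prod_univ_two, mul_assoc]

lemma Psi_monomial (w : ℕ × ℕ) (u : Fin 2 →₀ ℕ) (c : k) :
    Psi w (monomial u c) = Polynomial.monomial (sw w u) (monomial u c) := by
  rw [Psi, MvPolynomial.aeval_monomial,
    Finsupp.prod_fintype _ _ fun i => by simp, Fin.prod_univ_two,
    ← Polynomial.C_mul_X_pow_eq_monomial, mon2]
  simp only [Matrix.cons_val_zero, Matrix.cons_val_one, Matrix.head_cons,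
    Polynomial.algebraMap_apply, MvPolynomial.algebraMap_eq, mul_pow, ← Polynomial.C_pow,
    ← pow_mul, Polynomial.C_mul, sw, pow_add]
  ring

lemma coeff_Psi (w : ℕ × ℕ) (f : MvPolynomial (Fin 2) k) (d : ℕ) :
    (Psi w f).coeff d =
      ∑ u ∈ f.support.filter fun u => sw w u = d, monomial u (coeff u f) := by
  conv_lhs => rw [← MvPolynomial.support_sum_monomial_coeff f, map_sum]
  rw [Polynomial.finset_sum_coeff, Finset.sum_filter]
  exact Finset.sum_congr rfl fun u _ => by rw [Psi_monomial, Polynomial.coeff_monomial]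

lemma coeff_Psi_ne (w : ℕ × ℕ) (f : MvPolynomial (Fin 2) k) (d : ℕ) :
    (Psi w f).coeff d ≠ 0 ↔ ∃ u ∈ f.support, sw w u = d := by
  rw [coeff_Psi]
  constructor
  · intro h
    obtain ⟨u, hu, -⟩ := Finset.exists_ne_zero_of_sum_ne_zero h
    exact ⟨u, (Finset.mem_filter.1 hu).1, (Finset.mem_filter.1 hu).2⟩
  · rintro ⟨u₀, hu₀, hd⟩ h
    have h2 := congrArg (MvPolynomial.coeff u₀) h
    rw [MvPolynomial.coeff_sum] at h2
    simp only [MvPolynomial.coeff_monomial, Finset.sum_ite_eq', MvPolynomial.coeff_zero] at h2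
    rw [if_pos (Finset.mem_filter.2 ⟨hu₀, hd⟩)] at h2
    exact MvPolynomial.mem_support_iff.1 hu₀ h2

/-- weighted trailing degree -/
noncomputable def Dw (w : ℕ × ℕ) (f : MvPolynomial (Fin 2) k) : ℕ∞ :=
  (Psi w f).trailingDegree

lemma Dw_def (w : ℕ × ℕ) (f : MvPolynomial (Fin 2) k) :
    Dw w f = (Psi w f).trailingDegree := rfl

lemma Dw_le (w : ℕ × ℕ) {f : MvPolynomial (Fin 2) k} {u} (hu : u ∈ f.support) :
    Dw w f ≤ (sw w u : ℕ∞) :=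
  Polynomial.trailingDegree_le_of_ne_zero ((coeff_Psi_ne w f _).2 ⟨u, hu, rfl⟩)

lemma Psi_ne_zero (w : ℕ × ℕ) {f : MvPolynomial (Fin 2) k} (hf : f ≠ 0) : Psi w f ≠ 0 := by
  obtain ⟨u, hu⟩ := Finset.nonempty_iff_ne_empty.2
    (fun h => hf (MvPolynomial.support_eq_empty.1 h))
  intro h
  exact (coeff_Psi_ne w f (sw w u)).2 ⟨u, hu, rfl⟩ (by simp [h])

lemma Dw_attain (w : ℕ × ℕ) {f : MvPolynomial (Fin 2) k} (hf : f ≠ 0) :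
    ∃ u ∈ f.support, (sw w u : ℕ∞) = Dw w f := by
  have h0 := Psi_ne_zero w hf
  have h1 := Polynomial.coeff_natTrailingDegree_ne_zero.2 h0
  obtain ⟨u, hu, h2⟩ := (coeff_Psi_ne w f _).1 h1
  refine ⟨u, hu, ?_⟩
  rw [Dw_def, Polynomial.trailingDegree_eq_natTrailingDegree h0]
  exact_mod_cast h2

/-- the ideal of polynomials all of whose exponents have weighted degree at least `a` -/
def Vid (w : ℕ × ℕ) (a : ℕ) : Ideal (MvPolynomial (Fin 2) k) where
  carrier := {f | ∀ u ∈ f.support, a ≤ sw w u}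
  zero_mem' := fun u hu => absurd hu (by simp)
  add_mem' := by
    intro f g hf hg u hu
    rcases Finset.mem_union.1 (MvPolynomial.support_add hu) with h | h
    exacts [hf u h, hg u h]
  smul_mem' := by
    intro c f hf u hu
    rw [smul_eq_mul] at hu
    obtain ⟨v, _, x, hx, rfl⟩ := Finset.mem_add.1 (MvPolynomial.support_mul _ _ hu)
    have h1 := hf x hx
    rw [sw_add]
    omega

lemma mem_Vid_iff {w : ℕ × ℕ} {a : ℕ} {f : MvPolynomial (Fin 2) k} :
    f ∈ Vid w a ↔ ∀ u ∈ f.support, a ≤ sw w u := Iff.rfl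

lemma mem_Vid_mul {w : ℕ × ℕ} {a b : ℕ} {f g : MvPolynomial (Fin 2) k}
    (hf : f ∈ Vid w a) (hg : g ∈ Vid w b) : f * g ∈ Vid w (a + b) := by
  intro u hu
  obtain ⟨v, hv, x, hx, rfl⟩ := Finset.mem_add.1 (MvPolynomial.support_mul _ _ hu)
  have h1 := hf v hv
  have h2 := hg x hx
  rw [sw_add]
  omega

lemma Vid_anti {w : ℕ × ℕ} {a b : ℕ} (h : a ≤ b) : Vid (k := k) w b ≤ Vid w a :=
  fun _ hf u hu => le_trans h (hf u hu)

lemma pow_mem_Vid {w : ℕ × ℕ} {a : ℕ} {f : MvPolynomial (Fin 2) k}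
    (hf : f ∈ Vid w a) (e : ℕ) : f ^ e ∈ Vid w (e * a) := by
  induction e with
  | zero => intro u hu; simp
  | succ e ih =>
      have h := mem_Vid_mul ih hf
      rw [← pow_succ] at h
      exact Vid_anti (le_of_eq (Nat.succ_mul _ _)) h

lemma sw_single0 (w : ℕ × ℕ) (e : ℕ) : sw w (Finsupp.single 0 e) = w.1 * e := by
  simp [sw, Finsupp.single_apply]

lemma sw_single1 (w : ℕ × ℕ) (e : ℕ) : sw w (Finsupp.single 1 e) = w.2 * e := by
  simp [sw, Finsupp.single_apply]

lemma X0_pow_mem_Vid {w : ℕ × ℕ} {a e : ℕ} (h : a ≤ w.1 * e) :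
    (X 0 ^ e : MvPolynomial (Fin 2) k) ∈ Vid w a := by
  intro u hu
  rw [MvPolynomial.support_X_pow] at hu
  rw [Finset.mem_singleton.1 hu, sw_single0]
  exact h

lemma X1_pow_mem_Vid {w : ℕ × ℕ} {a e : ℕ} (h : a ≤ w.2 * e) :
    (X 1 ^ e : MvPolynomial (Fin 2) k) ∈ Vid w a := by
  intro u hu
  rw [MvPolynomial.support_X_pow] at hu
  rw [Finset.mem_singleton.1 hu, sw_single1]
  exact h

lemma Jpow_le {p q : ℕ} (j : ℕ) :
    (Ideal.span {(X 0 : MvPolynomial (Fin 2) k) ^ p, X 1 ^ q}) ^ j ≤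
      Vid (q, p) (j * (q * p)) := by
  induction j with
  | zero =>
      intro f _ u _
      simp
  | succ j ih =>
      rw [pow_succ]
      refine Ideal.mul_le.2 fun r hr s hs => ?_
      have h1 := ih hr
      have h2 : Ideal.span {(X 0 : MvPolynomial (Fin 2) k) ^ p, X 1 ^ q} ≤
          Vid (q, p) (q * p) := by
        rw [Ideal.span_le]
        rintro s hs'
        simp only [Set.mem_insert_iff, Set.mem_singleton_iff] at hs'
        rcases hs' with rfl | rfl
        · exact X0_pow_mem_Vid (by simp)
        · exact X1_pow_mem_Vid (by simp [Nat.mul_comm])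
      refine Vid_anti (le_of_eq (Nat.succ_mul _ _)) (mem_Vid_mul h1 (h2 hs))

lemma integral_mem_Vid {p q : ℕ} {f : MvPolynomial (Fin 2) k}
    (hf : IsIntegralOverIdeal (Ideal.span {(X 0 : MvPolynomial (Fin 2) k) ^ p, X 1 ^ q}) f) :
    f ∈ Vid (q, p) (q * p) := by
  rcases eq_or_ne f 0 with rfl | hf0
  · exact zero_mem _
  obtain ⟨n, hn, c, hc, heq⟩ := hf
  by_contra hout
  rw [mem_Vid_iff] at hout
  push_neg at hout
  obtain ⟨u₀, hu₀, hlt⟩ := hout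
  set t := (Psi (q, p) f).natTrailingDegree with ht
  have hΨ := Psi_ne_zero (q, p) hf0
  have hDf : Dw (q, p) f = (t : ℕ∞) := Polynomial.trailingDegree_eq_natTrailingDegree hΨ
  have hft : f ∈ Vid (q, p) t := by
    intro u hu
    have h := Dw_le (q, p) hu
    rw [hDf] at h
    exact_mod_cast h
  have htlt : t < q * p := by
    have h := Dw_le (q, p) hu₀
    rw [hDf] at h
    have h2 : t ≤ sw (q, p) u₀ := by exact_mod_cast h
    omega
  have hfn : f ^ n ∈ Vid (q, p) (n * t + 1) := by
    have hneg : f ^ n = -∑ j ∈ Finset.Icc 1 n, c j * f ^ (n - j) :=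
      eq_neg_of_add_eq_zero_left heq
    rw [hneg]
    refine neg_mem (Ideal.sum_mem _ fun j hj => ?_)
    obtain ⟨hj1, hjn⟩ := Finset.mem_Icc.1 hj
    have h1 : c j ∈ Vid (k := k) (q, p) (j * (q * p)) := Jpow_le j (hc j hj)
    have h2 : f ^ (n - j) ∈ Vid (q, p) ((n - j) * t) := pow_mem_Vid hft _
    refine Vid_anti ?_ (mem_Vid_mul h1 h2)
    have e1 : n - j + j = n := by omega
    nlinarith [e1, hj1, htlt]
  have key : ∀ e : ℕ, Dw (q, p) (f ^ e) = ((e * t : ℕ) : ℕ∞) := by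
    intro e
    induction e with
    | zero => simp [Dw_def, map_pow]
    | succ e ih =>
        rw [pow_succ, Dw_def, map_mul, Polynomial.trailingDegree_mul, ← Dw_def, ← Dw_def, ih,
          hDf]
        push_cast
        ring
  have hfn0 : f ^ n ≠ 0 := pow_ne_zero _ hf0
  obtain ⟨u, hu, hswu⟩ := Dw_attain (q, p) hfn0
  rw [key n] at hswu
  have h3 : sw (q, p) u = n * t := by exact_mod_cast hswu
  have h4 := hfn u hu
  rw [h3] at h4
  exact Nat.not_succ_le_self _ h4

lemma ideal_min (w : ℕ × ℕ) {I : Ideal (MvPolynomial (Fin 2) k)} {f₀ : MvPolynomial (Fin 2) k}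
    (hf₀ : f₀ ∈ I) (h0 : f₀ ≠ 0) :
    ∃ a : ℕ, (∃ g ∈ I, g ≠ 0 ∧ Dw w g = (a : ℕ∞)) ∧ I ≤ Vid w a := by
  set S : Set ℕ := {d | ∃ f ∈ I, f ≠ 0 ∧ Dw w f = (d : ℕ∞)} with hS
  have hne : S.Nonempty :=
    ⟨(Psi w f₀).natTrailingDegree, f₀, hf₀, h0,
      Polynomial.trailingDegree_eq_natTrailingDegree (Psi_ne_zero w h0)⟩
  refine ⟨sInf S, Nat.sInf_mem hne, fun f hf => ?_⟩
  rcases eq_or_ne f 0 with rfl | hf0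
  · exact zero_mem _
  intro u hu
  have hd : (Psi w f).natTrailingDegree ∈ S :=
    ⟨f, hf, hf0, Polynomial.trailingDegree_eq_natTrailingDegree (Psi_ne_zero w hf0)⟩
  have h1 := Nat.sInf_le hd
  have h2 := Dw_le w hu
  rw [Dw_def, Polynomial.trailingDegree_eq_natTrailingDegree (Psi_ne_zero w hf0)] at h2
  have h3 : (Psi w f).natTrailingDegree ≤ sw w u := by exact_mod_cast h2
  omega

lemma ideal_le_K {I : Ideal (MvPolynomial (Fin 2) k)} (hne : I ≠ ⊤) {p q : ℕ}
    (h0 : (X 0 : MvPolynomial (Fin 2) k) ^ p ∈ I) (h1 : (X 1 : MvPolynomial (Fin 2) k) ^ q ∈ I) :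
    I ≤ Ideal.span (MvPolynomial.X '' (Set.univ : Set (Fin 2))) := by
  set K : Ideal (MvPolynomial (Fin 2) k) := Ideal.span (MvPolynomial.X '' Set.univ) with hK
  have hrad : K ≤ I.radical := by
    rw [hK, Ideal.span_le]
    rintro x ⟨i, -, rfl⟩
    fin_cases i
    · exact Ideal.mem_radical_of_pow_mem (Ideal.le_radical h0)
    · exact Ideal.mem_radical_of_pow_mem (Ideal.le_radical h1)
  obtain ⟨N, hN⟩ := Ideal.exists_pow_le_of_le_radical_of_fg hrad
    (Submodule.fg_span (Set.finite_univ.image _))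
  intro f hf
  by_contra hfK
  rw [hK, MvPolynomial.mem_ideal_span_X_image] at hfK
  push_neg at hfK
  obtain ⟨m, hm, hmz⟩ := hfK
  have hm0 : m = 0 := Finsupp.ext fun i => by simpa using hmz i (Set.mem_univ i)
  rw [hm0] at hm
  have hc : MvPolynomial.coeff 0 f ≠ 0 := MvPolynomial.mem_support_iff.1 hm
  set c := MvPolynomial.coeff 0 f with hcdef
  set g := f - C c with hg
  have hgK : g ∈ K := by
    rw [hK, MvPolynomial.mem_ideal_span_X_image]
    intro m' hm'
    by_contra hall
    push_neg at hall
    have hm'0 : m' = 0 := Finsupp.ext fun i => by simpa using hall i (Set.mem_univ i)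
    rw [hm'0] at hm'
    have : MvPolynomial.coeff 0 g = 0 := by
      rw [hg, MvPolynomial.coeff_sub]
      simp [hcdef]
    exact MvPolynomial.mem_support_iff.1 hm' this
  have hgN : g ^ N ∈ I := hN (Ideal.pow_mem_pow hgK N)
  have hCc : (C c : MvPolynomial (Fin 2) k) ^ N ∈ I := by
    rw [← Ideal.Quotient.eq_zero_iff_mem, map_pow]
    have e0 : (C c : MvPolynomial (Fin 2) k) = f - g := by rw [hg]; ring
    have hgq : (Ideal.Quotient.mk I g) ^ N = 0 := by
      rw [← map_pow, Ideal.Quotient.eq_zero_iff_mem]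
      exact hgN
    calc ((Ideal.Quotient.mk I) (C c)) ^ N
        = (-(Ideal.Quotient.mk I g)) ^ N := by
          rw [e0, map_sub, Ideal.Quotient.eq_zero_iff_mem.2 hf, zero_sub]
      _ = (-1) ^ N * (Ideal.Quotient.mk I g) ^ N := by ring
      _ = 0 := by rw [hgq, mul_zero]
  have hU : IsUnit ((C c : MvPolynomial (Fin 2) k) ^ N) :=
    (IsUnit.of_mul_eq_one (C c⁻¹)
      (by rw [← MvPolynomial.C_mul, mul_inv_cancel₀ hc, MvPolynomial.C_1])).pow N
  exact hne (Ideal.eq_top_of_isUnit_mem _ hCc hU)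

end BlockSimpleAux

/-- **Proposition 1.1.** A block ideal, i.e. the integral closure of `(x^p, y^q)` with
`gcd(p,q) = 1`, is simple: it is not the product of two proper complete ideals. -/
theorem block_ideal_is_simple {k : Type*} [Field k] (p q : ℕ) (hp : 0 < p) (hq : 0 < q)
    (hpq : Nat.gcd p q = 1) (C : Ideal (MvPolynomial (Fin 2) k))
    (hC : IsIntegralClosureOfIdeal C (Ideal.span {(X 0 : MvPolynomial (Fin 2) k) ^ p, X 1 ^ q})) :
    ¬ ∃ I₁ I₂ : Ideal (MvPolynomial (Fin 2) k),
      I₁ ≠ ⊤ ∧ I₂ ≠ ⊤ ∧ IsCompleteIdeal I₁ ∧ IsCompleteIdeal I₂ ∧ C = I₁ * I₂ := by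
  open BlockSimpleAux in
  rintro ⟨I₁, I₂, h1top, h2top, -, -, hprod⟩
  set J : Ideal (MvPolynomial (Fin 2) k) := Ideal.span {(X 0 : MvPolynomial (Fin 2) k) ^ p, X 1 ^ q}
    with hJdef
  -- J is contained in C
  have hJC : ∀ f ∈ J, f ∈ C := by
    intro f hf
    refine (hC f).2 ⟨1, one_pos, fun _ => -f, ?_, ?_⟩
    · intro j hj
      simp only [Finset.mem_Icc] at hj
      have hj1 : j = 1 := by omega
      rw [hj1, pow_one]
      exact neg_mem hf
    · simp [Finset.Icc_self]
  have hX0C : (X 0 : MvPolynomial (Fin 2) k) ^ p ∈ C :=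
    hJC _ (Ideal.subset_span (by left; rfl))
  have hX1C : (X 1 : MvPolynomial (Fin 2) k) ^ q ∈ C :=
    hJC _ (Ideal.subset_span (by right; rfl))
  have hX0I₁ : (X 0 : MvPolynomial (Fin 2) k) ^ p ∈ I₁ := Ideal.mul_le_left (J := I₂) (hprod ▸ hX0C)
  have hX0I₂ : (X 0 : MvPolynomial (Fin 2) k) ^ p ∈ I₂ := Ideal.mul_le_right (I := I₁) (hprod ▸ hX0C)
  have hX1I₁ : (X 1 : MvPolynomial (Fin 2) k) ^ q ∈ I₁ := Ideal.mul_le_left (J := I₂) (hprod ▸ hX1C)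
  have hX1I₂ : (X 1 : MvPolynomial (Fin 2) k) ^ q ∈ I₂ := Ideal.mul_le_right (I := I₁) (hprod ▸ hX1C)
  have hK₁ := ideal_le_K h1top hX0I₁ hX1I₁
  have hK₂ := ideal_le_K h2top hX0I₂ hX1I₂
  have hX0ne : ((X 0 : MvPolynomial (Fin 2) k) ^ p) ≠ 0 :=
    pow_ne_zero _ (MvPolynomial.X_ne_zero 0)
  -- minimal weighted degrees for the three weights
  obtain ⟨a₁, ⟨g₁, hg₁I, hg₁0, hg₁D⟩, hlb₁⟩ := ideal_min (q, p) hX0I₁ hX0ne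
  obtain ⟨a₂, ⟨g₂, hg₂I, hg₂0, hg₂D⟩, hlb₂⟩ := ideal_min (q, p) hX0I₂ hX0ne
  obtain ⟨b₁, ⟨w₁, hw₁I, hw₁0, hw₁D⟩, hmb₁⟩ := ideal_min (q + 1, p) hX0I₁ hX0ne
  obtain ⟨b₂, ⟨w₂, hw₂I, hw₂0, hw₂D⟩, hmb₂⟩ := ideal_min (q + 1, p) hX0I₂ hX0ne
  obtain ⟨c₁, ⟨v₁, hv₁I, hv₁0, hv₁D⟩, hmc₁⟩ := ideal_min (q, p + 1) hX0I₁ hX0ne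
  obtain ⟨c₂, ⟨v₂, hv₂I, hv₂0, hv₂D⟩, hmc₂⟩ := ideal_min (q, p + 1) hX0I₂ hX0ne
  -- products of the two ideals land in the sum filtration
  have hprodV : ∀ (ω : ℕ × ℕ) (α β : ℕ), I₁ ≤ Vid ω α → I₂ ≤ Vid ω β →
      C ≤ Vid ω (α + β) := by
    intro ω α β hα hβ
    rw [hprod]
    exact Ideal.mul_le.2 fun r hr s hs => mem_Vid_mul (hα hr) (hβ hs)
  -- upper bound: a₁ + a₂ ≤ q*p, via x^p ∈ C
  have hsum_le : a₁ + a₂ ≤ q * p := by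
    have h := hprodV (q, p) a₁ a₂ hlb₁ hlb₂ hX0C (Finsupp.single 0 p)
      (by rw [MvPolynomial.support_X_pow]; exact Finset.mem_singleton_self _)
    rwa [sw_single0] at h
  have hbsum_le : b₁ + b₂ ≤ q * p := by
    have h := hprodV (q + 1, p) b₁ b₂ hmb₁ hmb₂ hX1C (Finsupp.single 1 q)
      (by rw [MvPolynomial.support_X_pow]; exact Finset.mem_singleton_self _)
    rw [sw_single1] at h
    calc b₁ + b₂ ≤ p * q := h
    _ = q * p := Nat.mul_comm p q
  have hcsum_le : c₁ + c₂ ≤ q * p := by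
    have h := hprodV (q, p + 1) c₁ c₂ hmc₁ hmc₂ hX0C (Finsupp.single 0 p)
      (by rw [MvPolynomial.support_X_pow]; exact Finset.mem_singleton_self _)
    rwa [sw_single0] at h
  -- lower bound: q*p ≤ a₁ + a₂, via g₁ g₂ ∈ C and the integral-closure valuation bound
  have hsum_ge : q * p ≤ a₁ + a₂ := by
    have hgg : g₁ * g₂ ∈ C := hprod ▸ Ideal.mul_mem_mul hg₁I hg₂I
    have hV : g₁ * g₂ ∈ Vid (q, p) (q * p) := integral_mem_Vid ((hC _).1 hgg)
    have hgg0 : g₁ * g₂ ≠ 0 := mul_ne_zero hg₁0 hg₂0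
    obtain ⟨u, hu, hswu⟩ := Dw_attain (q, p) hgg0
    have hD : Dw (q, p) (g₁ * g₂) = ((a₁ + a₂ : ℕ) : ℕ∞) := by
      rw [Dw_def, map_mul, Polynomial.trailingDegree_mul, ← Dw_def, ← Dw_def, hg₁D, hg₂D]
      push_cast
      ring
    rw [hD] at hswu
    have h3 : sw (q, p) u = a₁ + a₂ := by exact_mod_cast hswu
    have h4 := hV u hu
    omega
  -- comparison: aᵢ ≤ bᵢ and aᵢ ≤ cᵢ
  have swrel0 : ∀ u : Fin 2 →₀ ℕ, sw (q + 1, p) u = sw (q, p) u + u 0 := by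
    intro u; simp only [sw]; ring
  have swrel1 : ∀ u : Fin 2 →₀ ℕ, sw (q, p + 1) u = sw (q, p) u + u 1 := by
    intro u; simp only [sw]; ring
  have hab₁ : a₁ ≤ b₁ := by
    obtain ⟨u, hu, hswu⟩ := Dw_attain (q + 1, p) hw₁0
    rw [hw₁D] at hswu
    have h1 : sw (q + 1, p) u = b₁ := by exact_mod_cast hswu
    have h2 := hlb₁ hw₁I u hu
    have h3 := swrel0 u
    omega
  have hab₂ : a₂ ≤ b₂ := by
    obtain ⟨u, hu, hswu⟩ := Dw_attain (q + 1, p) hw₂0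
    rw [hw₂D] at hswu
    have h1 : sw (q + 1, p) u = b₂ := by exact_mod_cast hswu
    have h2 := hlb₂ hw₂I u hu
    have h3 := swrel0 u
    omega
  have hac₁ : a₁ ≤ c₁ := by
    obtain ⟨u, hu, hswu⟩ := Dw_attain (q, p + 1) hv₁0
    rw [hv₁D] at hswu
    have h1 : sw (q, p + 1) u = c₁ := by exact_mod_cast hswu
    have h2 := hlb₁ hv₁I u hu
    have h3 := swrel1 u
    omega
  have hac₂ : a₂ ≤ c₂ := by
    obtain ⟨u, hu, hswu⟩ := Dw_attain (q, p + 1) hv₂0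
    rw [hv₂D] at hswu
    have h1 : sw (q, p + 1) u = c₂ := by exact_mod_cast hswu
    have h2 := hlb₂ hv₂I u hu
    have h3 := swrel1 u
    omega
  have hba₁ : b₁ = a₁ := by omega
  have hca₁ : c₁ = a₁ := by omega
  -- divisibility: p ∣ a₁
  have hpdvd : p ∣ a₁ := by
    obtain ⟨u, hu, hswu⟩ := Dw_attain (q + 1, p) hw₁0
    rw [hw₁D] at hswu
    have h1 : sw (q + 1, p) u = b₁ := by exact_mod_cast hswu
    have h2 := hlb₁ hw₁I u hu
    have h3 := swrel0 u
    have hu0 : u 0 = 0 := by omega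
    have h4 : sw (q, p) u = a₁ := by omega
    have h5 : sw (q, p) u = q * u 0 + p * u 1 := rfl
    refine ⟨u 1, ?_⟩
    rw [← h4, h5, hu0]
    ring
  -- divisibility: q ∣ a₁
  have hqdvd : q ∣ a₁ := by
    obtain ⟨u, hu, hswu⟩ := Dw_attain (q, p + 1) hv₁0
    rw [hv₁D] at hswu
    have h1 : sw (q, p + 1) u = c₁ := by exact_mod_cast hswu
    have h2 := hlb₁ hv₁I u hu
    have h3 := swrel1 u
    have hu1 : u 1 = 0 := by omega
    have h4 : sw (q, p) u = a₁ := by omega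
    have h5 : sw (q, p) u = q * u 0 + p * u 1 := rfl
    refine ⟨u 0, ?_⟩
    rw [← h4, h5, hu1]
    ring
  -- positivity of a₁ and a₂
  have hpos : ∀ (I : Ideal (MvPolynomial (Fin 2) k)) (a : ℕ) (g : MvPolynomial (Fin 2) k),
      I ≤ Ideal.span (MvPolynomial.X '' (Set.univ : Set (Fin 2))) →
      g ∈ I → g ≠ 0 → Dw (q, p) g = (a : ℕ∞) → 1 ≤ a := by
    intro I a g hKI hgI hg0 hgD
    obtain ⟨u, hu, hswu⟩ := Dw_attain (q, p) hg0
    rw [hgD] at hswu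
    have h1 : sw (q, p) u = a := by exact_mod_cast hswu
    have h2 := (MvPolynomial.mem_ideal_span_X_image).1 (hKI hgI) u hu
    obtain ⟨i, -, hi⟩ := h2
    have h5 : sw (q, p) u = q * u 0 + p * u 1 := rfl
    fin_cases i
    · have h6 : 1 ≤ u 0 := Nat.pos_of_ne_zero hi
      have h7 : q * 1 ≤ q * u 0 := Nat.mul_le_mul_left q h6
      omega
    · have h6 : 1 ≤ u 1 := Nat.pos_of_ne_zero hi
      have h7 : p * 1 ≤ p * u 1 := Nat.mul_le_mul_left p h6
      omega
  have ha₁pos : 1 ≤ a₁ := hpos I₁ a₁ g₁ hK₁ hg₁I hg₁0 hg₁D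
  have ha₂pos : 1 ≤ a₂ := hpos I₂ a₂ g₂ hK₂ hg₂I hg₂0 hg₂D
  -- endgame
  have hcop : Nat.Coprime p q := hpq
  have hdvd : p * q ∣ a₁ := hcop.mul_dvd_of_dvd_of_dvd hpdvd hqdvd
  have hle : p * q ≤ a₁ := Nat.le_of_dvd (by omega) hdvd
  have hcomm : p * q = q * p := Nat.mul_comm p q
  omega
end
end

section
/- Let I = J₁ ⋯ J_r in R = k[x,y], where J_i is the integral closure of (x^{c_i}, y^{d_i}) for positive integers c_i, d_i, i = 1,...,r, and assume d₁/c₁ ≥ d₂/c₂ ≥ ⋯ ≥ d_r/c_r. Then s_I = Σ_{i=1}^r c_i d_i/2 + Σ_{1 ≤ i < j ≤ r} c_i d_j. -/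
open MvPolynomial Pointwise

noncomputable section

namespace AreaProof

variable {k : Type*} [Field k]

def phi (w : Fin 2 → ℕ) : MvPolynomial (Fin 2) k →ₐ[k] Polynomial (MvPolynomial (Fin 2) k) :=
  aeval fun i => Polynomial.C (X i) * Polynomial.X ^ w i

lemma eval_one_phi (w : Fin 2 → ℕ) (f : MvPolynomial (Fin 2) k) :
    Polynomial.eval 1 (phi w f) = f := by
  induction f using MvPolynomial.induction_on with
  | C a => simp [phi]
  | add f g hf hg => simp [map_add, hf, hg]
  | mul_X f i hf =>
      simp only [phi] at hf ⊢
      simp [map_mul, hf]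

lemma phi_ne_zero (w : Fin 2 → ℕ) {f : MvPolynomial (Fin 2) k} (hf : f ≠ 0) :
    phi w f ≠ 0 := fun h => hf (by rw [← eval_one_phi w f, h, Polynomial.eval_zero])

def Aw (w : Fin 2 → ℕ) (m : ℕ) : Ideal (MvPolynomial (Fin 2) k) :=
  Ideal.comap (phi w) (Ideal.span {Polynomial.X ^ m})

lemma mem_Aw {w : Fin 2 → ℕ} {m : ℕ} {f : MvPolynomial (Fin 2) k} :
    f ∈ Aw w m ↔ Polynomial.X ^ m ∣ phi w f := by
  simp [Aw, Ideal.mem_comap, Ideal.mem_span_singleton]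

lemma Aw_mul_le {w : Fin 2 → ℕ} {a b : ℕ} :
    Aw (k := k) w a * Aw w b ≤ Aw w (a + b) := by
  rw [Ideal.mul_le]
  intro f hf g hg
  rw [mem_Aw] at hf hg ⊢
  rw [map_mul, pow_add]
  exact mul_dvd_mul hf hg

lemma pow_le_Aw {w : Fin 2 → ℕ} {m : ℕ} {K : Ideal (MvPolynomial (Fin 2) k)}
    (hK : K ≤ Aw w m) : ∀ t : ℕ, K ^ t ≤ Aw w (t * m)
  | 0 => by
      intro f _
      rw [mem_Aw]
      simpa using one_dvd _
  | t + 1 => by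
      rw [pow_succ]
      calc K ^ t * K ≤ Aw w (t * m) * Aw w m := Ideal.mul_mono (pow_le_Aw hK t) hK
        _ ≤ Aw w (t * m + m) := Aw_mul_le
        _ = Aw w ((t + 1) * m) := by ring_nf

lemma span_le_Aw {w : Fin 2 → ℕ} {m c d : ℕ} (h1 : m ≤ w 0 * c) (h2 : m ≤ w 1 * d) :
    Ideal.span {(X 0 : MvPolynomial (Fin 2) k) ^ c, X 1 ^ d} ≤ Aw w m := by
  rw [Ideal.span_le]
  rintro f (rfl | rfl)
  · rw [SetLike.mem_coe, mem_Aw, map_pow]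
    show Polynomial.X ^ m ∣ (phi w (X 0)) ^ c
    rw [phi, aeval_X, mul_pow, ← pow_mul]
    exact Dvd.dvd.mul_left (pow_dvd_pow _ h1) _
  · rw [SetLike.mem_coe, mem_Aw, map_pow]
    show Polynomial.X ^ m ∣ (phi w (X 1)) ^ d
    rw [phi, aeval_X, mul_pow, ← pow_mul]
    exact Dvd.dvd.mul_left (pow_dvd_pow _ h2) _

lemma natTrailingDegree_pow {R : Type*} [CommRing R] [IsDomain R] {p : Polynomial R}
    (hp : p ≠ 0) (n : ℕ) : (p ^ n).natTrailingDegree = n * p.natTrailingDegree := by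
  induction n with
  | zero => simp
  | succ n ih =>
      rw [pow_succ, Polynomial.natTrailingDegree_mul (pow_ne_zero _ hp) hp, ih]
      ring

lemma X_pow_trailing_dvd {R : Type*} [CommRing R] (p : Polynomial R) :
    Polynomial.X ^ p.natTrailingDegree ∣ p :=
  Polynomial.X_pow_dvd_iff.mpr fun _ hd => Polynomial.coeff_eq_zero_of_lt_natTrailingDegree hd

lemma integral_mem_Aw {w : Fin 2 → ℕ} {m : ℕ} {K : Ideal (MvPolynomial (Fin 2) k)}
    (hK : K ≤ Aw w m) {f : MvPolynomial (Fin 2) k}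
    (hf : IsIntegralOverIdeal K f) : f ∈ Aw w m := by
  rcases hf with ⟨n, hn, cc, hc, heq⟩
  by_cases hf0 : f = 0
  · rw [hf0, mem_Aw, map_zero]; exact dvd_zero _
  rw [mem_Aw]
  set p := phi w f with hpdef
  have hp : p ≠ 0 := phi_ne_zero w hf0
  set T := p.natTrailingDegree with hT
  by_contra hnd
  have hTm : T < m := by
    by_contra h
    push_neg at h
    exact hnd ((pow_dvd_pow _ h).trans (X_pow_trailing_dvd p))
  have heq2 : p ^ n = - ∑ j ∈ Finset.Icc 1 n, phi w (cc j) * p ^ (n - j) := by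
    have h := congrArg (phi w) heq
    simp only [map_add, map_pow, map_sum, map_mul, map_zero] at h
    exact eq_neg_of_add_eq_zero_left h
  have hdvd : Polynomial.X ^ (n * T + 1) ∣ p ^ n := by
    rw [heq2]
    refine (dvd_neg (α := Polynomial (MvPolynomial (Fin 2) k))).mpr ?_
    apply Finset.dvd_sum
    intro j hj
    obtain ⟨hj1, hj2⟩ := Finset.mem_Icc.mp hj
    have h1 : Polynomial.X ^ (j * m) ∣ phi w (cc j) :=
      mem_Aw.mp (pow_le_Aw hK j (hc j hj))
    have h2 : Polynomial.X ^ ((n - j) * T) ∣ p ^ (n - j) := by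
      rw [mul_comm, pow_mul]
      exact pow_dvd_pow_of_dvd (X_pow_trailing_dvd p) _
    have harith : n * T + 1 ≤ j * m + (n - j) * T := by
      have h3 : j * T + j ≤ j * m := by
        calc j * T + j = j * (T + 1) := by ring
          _ ≤ j * m := Nat.mul_le_mul (le_refl j) hTm
      have h4 : n * T = j * T + (n - j) * T := by
        rw [← Nat.add_mul, Nat.add_sub_cancel' hj2]
      omega
    exact (pow_dvd_pow _ harith).trans (by rw [pow_add]; exact mul_dvd_mul h1 h2)
  have hcon : (p ^ n).coeff (n * T) ≠ 0 := by
    have h5 := Polynomial.trailingCoeff_nonzero_iff_nonzero.mpr (pow_ne_zero n hp)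
    rwa [Polynomial.trailingCoeff, natTrailingDegree_pow hp n] at h5
  exact hcon (Polynomial.X_pow_dvd_iff.mp hdvd _ (Nat.lt_succ_self _))


section Geom

variable {r : ℕ} (c d : Fin r → ℕ)

def SXn (m : ℕ) : ℕ := ∑ j ∈ Finset.univ.filter (fun j : Fin r => (j : ℕ) < m), c j

def SYn (m : ℕ) : ℕ := ∑ j ∈ Finset.univ.filter (fun j : Fin r => m ≤ (j : ℕ)), d j

def Lnat (i : Fin r) : ℕ := ∑ t : Fin r, min (d i * c t) (c i * d t)

lemma SXn_zero : SXn c 0 = 0 := by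
  simp [SXn]

lemma SYn_last : SYn d r = 0 := by
  rw [SYn, Finset.sum_eq_zero]
  intro t ht
  simp only [Finset.mem_filter] at ht
  exact absurd ht.2 (Nat.not_le.mpr t.isLt)

lemma SXn_succ (i : Fin r) : SXn c ((i : ℕ) + 1) = SXn c i + c i := by
  have h : Finset.univ.filter (fun t : Fin r => (t : ℕ) < (i : ℕ) + 1)
      = insert i (Finset.univ.filter (fun t : Fin r => (t : ℕ) < (i : ℕ))) := by
    ext t
    simp only [Finset.mem_filter, Finset.mem_insert, Finset.mem_univ, true_and, Fin.ext_iff]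
    omega
  rw [SXn, SXn, h, Finset.sum_insert (by simp)]
  ring

lemma SYn_succ (i : Fin r) : SYn d (i : ℕ) = d i + SYn d ((i : ℕ) + 1) := by
  have h : Finset.univ.filter (fun t : Fin r => (i : ℕ) ≤ (t : ℕ))
      = insert i (Finset.univ.filter (fun t : Fin r => (i : ℕ) + 1 ≤ (t : ℕ))) := by
    ext t
    simp only [Finset.mem_filter, Finset.mem_insert, Finset.mem_univ, true_and, Fin.ext_iff]
    omega
  rw [SYn, SYn, h, Finset.sum_insert (by simp)]

lemma vertex_le (j : Fin r) (m : ℕ) : Lnat c d j ≤ d j * SXn c m + c j * SYn d m := by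
  rw [Lnat, SXn, SYn, Finset.mul_sum, Finset.mul_sum,
    ← Finset.sum_filter_add_sum_filter_not Finset.univ (fun t : Fin r => (t : ℕ) < m)]
  simp only [not_lt]
  exact add_le_add (Finset.sum_le_sum fun t _ => min_le_left _ _)
    (Finset.sum_le_sum fun t _ => min_le_right _ _)

lemma Lnat_eq (hsort : ∀ i j : Fin r, i ≤ j → d j * c i ≤ d i * c j)
    (i : Fin r) (m : ℕ) (hm : m = (i : ℕ) ∨ m = (i : ℕ) + 1) :
    Lnat c d i = d i * SXn c m + c i * SYn d m := by
  rw [Lnat, SXn, SYn, Finset.mul_sum, Finset.mul_sum,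
    ← Finset.sum_filter_add_sum_filter_not Finset.univ (fun t : Fin r => (t : ℕ) < m)]
  simp only [not_lt]
  congr 1
  · refine Finset.sum_congr rfl fun t ht => ?_
    simp only [Finset.mem_filter, Finset.mem_univ, true_and] at ht
    have hti : t ≤ i := by rw [Fin.le_def]; omega
    have := hsort t i hti
    rw [min_eq_left (by rw [mul_comm (c i) (d t)]; linarith)]
  · refine Finset.sum_congr rfl fun t ht => ?_
    simp only [Finset.mem_filter, Finset.mem_univ, true_and] at ht
    have hit : i ≤ t := by rw [Fin.le_def]; omega
    have := hsort i t hit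
    rw [min_eq_right (by rw [mul_comm (c i) (d t)]; linarith)]

end Geom

variable {k : Type*} [Field k]

lemma mem_isIntegral {A : Type*} [CommRing A] {K : Ideal A} {f : A} (h : f ∈ K) :
    IsIntegralOverIdeal K f := by
  refine ⟨1, one_pos, fun _ => -f, ?_, ?_⟩
  · intro j hj
    simp only [Finset.mem_Icc] at hj
    have : j = 1 := by omega
    subst this
    rw [pow_one]
    exact K.neg_mem h
  · simp

lemma prod_le_Aw {ι : Type*} [DecidableEq ι] (w : Fin 2 → ℕ) (s : Finset ι)
    (J : ι → Ideal (MvPolynomial (Fin 2) k)) (m : ι → ℕ)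
    (h : ∀ j ∈ s, J j ≤ Aw w (m j)) :
    ∏ j ∈ s, J j ≤ Aw w (∑ j ∈ s, m j) := by
  induction s using Finset.induction with
  | empty =>
      intro f _
      rw [mem_Aw]
      simp
  | insert a s' hnot ih =>
      rw [Finset.prod_insert hnot, Finset.sum_insert hnot]
      calc J a * ∏ j ∈ s', J j ≤ Aw w (m a) * Aw w (∑ j ∈ s', m j) :=
            Ideal.mul_mono (h a (Finset.mem_insert_self a s'))
              (ih fun j hj => h j (Finset.mem_insert_of_mem hj))
        _ ≤ Aw w (m a + ∑ j ∈ s', m j) := Aw_mul_le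

lemma monomial_eq_prodXY (s : Fin 2 →₀ ℕ) :
    monomial s (1 : k) = X 0 ^ s 0 * X 1 ^ s 1 := by
  have hs : Finsupp.single (0 : Fin 2) (s 0) + Finsupp.single 1 (s 1) = s := by
    ext t
    fin_cases t <;> simp [Finsupp.single_apply]
  rw [X_pow_eq_monomial, X_pow_eq_monomial, monomial_mul, mul_one, hs]

lemma monomial_weight_ge {w : Fin 2 → ℕ} {m : ℕ} {s : Fin 2 →₀ ℕ}
    (h : monomial s (1 : k) ∈ Aw w m) : m ≤ w 0 * s 0 + w 1 * s 1 := by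
  rw [mem_Aw, monomial_eq_prodXY] at h
  have hphi : phi (k := k) w (X 0 ^ s 0 * X 1 ^ s 1)
      = Polynomial.C (X 0 ^ s 0 * X 1 ^ s 1) * Polynomial.X ^ (w 0 * s 0 + w 1 * s 1) := by
    rw [map_mul, map_pow, map_pow]
    show (phi w (X 0)) ^ s 0 * (phi w (X 1)) ^ s 1 = _
    rw [phi, aeval_X, aeval_X, mul_pow, mul_pow, ← pow_mul, ← pow_mul,
      ← Polynomial.C_pow, ← Polynomial.C_pow, Polynomial.C_mul, pow_add]
    ring
  rw [hphi] at h
  by_contra hcon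
  push_neg at hcon
  have h0 := Polynomial.X_pow_dvd_iff.mp h _ hcon
  rw [Polynomial.coeff_C_mul, Polynomial.coeff_X_pow, if_pos rfl, mul_one] at h0
  exact (mul_ne_zero (pow_ne_zero _ (X_ne_zero 0)) (pow_ne_zero _ (X_ne_zero 1))) h0

lemma prodXY_mem {r : ℕ} (c d : Fin r → ℕ) (J : Fin r → Ideal (MvPolynomial (Fin 2) k))
    (hX : ∀ j, (X 0 : MvPolynomial (Fin 2) k) ^ c j ∈ J j)
    (hY : ∀ j, (X 1 : MvPolynomial (Fin 2) k) ^ d j ∈ J j) (m a b : ℕ) :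
    (X 0 : MvPolynomial (Fin 2) k) ^ (a + SXn c m) * X 1 ^ (b + SYn d m) ∈ ∏ j, J j := by
  have hp : (∏ j : Fin r, (if (j : ℕ) < m then (X 0 : MvPolynomial (Fin 2) k) ^ c j
      else X 1 ^ d j)) ∈ ∏ j, J j := by
    refine Ideal.prod_mem_prod fun j _ => ?_
    by_cases h : (j : ℕ) < m
    · rw [if_pos h]; exact hX j
    · rw [if_neg h]; exact hY j
  have he : (∏ j : Fin r, (if (j : ℕ) < m then (X 0 : MvPolynomial (Fin 2) k) ^ c j
      else X 1 ^ d j)) = X 0 ^ SXn c m * X 1 ^ SYn d m := by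
    rw [← Finset.prod_filter_mul_prod_filter_not Finset.univ (fun j : Fin r => (j : ℕ) < m)]
    simp only [not_lt]
    congr 1
    · rw [Finset.prod_congr rfl (fun j hj => if_pos (Finset.mem_filter.mp hj).2), SXn,
        Finset.prod_pow_eq_pow_sum]
    · rw [Finset.prod_congr rfl (fun j hj => if_neg (by
        have := (Finset.mem_filter.mp hj).2; omega)), SYn, Finset.prod_pow_eq_pow_sum]
  have hcalc : (X 0 : MvPolynomial (Fin 2) k) ^ (a + SXn c m) * X 1 ^ (b + SYn d m)
      = X 0 ^ a * X 1 ^ b * (X 0 ^ SXn c m * X 1 ^ SYn d m) := by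
    rw [pow_add, pow_add]; ring
  rw [hcalc, ← he]
  exact Ideal.mul_mem_left _ _ hp

lemma quad_mem {s : Set (ℝ × ℝ)} {A1 A2 B1 B2 : ℝ × ℝ} (hA1 : A1 ∈ s) (hA2 : A2 ∈ s)
    (hB1 : B1 ∈ s) (hB2 : B2 ∈ s) {α t : ℝ} (hα0 : 0 ≤ α) (hα1 : α ≤ 1)
    (ht0 : 0 ≤ t) (ht1 : t ≤ 1) :
    (1 - α) • ((1 - t) • A1 + t • A2) + α • ((1 - t) • B1 + t • B2) ∈ convexHull ℝ s := by
  have hq1 : (1 - t) • A1 + t • A2 ∈ convexHull ℝ s :=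
    (convex_convexHull ℝ s) (subset_convexHull ℝ s hA1) (subset_convexHull ℝ s hA2)
      (by linarith) ht0 (by ring)
  have hq2 : (1 - t) • B1 + t • B2 ∈ convexHull ℝ s :=
    (convex_convexHull ℝ s) (subset_convexHull ℝ s hB1) (subset_convexHull ℝ s hB2)
      (by linarith) ht0 (by ring)
  exact (convex_convexHull ℝ s) hq1 hq2 (by linarith) hα0 (by ring)

end AreaProof


set_option maxHeartbeats 2000000 in
open AreaProof MeasureTheory in
private lemma area_formula_aux {k : Type*} [Field k] (r : ℕ) (hr : 0 < r)
    (c d : Fin r → ℕ) (hc : ∀ i, 0 < c i) (hd : ∀ i, 0 < d i)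
    (hsort : ∀ i j : Fin r, i ≤ j → d j * c i ≤ d i * c j)
    (J : Fin r → Ideal (MvPolynomial (Fin 2) k))
    (hJ : ∀ i, IsIntegralClosureOfIdeal (J i)
      (Ideal.span {(X 0 : MvPolynomial (Fin 2) k) ^ c i, X 1 ^ d i}))
    (I : Ideal (MvPolynomial (Fin 2) k)) (hI : I = ∏ i, J i) :
    sArea I = ∑ i, (c i : ℝ) * (d i) / 2
      + ∑ i : Fin r, ∑ j : Fin r, (if i < j then (c i : ℝ) * (d j) else 0) := by
  classical
  haveI : Nonempty (Fin r) := ⟨⟨0, hr⟩⟩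
  have hcR : ∀ i, (0:ℝ) < c i := fun i => by exact_mod_cast hc i
  have hdR : ∀ i, (0:ℝ) < d i := fun i => by exact_mod_cast hd i
  set gen : Set (ℝ × ℝ) := {p : ℝ × ℝ |
    ∃ s : Fin 2 →₀ ℕ, (MvPolynomial.monomial s (1 : k)) ∈ I ∧ p = ((s 0 : ℝ), (s 1 : ℝ))}
    with hgen_def
  have hnewt : newton I = convexHull ℝ gen := rfl
  have hsx_zero : ((SXn c 0 : ℕ) : ℝ) = 0 := by rw [SXn_zero]; norm_num
  have hsy_last : ((SYn d r : ℕ) : ℝ) = 0 := by rw [SYn_last]; norm_num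
  have hsx_succ : ∀ i : Fin r, ((SXn c ((i:ℕ)+1) : ℕ) : ℝ) = (SXn c (i:ℕ) : ℝ) + (c i : ℝ) := by
    intro i; rw [SXn_succ c i]; push_cast; ring
  have hsy_succ : ∀ i : Fin r, ((SYn d (i:ℕ) : ℕ) : ℝ) = (d i : ℝ) + (SYn d ((i:ℕ)+1) : ℝ) := by
    intro i; rw [SYn_succ d i]; push_cast; ring
  have hsx_nn : ∀ m, (0:ℝ) ≤ (SXn c m : ℝ) := fun m => Nat.cast_nonneg _
  have hsy_nn : ∀ m, (0:ℝ) ≤ (SYn d m : ℝ) := fun m => Nat.cast_nonneg _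
  have hvert : ∀ (j : Fin r) (m : ℕ),
      ((Lnat c d j : ℕ) : ℝ) ≤ (d j : ℝ) * (SXn c m : ℝ) + (c j : ℝ) * (SYn d m : ℝ) := by
    intro j m
    exact_mod_cast vertex_le c d j m
  have hLi : ∀ i : Fin r, ((Lnat c d i : ℕ) : ℝ)
      = (d i : ℝ) * (SXn c (i:ℕ) : ℝ) + (c i : ℝ) * (SYn d (i:ℕ) : ℝ) := by
    intro i
    exact_mod_cast Lnat_eq c d hsort i (i:ℕ) (Or.inl rfl)
  have hLi' : ∀ i : Fin r, ((Lnat c d i : ℕ) : ℝ)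
      = (d i : ℝ) * (SXn c ((i:ℕ)+1) : ℝ) + (c i : ℝ) * (SYn d ((i:ℕ)+1) : ℝ) := by
    intro i
    exact_mod_cast Lnat_eq c d hsort i ((i:ℕ)+1) (Or.inr rfl)
  -- corner generators
  have hXJ : ∀ j, (X 0 : MvPolynomial (Fin 2) k) ^ c j ∈ J j := fun j =>
    (hJ j _).mpr (mem_isIntegral (Ideal.subset_span (Set.mem_insert _ _)))
  have hYJ : ∀ j, (X 1 : MvPolynomial (Fin 2) k) ^ d j ∈ J j := fun j =>
    (hJ j _).mpr (mem_isIntegral (Ideal.subset_span (Set.mem_insert_of_mem _ rfl)))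
  have hgen : ∀ m a b : ℕ,
      (((a + SXn c m : ℕ) : ℝ), ((b + SYn d m : ℕ) : ℝ)) ∈ gen := by
    intro m a b
    have h0 : ((Finsupp.single (0 : Fin 2) (a + SXn c m)
        + Finsupp.single (1 : Fin 2) (b + SYn d m) : Fin 2 →₀ ℕ)) 0 = a + SXn c m := by
      simp [Finsupp.single_apply]
    have h1 : ((Finsupp.single (0 : Fin 2) (a + SXn c m)
        + Finsupp.single (1 : Fin 2) (b + SYn d m) : Fin 2 →₀ ℕ)) 1 = b + SYn d m := by
      simp [Finsupp.single_apply]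
    refine ⟨Finsupp.single (0 : Fin 2) (a + SXn c m) + Finsupp.single (1 : Fin 2) (b + SYn d m),
      ?_, ?_⟩
    · rw [monomial_eq_prodXY, h0, h1, hI]
      exact prodXY_mem c d J hXJ hYJ m a b
    · rw [h0, h1]
  -- upper bound on exponents of monomials in I
  have hub : ∀ s : Fin 2 →₀ ℕ, monomial s (1:k) ∈ I → ∀ i : Fin r,
      ((Lnat c d i : ℕ) : ℝ) ≤ (d i : ℝ) * s 0 + (c i : ℝ) * s 1 := by
    intro s hs i
    set w : Fin 2 → ℕ := ![d i, c i] with hw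
    have hw0 : w 0 = d i := rfl
    have hw1 : w 1 = c i := rfl
    have h1 : I ≤ Aw w (∑ j : Fin r, min (w 0 * c j) (w 1 * d j)) := by
      rw [hI]
      refine prod_le_Aw w Finset.univ J (fun j => min (w 0 * c j) (w 1 * d j)) ?_
      intro j _ f hf
      exact integral_mem_Aw (span_le_Aw (min_le_left _ _) (min_le_right _ _)) ((hJ j f).mp hf)
    have h2 := monomial_weight_ge (h1 hs)
    simp only [hw0, hw1] at h2
    have hL : Lnat c d i = ∑ j : Fin r, min (d i * c j) (c i * d j) := rfl
    have h3 : Lnat c d i ≤ d i * s 0 + c i * s 1 := by rw [hL]; exact h2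
    exact_mod_cast h3
  -- the polyhedron N
  set N : Set (ℝ × ℝ) := {p : ℝ × ℝ | 0 ≤ p.1 ∧ 0 ≤ p.2 ∧
    ∀ i : Fin r, ((Lnat c d i : ℕ) : ℝ) ≤ (d i : ℝ) * p.1 + (c i : ℝ) * p.2} with hNdef
  have hNconv : Convex ℝ N := by
    intro p hp q hq a b ha hb hab
    obtain ⟨hp1, hp2, hp3⟩ := hp
    obtain ⟨hq1, hq2, hq3⟩ := hq
    refine ⟨?_, ?_, ?_⟩
    · simp only [Prod.fst_add, Prod.smul_fst, smul_eq_mul]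
      have := mul_nonneg ha hp1; have := mul_nonneg hb hq1; linarith
    · simp only [Prod.snd_add, Prod.smul_snd, smul_eq_mul]
      have := mul_nonneg ha hp2; have := mul_nonneg hb hq2; linarith
    · intro i
      simp only [Prod.fst_add, Prod.snd_add, Prod.smul_fst, Prod.smul_snd, smul_eq_mul]
      have h5 := mul_le_mul_of_nonneg_left (hp3 i) ha
      have h6 := mul_le_mul_of_nonneg_left (hq3 i) hb
      have h7 : a * ((Lnat c d i : ℕ) : ℝ) + b * ((Lnat c d i : ℕ) : ℝ)
          = ((Lnat c d i : ℕ) : ℝ) := by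
        calc a * ((Lnat c d i : ℕ) : ℝ) + b * ((Lnat c d i : ℕ) : ℝ)
            = (a + b) * ((Lnat c d i : ℕ) : ℝ) := by ring
          _ = ((Lnat c d i : ℕ) : ℝ) := by rw [hab, one_mul]
      nlinarith [h5, h6]
  have hN1 : newton I ⊆ N := by
    rw [hnewt]
    refine convexHull_min ?_ hNconv
    rintro p ⟨s, hs, rfl⟩
    exact ⟨by positivity, by positivity, fun i => hub s hs i⟩
  -- existence of a strip
  have hstripEx : ∀ u : ℝ, 0 ≤ u → u ≤ (SXn c r : ℝ) →
      ∃ i : Fin r, ((SXn c (i:ℕ) : ℕ) : ℝ) ≤ u ∧ u ≤ ((SXn c ((i:ℕ)+1) : ℕ) : ℝ) := by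
    intro u hu hur
    set T := Finset.univ.filter (fun j : Fin r => ((SXn c (j:ℕ) : ℕ) : ℝ) ≤ u) with hT
    have hT0 : (⟨0, hr⟩ : Fin r) ∈ T := by
      simp only [hT, Finset.mem_filter, Finset.mem_univ, true_and]
      show ((SXn c ((⟨0, hr⟩ : Fin r) : ℕ) : ℕ) : ℝ) ≤ u
      rw [show ((⟨0, hr⟩ : Fin r) : ℕ) = 0 from rfl]
      rw [hsx_zero]
      exact hu
    have hTne : T.Nonempty := ⟨_, hT0⟩
    set i := T.max' hTne with hidef
    have hi1 : ((SXn c (i:ℕ) : ℕ) : ℝ) ≤ u := (Finset.mem_filter.mp (T.max'_mem hTne)).2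
    refine ⟨i, hi1, ?_⟩
    by_cases hlast : (i:ℕ) + 1 = r
    · rw [hlast]; exact hur
    · have hlt : (i:ℕ) + 1 < r := by omega
      set i' : Fin r := ⟨(i:ℕ)+1, hlt⟩ with hi'
      have hnotin : i' ∉ T := by
        intro hin
        have hle := T.le_max' i' hin
        rw [← hidef] at hle
        have h2 : ((i' : Fin r) : ℕ) ≤ (i:ℕ) := Fin.le_def.mp hle
        simp only [hi'] at h2
        omega
      have hgt : ¬ (((SXn c ((i' : Fin r):ℕ) : ℕ) : ℝ) ≤ u) := by
        intro hle
        exact hnotin (by simp only [hT, Finset.mem_filter, Finset.mem_univ, true_and]; exact hle)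
      push_neg at hgt
      have : ((i' : Fin r) : ℕ) = (i:ℕ)+1 := rfl
      rw [this] at hgt
      exact le_of_lt hgt
  -- lower containment N ⊆ newton I
  have hN2 : N ⊆ newton I := by
    rintro p ⟨hp1, hp2, hp3⟩
    rw [hnewt]
    by_cases hfar : ((SXn c r : ℕ) : ℝ) ≤ p.1
    · -- far region
      obtain ⟨P, hPpos, hP1⟩ : ∃ P : ℕ, (0:ℝ) < P ∧ p.1 ≤ (SXn c r : ℝ) + P := by
        refine ⟨⌈p.1⌉₊ + 1, by push_cast; positivity, ?_⟩
        have h1 := Nat.le_ceil p.1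
        have h2 := hsx_nn r
        push_cast
        linarith
      obtain ⟨Q, hQpos, hQ1⟩ : ∃ Q : ℕ, (0:ℝ) < Q ∧ p.2 ≤ (Q:ℝ) := by
        refine ⟨⌈p.2⌉₊ + 1, by push_cast; positivity, ?_⟩
        have := Nat.le_ceil p.2
        push_cast
        linarith
      obtain ⟨α, hαP, hα0, hα1⟩ : ∃ α : ℝ, α * P = p.1 - (SXn c r : ℝ) ∧ 0 ≤ α ∧ α ≤ 1 :=
        ⟨(p.1 - (SXn c r : ℝ)) / P, div_mul_cancel₀ _ (ne_of_gt hPpos),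
          div_nonneg (by linarith) hPpos.le, by rw [div_le_one hPpos]; linarith⟩
      obtain ⟨t, htQ, ht0, ht1⟩ : ∃ t : ℝ, t * Q = p.2 ∧ 0 ≤ t ∧ t ≤ 1 :=
        ⟨p.2 / Q, div_mul_cancel₀ _ (ne_of_gt hQpos),
          div_nonneg hp2 hQpos.le, by rw [div_le_one hQpos]; exact hQ1⟩
      have hmem := quad_mem (s := gen) (hgen r 0 0) (hgen r 0 Q) (hgen r P 0) (hgen r P Q)
        hα0 hα1 ht0 ht1
      have hpe : p = (1 - α) • ((1 - t) • (((0 + SXn c r : ℕ) : ℝ), ((0 + SYn d r : ℕ) : ℝ))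
            + t • (((0 + SXn c r : ℕ) : ℝ), ((Q + SYn d r : ℕ) : ℝ)))
          + α • ((1 - t) • (((P + SXn c r : ℕ) : ℝ), ((0 + SYn d r : ℕ) : ℝ))
            + t • (((P + SXn c r : ℕ) : ℝ), ((Q + SYn d r : ℕ) : ℝ))) := by
        rw [Prod.ext_iff]
        constructor
        · simp only [Prod.fst_add, Prod.smul_fst, smul_eq_mul]
          push_cast
          linear_combination - hαP
        · simp only [Prod.snd_add, Prod.smul_snd, smul_eq_mul]
          push_cast
          linear_combination - htQ - hsy_last
      rw [hpe]
      exact hmem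
    · -- strip region
      obtain ⟨i, hi1, hi2⟩ := hstripEx p.1 hp1 (le_of_lt (lt_of_not_ge hfar))
      obtain ⟨α, hαc, hα0, hα1⟩ : ∃ α : ℝ, α * c i = p.1 - (SXn c (i:ℕ) : ℝ) ∧ 0 ≤ α ∧ α ≤ 1 := by
        refine ⟨(p.1 - (SXn c (i:ℕ) : ℝ)) / c i, div_mul_cancel₀ _ (ne_of_gt (hcR i)),
          div_nonneg (by linarith) (hcR i).le, ?_⟩
        rw [div_le_one (hcR i)]
        have := hsx_succ i
        linarith
      obtain ⟨h0, hh0def, hh0⟩ :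
          ∃ h0 : ℝ, h0 = p.2 - ((SYn d (i:ℕ) : ℝ) - α * d i) ∧ 0 ≤ h0 := by
        refine ⟨_, rfl, ?_⟩
        have h3 := hp3 i
        rw [hLi i] at h3
        have hαcd : α * c i * d i = (p.1 - (SXn c (i:ℕ) : ℝ)) * d i := by rw [hαc]
        have hkey : 0 * c i ≤ (p.2 - ((SYn d (i:ℕ) : ℝ) - α * d i)) * c i := by
          nlinarith [h3, hαcd]
        exact le_of_mul_le_mul_right hkey (hcR i)
      obtain ⟨H, hHpos, hhH⟩ : ∃ H : ℕ, (0:ℝ) < H ∧ h0 ≤ H := by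
        refine ⟨⌈p.2⌉₊ + d i + 1, by push_cast; positivity, ?_⟩
        have hceil := Nat.le_ceil p.2
        have hsynn := hsy_nn (i:ℕ)
        have hαd : α * d i ≤ d i := by nlinarith [hdR i]
        rw [hh0def]
        push_cast
        linarith
      obtain ⟨t, htH, ht0, ht1⟩ : ∃ t : ℝ, t * H = h0 ∧ 0 ≤ t ∧ t ≤ 1 :=
        ⟨h0 / H, div_mul_cancel₀ _ (ne_of_gt hHpos),
          div_nonneg hh0 hHpos.le, by rw [div_le_one hHpos]; exact hhH⟩
      have hmem := quad_mem (s := gen) (hgen (i:ℕ) 0 0) (hgen (i:ℕ) 0 H)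
        (hgen ((i:ℕ)+1) 0 0) (hgen ((i:ℕ)+1) 0 H) hα0 hα1 ht0 ht1
      have hsx := hsx_succ i
      have hsy := hsy_succ i
      have hpe : p = (1 - α) • ((1 - t) • (((0 + SXn c (i:ℕ) : ℕ) : ℝ), ((0 + SYn d (i:ℕ) : ℕ) : ℝ))
            + t • (((0 + SXn c (i:ℕ) : ℕ) : ℝ), ((H + SYn d (i:ℕ) : ℕ) : ℝ)))
          + α • ((1 - t) • (((0 + SXn c ((i:ℕ)+1) : ℕ) : ℝ), ((0 + SYn d ((i:ℕ)+1) : ℕ) : ℝ))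
            + t • (((0 + SXn c ((i:ℕ)+1) : ℕ) : ℝ), ((H + SYn d ((i:ℕ)+1) : ℕ) : ℝ))) := by
        rw [Prod.ext_iff]
        constructor
        · simp only [Prod.fst_add, Prod.smul_fst, smul_eq_mul]
          push_cast
          linear_combination - hαc - α * hsx
        · simp only [Prod.snd_add, Prod.smul_snd, smul_eq_mul]
          push_cast
          linear_combination - htH - hh0def + α * hsy
      rw [hpe]
      exact hmem
  have hNewtonN : newton I = N := Set.Subset.antisymm hN1 hN2
  -- the envelope function
  set ell : Fin r → ℝ → ℝ :=
    fun i x => (((Lnat c d i : ℕ) : ℝ) - (d i : ℝ) * x) / (c i : ℝ) with helldef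
  set G : ℝ → ℝ := fun x => Finset.univ.sup' Finset.univ_nonempty (fun i => ell i x) with hGdef
  have hGcont : Continuous G := by
    refine Continuous.finset_sup'_apply Finset.univ_nonempty ?_
    intro i _
    exact (continuous_const.sub (continuous_const.mul continuous_id')).div_const _
  have hell_le : ∀ i : Fin r, ∀ u : ℝ, ((SXn c (i:ℕ) : ℕ) : ℝ) ≤ u →
      u ≤ ((SXn c ((i:ℕ)+1) : ℕ) : ℝ) → ∀ j : Fin r, ell j u ≤ ell i u := by
    intro i u hu1 hu2 j
    simp only [helldef]
    rw [div_le_div_iff₀ (hcR j) (hcR i)]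
    have hsx := hsx_succ i
    have e1 : (((Lnat c d j : ℕ) : ℝ) - d j * (SXn c (i:ℕ) : ℝ)) * c i
        ≤ (((Lnat c d i : ℕ) : ℝ) - d i * (SXn c (i:ℕ) : ℝ)) * c j := by
      have h' : ((Lnat c d j : ℕ) : ℝ) - d j * (SXn c (i:ℕ) : ℝ)
          ≤ c j * (SYn d (i:ℕ) : ℝ) := by linarith [hvert j (i:ℕ)]
      calc (((Lnat c d j : ℕ) : ℝ) - d j * (SXn c (i:ℕ) : ℝ)) * c i
          ≤ (c j * (SYn d (i:ℕ) : ℝ)) * c i := mul_le_mul_of_nonneg_right h' (hcR i).le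
        _ = (((Lnat c d i : ℕ) : ℝ) - d i * (SXn c (i:ℕ) : ℝ)) * c j := by rw [hLi i]; ring
    have e2 : (((Lnat c d j : ℕ) : ℝ) - d j * (SXn c ((i:ℕ)+1) : ℝ)) * c i
        ≤ (((Lnat c d i : ℕ) : ℝ) - d i * (SXn c ((i:ℕ)+1) : ℝ)) * c j := by
      have h' : ((Lnat c d j : ℕ) : ℝ) - d j * (SXn c ((i:ℕ)+1) : ℝ)
          ≤ c j * (SYn d ((i:ℕ)+1) : ℝ) := by linarith [hvert j ((i:ℕ)+1)]
      calc (((Lnat c d j : ℕ) : ℝ) - d j * (SXn c ((i:ℕ)+1) : ℝ)) * c i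
          ≤ (c j * (SYn d ((i:ℕ)+1) : ℝ)) * c i := mul_le_mul_of_nonneg_right h' (hcR i).le
        _ = (((Lnat c d i : ℕ) : ℝ) - d i * (SXn c ((i:ℕ)+1) : ℝ)) * c j := by rw [hLi' i]; ring
    have hxa : ((((Lnat c d j : ℕ) : ℝ) - d j * u) * c i) * c i
        = ((SXn c ((i:ℕ)+1) : ℝ) - u) * ((((Lnat c d j : ℕ) : ℝ) - d j * (SXn c (i:ℕ) : ℝ)) * c i)
          + (u - (SXn c (i:ℕ) : ℝ))
            * ((((Lnat c d j : ℕ) : ℝ) - d j * (SXn c ((i:ℕ)+1) : ℝ)) * c i) := by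
      rw [hsx]; ring
    have hxb : ((((Lnat c d i : ℕ) : ℝ) - d i * u) * c j) * c i
        = ((SXn c ((i:ℕ)+1) : ℝ) - u) * ((((Lnat c d i : ℕ) : ℝ) - d i * (SXn c (i:ℕ) : ℝ)) * c j)
          + (u - (SXn c (i:ℕ) : ℝ))
            * ((((Lnat c d i : ℕ) : ℝ) - d i * (SXn c ((i:ℕ)+1) : ℝ)) * c j) := by
      rw [hsx]; ring
    have hmain : ((((Lnat c d j : ℕ) : ℝ) - d j * u) * c i) * c i
        ≤ ((((Lnat c d i : ℕ) : ℝ) - d i * u) * c j) * c i := by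
      rw [hxa, hxb]
      exact add_le_add (mul_le_mul_of_nonneg_left e1 (by linarith))
        (mul_le_mul_of_nonneg_left e2 (by linarith))
    exact le_of_mul_le_mul_right hmain (hcR i)
  have hGstrip : ∀ i : Fin r, ∀ u : ℝ, ((SXn c (i:ℕ) : ℕ) : ℝ) ≤ u →
      u ≤ ((SXn c ((i:ℕ)+1) : ℕ) : ℝ) → G u = ell i u := by
    intro i u h1 h2
    refine le_antisymm (Finset.sup'_le _ _ fun j _ => hell_le i u h1 h2 j) ?_
    exact Finset.le_sup' (fun j => ell j u) (Finset.mem_univ i)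
  have hGnn : ∀ u : ℝ, 0 ≤ u → u ≤ ((SXn c r : ℕ) : ℝ) → 0 ≤ G u := by
    intro u hu hur
    obtain ⟨i, hi1, hi2⟩ := hstripEx u hu hur
    have h1 : 0 ≤ ell i u := by
      simp only [helldef]
      apply div_nonneg _ (hcR i).le
      have h2 := hLi' i
      nlinarith [hsy_nn ((i:ℕ)+1), mul_nonneg (hdR i).le (sub_nonneg.mpr hi2),
        mul_nonneg (hcR i).le (hsy_nn ((i:ℕ)+1))]
    calc (0:ℝ) ≤ ell i u := h1
      _ ≤ G u := Finset.le_sup' (fun j => ell j u) (Finset.mem_univ i)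
  have hGfar : ∀ u : ℝ, ((SXn c r : ℕ) : ℝ) ≤ u → G u ≤ 0 := by
    intro u hu
    refine Finset.sup'_le _ _ fun j _ => ?_
    simp only [helldef]
    apply div_nonpos_of_nonpos_of_nonneg _ (hcR j).le
    have h1 := hvert j r
    rw [hsy_last] at h1
    nlinarith [mul_le_mul_of_nonneg_left hu (hdR j).le]
  -- measure computation
  have hdiff : {p : ℝ × ℝ | 0 ≤ p.1 ∧ 0 ≤ p.2} \ newton I
      = {p : ℝ × ℝ | 0 ≤ p.1 ∧ 0 ≤ p.2 ∧ p.2 < G p.1} := by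
    rw [hNewtonN]
    ext p
    simp only [Set.mem_diff, Set.mem_setOf_eq, hNdef]
    constructor
    · rintro ⟨⟨h1, h2⟩, hn⟩
      refine ⟨h1, h2, ?_⟩
      by_contra hge
      push_neg at hge
      refine hn ⟨h1, h2, fun i => ?_⟩
      have hle : ell i p.1 ≤ p.2 :=
        le_trans (Finset.le_sup' (fun j => ell j p.1) (Finset.mem_univ i)) hge
      rw [helldef] at hle
      rw [div_le_iff₀ (hcR i)] at hle
      linarith
    · rintro ⟨h1, h2, h3⟩
      refine ⟨⟨h1, h2⟩, ?_⟩
      rintro ⟨-, -, hall⟩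
      rw [hGdef] at h3
      obtain ⟨i, -, hi⟩ := (Finset.lt_sup'_iff _).mp h3
      rw [helldef] at hi
      rw [lt_div_iff₀ (hcR i)] at hi
      have := hall i
      linarith
  have hreg : MeasureTheory.volume ({p : ℝ × ℝ | 0 ≤ p.1 ∧ 0 ≤ p.2} \ newton I)
      = MeasureTheory.volume (regionBetween (fun _ : ℝ => (0:ℝ)) G
        (Set.Icc 0 ((SXn c r : ℕ) : ℝ))) := by
    rw [hdiff]
    apply le_antisymm
    · have hsub : {p : ℝ × ℝ | 0 ≤ p.1 ∧ 0 ≤ p.2 ∧ p.2 < G p.1}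
          ⊆ regionBetween (fun _ : ℝ => (0:ℝ)) G (Set.Icc 0 ((SXn c r : ℕ) : ℝ))
            ∪ ({p : ℝ × ℝ | p.2 = 0} ∪ {p : ℝ × ℝ | p.1 = ((SXn c r : ℕ) : ℝ)}) := by
        rintro p ⟨h1, h2, h3⟩
        by_cases hz : p.2 = 0
        · exact Or.inr (Or.inl hz)
        by_cases hb : p.1 = ((SXn c r : ℕ) : ℝ)
        · exact Or.inr (Or.inr hb)
        left
        refine ⟨⟨h1, ?_⟩, lt_of_le_of_ne h2 (Ne.symm hz), h3⟩
        by_contra hgt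
        push_neg at hgt
        have := hGfar p.1 hgt.le
        linarith
      calc MeasureTheory.volume {p : ℝ × ℝ | 0 ≤ p.1 ∧ 0 ≤ p.2 ∧ p.2 < G p.1}
          ≤ MeasureTheory.volume (regionBetween (fun _ : ℝ => (0:ℝ)) G
              (Set.Icc 0 ((SXn c r : ℕ) : ℝ))
            ∪ ({p : ℝ × ℝ | p.2 = 0} ∪ {p : ℝ × ℝ | p.1 = ((SXn c r : ℕ) : ℝ)})) :=
            measure_mono hsub
        _ ≤ MeasureTheory.volume (regionBetween (fun _ : ℝ => (0:ℝ)) G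
              (Set.Icc 0 ((SXn c r : ℕ) : ℝ)))
            + MeasureTheory.volume ({p : ℝ × ℝ | p.2 = 0}
              ∪ {p : ℝ × ℝ | p.1 = ((SXn c r : ℕ) : ℝ)}) := measure_union_le _ _
        _ = MeasureTheory.volume (regionBetween (fun _ : ℝ => (0:ℝ)) G
              (Set.Icc 0 ((SXn c r : ℕ) : ℝ))) := by
            have hz1 : MeasureTheory.volume ({p : ℝ × ℝ | p.2 = 0}) = 0 := by
              have he : {p : ℝ × ℝ | p.2 = 0} = (Set.univ : Set ℝ) ×ˢ ({0} : Set ℝ) := by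
                ext ⟨q1, q2⟩
                simp [Set.mem_prod, eq_comm]
              rw [he, MeasureTheory.Measure.volume_eq_prod, MeasureTheory.Measure.prod_prod]
              simp
            have hz2 : MeasureTheory.volume ({p : ℝ × ℝ | p.1 = ((SXn c r : ℕ) : ℝ)}) = 0 := by
              have he : {p : ℝ × ℝ | p.1 = ((SXn c r : ℕ) : ℝ)}
                  = ({((SXn c r : ℕ) : ℝ)} : Set ℝ) ×ˢ (Set.univ : Set ℝ) := by
                ext ⟨q1, q2⟩
                simp [Set.mem_prod, eq_comm]
              rw [he, MeasureTheory.Measure.volume_eq_prod, MeasureTheory.Measure.prod_prod]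
              simp
            have hzz : MeasureTheory.volume ({p : ℝ × ℝ | p.2 = 0}
                ∪ {p : ℝ × ℝ | p.1 = ((SXn c r : ℕ) : ℝ)}) = 0 :=
              le_antisymm (le_trans (measure_union_le _ _) (by rw [hz1, hz2]; simp)) zero_le
            rw [hzz, add_zero]
    · apply measure_mono
      rintro p ⟨hps, hpo⟩
      exact ⟨hps.1, le_of_lt hpo.1, hpo.2⟩
  have hform : MeasureTheory.volume (regionBetween (fun _ : ℝ => (0:ℝ)) G
      (Set.Icc 0 ((SXn c r : ℕ) : ℝ)))
      = ENNReal.ofReal (∫ y in Set.Icc (0:ℝ) ((SXn c r : ℕ) : ℝ), ((G - fun _ => (0:ℝ)) : ℝ → ℝ) y) := by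
    rw [MeasureTheory.Measure.volume_eq_prod]
    exact volume_regionBetween_eq_integral
      (MeasureTheory.integrableOn_const (by
        rw [Real.volume_Icc]; exact ENNReal.ofReal_ne_top))
      (hGcont.integrableOn_Icc) measurableSet_Icc (fun x hx => hGnn x hx.1 hx.2)
  have hI1 : ∫ y in Set.Icc (0:ℝ) ((SXn c r : ℕ) : ℝ), ((G - fun _ => (0:ℝ)) : ℝ → ℝ) y
      = ∫ y in (0:ℝ)..((SXn c r : ℕ) : ℝ), G y := by
    simp only [Pi.sub_apply, sub_zero]
    rw [MeasureTheory.integral_Icc_eq_integral_Ioc, _root_.intervalIntegral.integral_of_le (hsx_nn r)]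
  have hIadj : ∑ m ∈ Finset.range r, ∫ y in ((SXn c m : ℕ) : ℝ)..((SXn c (m+1) : ℕ) : ℝ), G y
      = ∫ y in ((SXn c 0 : ℕ) : ℝ)..((SXn c r : ℕ) : ℝ), G y := by
    apply _root_.intervalIntegral.sum_integral_adjacent_intervals
    intro m _
    exact hGcont.intervalIntegrable _ _
  have hI3 : ∀ i : Fin r, ∫ y in ((SXn c (i:ℕ) : ℕ) : ℝ)..((SXn c ((i:ℕ)+1) : ℕ) : ℝ), G y
      = (c i : ℝ) * d i / 2 + (c i : ℝ) * (SYn d ((i:ℕ)+1) : ℝ) := by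
    intro i
    have hle : ((SXn c (i:ℕ) : ℕ) : ℝ) ≤ ((SXn c ((i:ℕ)+1) : ℕ) : ℝ) := by
      rw [hsx_succ i]; linarith [hcR i]
    have hcongr : Set.EqOn G (ell i)
        (Set.uIcc ((SXn c (i:ℕ) : ℕ) : ℝ) ((SXn c ((i:ℕ)+1) : ℕ) : ℝ)) := by
      rw [Set.uIcc_of_le hle]
      intro y hy
      exact hGstrip i y hy.1 hy.2
    rw [_root_.intervalIntegral.integral_congr hcongr]
    have hellform : ell i = fun y : ℝ =>
        ((Lnat c d i : ℕ) : ℝ) / (c i : ℝ) - ((d i : ℝ) / (c i : ℝ)) * y := by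
      funext y
      simp only [helldef]
      field_simp
    rw [hellform]
    rw [_root_.intervalIntegral.integral_sub (g := fun y => ((d i : ℝ) / (c i : ℝ)) * y) intervalIntegrable_const
      ((continuous_const.mul continuous_id').intervalIntegrable _ _)]
    rw [_root_.intervalIntegral.integral_const, _root_.intervalIntegral.integral_const_mul,
      _root_.integral_id]
    rw [smul_eq_mul, hLi' i, hsx_succ i]
    have hcne : (c i : ℝ) ≠ 0 := ne_of_gt (hcR i)
    field_simp
    ring
  have hval : ∫ y in (0:ℝ)..((SXn c r : ℕ) : ℝ), G y
      = ∑ i : Fin r, ((c i : ℝ) * d i / 2 + (c i : ℝ) * (SYn d ((i:ℕ)+1) : ℝ)) := by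
    rw [← hsx_zero]
    rw [← hIadj]
    rw [← Fin.sum_univ_eq_sum_range
      (fun m => ∫ y in ((SXn c m : ℕ) : ℝ)..((SXn c (m+1) : ℕ) : ℝ), G y) r]
    exact Finset.sum_congr rfl fun i _ => hI3 i
  have hRHS : ∀ i : Fin r, ∑ j : Fin r, (if i < j then (c i : ℝ) * (d j) else 0)
      = (c i : ℝ) * (SYn d ((i:ℕ)+1) : ℝ) := by
    intro i
    have hsy : ((SYn d ((i:ℕ)+1) : ℕ) : ℝ)
        = ∑ j ∈ Finset.univ.filter (fun j : Fin r => (i:ℕ)+1 ≤ (j:ℕ)), (d j : ℝ) := by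
      rw [SYn]
      push_cast
      rfl
    rw [hsy, Finset.mul_sum, ← Finset.sum_filter]
    apply Finset.sum_congr
    · apply Finset.filter_congr
      intro j _
      rw [Fin.lt_def]
      constructor <;> intro h <;> omega
    · intros; rfl
  have hnn : (0:ℝ) ≤ ∑ i : Fin r, ((c i : ℝ) * d i / 2 + (c i : ℝ) * (SYn d ((i:ℕ)+1) : ℝ)) := by
    apply Finset.sum_nonneg
    intro i _
    have := hsy_nn ((i:ℕ)+1)
    have := (hcR i).le
    have := (hdR i).le
    positivity
  have : sArea I = ∑ i : Fin r, ((c i : ℝ) * d i / 2 + (c i : ℝ) * (SYn d ((i:ℕ)+1) : ℝ)) := by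
    rw [sArea, hreg, hform, hI1, hval]
    exact ENNReal.toReal_ofReal hnn
  rw [this, Finset.sum_add_distrib]
  congr 1
  exact Finset.sum_congr rfl fun i _ => (hRHS i).symm

/-- **Lemma 2.4.** If `I = J₁ ⋯ J_r` with `J_i` the integral closure of `(x^{c_i}, y^{d_i})`
and `d₁/c₁ ≥ ⋯ ≥ d_r/c_r`, then `s_I = Σ c_i d_i / 2 + Σ_{i<j} c_i d_j`. -/
theorem area_formula {k : Type*} [Field k] (r : ℕ) (hr : 0 < r)
    (c d : Fin r → ℕ) (hc : ∀ i, 0 < c i) (hd : ∀ i, 0 < d i)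
    (hsort : ∀ i j : Fin r, i ≤ j → d j * c i ≤ d i * c j)
    (J : Fin r → Ideal (MvPolynomial (Fin 2) k))
    (hJ : ∀ i, IsIntegralClosureOfIdeal (J i)
      (Ideal.span {(X 0 : MvPolynomial (Fin 2) k) ^ c i, X 1 ^ d i}))
    (I : Ideal (MvPolynomial (Fin 2) k)) (hI : I = ∏ i, J i) :
    sArea I = ∑ i, (c i : ℝ) * (d i) / 2
      + ∑ i : Fin r, ∑ j : Fin r, (if i < j then (c i : ℝ) * (d j) else 0) := by
  exact area_formula_aux r hr c d hc hd hsort J hJ I hI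
end
end

section
/- Let I and J be 𝔪-primary complete monomial ideals in R = k[x,y]. For all integers m, n ≥ 0 with m + n ≥ 1: (i) Q(I^m J^n) = mQ(I) + nQ(J), and (ii) P(I^m J^n) = mP(I) + nP(J), where sums are Minkowski sums of subsets of ℝ² and mP denotes the Minkowski sum of m copies of P. -/
open MvPolynomial Pointwise

noncomputable section

/-! ### Auxiliary development -/

namespace MinkAux

open Finsupp

variable {k : Type*} [Field k]

/-- The exponent point set of an ideal. -/
def pts (I : Ideal (MvPolynomial (Fin 2) k)) : Set (ℝ × ℝ) :=
  {p : ℝ × ℝ | ∃ s : Fin 2 →₀ ℕ, (MvPolynomial.monomial s (1 : k)) ∈ I ∧ p = ((s 0 : ℝ), (s 1 : ℝ))}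

lemma newton_eq (I : Ideal (MvPolynomial (Fin 2) k)) : newton I = convexHull ℝ (pts I) := rfl

/-- A convenient class of ideals: monomial ideals containing a power of each variable
(the unit ideal also qualifies). -/
structure Nice (I : Ideal (MvPolynomial (Fin 2) k)) : Prop where
  mono : IsMonomialIdeal I
  hx : ∃ a : ℕ, monomial (Finsupp.single (0 : Fin 2) a) (1 : k) ∈ I
  hy : ∃ b : ℕ, monomial (Finsupp.single (1 : Fin 2) b) (1 : k) ∈ I

def aN (I : Ideal (MvPolynomial (Fin 2) k)) : ℕ :=
  sInf {a : ℕ | monomial (Finsupp.single (0 : Fin 2) a) (1 : k) ∈ I}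

def bN (I : Ideal (MvPolynomial (Fin 2) k)) : ℕ :=
  sInf {b : ℕ | monomial (Finsupp.single (1 : Fin 2) b) (1 : k) ∈ I}

lemma aN_mem {I : Ideal (MvPolynomial (Fin 2) k)} (h : Nice I) :
    monomial (Finsupp.single (0 : Fin 2) (aN I)) (1 : k) ∈ I := Nat.sInf_mem h.hx

lemma bN_mem {I : Ideal (MvPolynomial (Fin 2) k)} (h : Nice I) :
    monomial (Finsupp.single (1 : Fin 2) (bN I)) (1 : k) ∈ I := Nat.sInf_mem h.hy

lemma aN_le {I : Ideal (MvPolynomial (Fin 2) k)} {a : ℕ}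
    (ha : monomial (Finsupp.single (0 : Fin 2) a) (1 : k) ∈ I) : aN I ≤ a := Nat.sInf_le ha

lemma bN_le {I : Ideal (MvPolynomial (Fin 2) k)} {b : ℕ}
    (hb : monomial (Finsupp.single (1 : Fin 2) b) (1 : k) ∈ I) : bN I ≤ b := Nat.sInf_le hb

lemma eq_single0 (s : Fin 2 →₀ ℕ) (h : s 1 = 0) : s = Finsupp.single (0 : Fin 2) (s 0) := by
  ext i
  fin_cases i <;> simp [Finsupp.single_apply, h]

lemma eq_single1 (s : Fin 2 →₀ ℕ) (h : s 0 = 0) : s = Finsupp.single (1 : Fin 2) (s 1) := by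
  ext i
  fin_cases i <;> simp [Finsupp.single_apply, h]

/-- Product of monomial span ideals is the span over the Minkowski sum of exponent sets. -/
lemma monomialSet_mul (S T : Set (Fin 2 →₀ ℕ)) :
    Ideal.span ((fun s => (MvPolynomial.monomial s (1 : k))) '' S) *
      Ideal.span ((fun s => (MvPolynomial.monomial s (1 : k))) '' T)
      = Ideal.span ((fun s => (MvPolynomial.monomial s (1 : k))) '' (S + T)) := by
  rw [Ideal.span_mul_span']
  congr 1
  ext p
  constructor
  · rintro ⟨a, ⟨u, hu, rfl⟩, b, ⟨v, hv, rfl⟩, rfl⟩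
    exact ⟨u + v, Set.add_mem_add hu hv, by simp [MvPolynomial.monomial_mul]⟩
  · rintro ⟨w, ⟨u, hu, v, hv, rfl⟩, rfl⟩
    exact ⟨monomial u 1, ⟨u, hu, rfl⟩, monomial v 1, ⟨v, hv, rfl⟩,
      by simp [MvPolynomial.monomial_mul]⟩

lemma Nice.mul {A B : Ideal (MvPolynomial (Fin 2) k)} (hA : Nice A) (hB : Nice B) :
    Nice (A * B) := by
  obtain ⟨a, ha⟩ := hA.hx
  obtain ⟨a', ha'⟩ := hB.hx
  obtain ⟨b, hb⟩ := hA.hy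
  obtain ⟨b', hb'⟩ := hB.hy
  refine ⟨?_, ⟨a + a', ?_⟩, ⟨b + b', ?_⟩⟩
  · obtain ⟨S, hS⟩ := hA.mono
    obtain ⟨T, hT⟩ := hB.mono
    exact ⟨S + T, by rw [hS, hT, monomialSet_mul]⟩
  · have : monomial (Finsupp.single (0 : Fin 2) (a + a')) (1 : k)
        = monomial (Finsupp.single (0 : Fin 2) a) (1 : k) *
          monomial (Finsupp.single (0 : Fin 2) a') (1 : k) := by
      rw [MvPolynomial.monomial_mul, Finsupp.single_add, one_mul]
    rw [this]
    exact Ideal.mul_mem_mul ha ha'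
  · have : monomial (Finsupp.single (1 : Fin 2) (b + b')) (1 : k)
        = monomial (Finsupp.single (1 : Fin 2) b) (1 : k) *
          monomial (Finsupp.single (1 : Fin 2) b') (1 : k) := by
      rw [MvPolynomial.monomial_mul, Finsupp.single_add, one_mul]
    rw [this]
    exact Ideal.mul_mem_mul hb hb'

lemma Nice.top : Nice (⊤ : Ideal (MvPolynomial (Fin 2) k)) := by
  refine ⟨⟨{0}, ?_⟩, ⟨0, trivial⟩, ⟨0, trivial⟩⟩
  rw [Set.image_singleton]
  simp [Ideal.span_singleton_one]

/-- Key decomposition: a monomial in `A * B` dominates a product of monomials of `A` and of `B`. -/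
lemma mem_mul_decomp {A B : Ideal (MvPolynomial (Fin 2) k)}
    (hA : IsMonomialIdeal A) (hB : IsMonomialIdeal B)
    {s : Fin 2 →₀ ℕ} (hs : monomial s (1 : k) ∈ A * B) :
    ∃ u v : Fin 2 →₀ ℕ, monomial u (1 : k) ∈ A ∧ monomial v (1 : k) ∈ B ∧ u + v ≤ s := by
  obtain ⟨S, rfl⟩ := hA
  obtain ⟨T, rfl⟩ := hB
  rw [monomialSet_mul, mem_ideal_span_monomial_image] at hs
  obtain ⟨w, hw, hle⟩ := hs s (by simp [MvPolynomial.support_monomial])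
  obtain ⟨u, hu, v, hv, rfl⟩ := hw
  exact ⟨u, v, Ideal.subset_span ⟨u, hu, rfl⟩, Ideal.subset_span ⟨v, hv, rfl⟩, hle⟩

lemma aN_mul {A B : Ideal (MvPolynomial (Fin 2) k)} (hA : Nice A) (hB : Nice B) :
    aN (A * B) = aN A + aN B := by
  apply le_antisymm
  · apply Nat.sInf_le
    have : monomial (Finsupp.single (0 : Fin 2) (aN A + aN B)) (1 : k)
        = monomial (Finsupp.single (0 : Fin 2) (aN A)) (1 : k) *
          monomial (Finsupp.single (0 : Fin 2) (aN B)) (1 : k) := by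
      rw [MvPolynomial.monomial_mul, Finsupp.single_add, one_mul]
    exact Set.mem_setOf.2 (this ▸ Ideal.mul_mem_mul (aN_mem hA) (aN_mem hB))
  · have hne : {a : ℕ | monomial (Finsupp.single (0 : Fin 2) a) (1 : k) ∈ A * B}.Nonempty :=
      (hA.mul hB).hx
    apply le_csInf hne
    intro c hc
    obtain ⟨u, v, hu, hv, hle⟩ := mem_mul_decomp hA.mono hB.mono hc
    have h1 : u 1 = 0 ∧ v 1 = 0 := by
      have := hle 1
      simp [Finsupp.single_apply] at this
      omega
    have hu' : aN A ≤ u 0 := aN_le (by rwa [← eq_single0 u h1.1])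
    have hv' : aN B ≤ v 0 := aN_le (by rwa [← eq_single0 v h1.2])
    have h0 : u 0 + v 0 ≤ c := by
      have := hle 0
      simpa [Finsupp.single_apply] using this
    omega

lemma bN_mul {A B : Ideal (MvPolynomial (Fin 2) k)} (hA : Nice A) (hB : Nice B) :
    bN (A * B) = bN A + bN B := by
  apply le_antisymm
  · apply Nat.sInf_le
    have : monomial (Finsupp.single (1 : Fin 2) (bN A + bN B)) (1 : k)
        = monomial (Finsupp.single (1 : Fin 2) (bN A)) (1 : k) *
          monomial (Finsupp.single (1 : Fin 2) (bN B)) (1 : k) := by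
      rw [MvPolynomial.monomial_mul, Finsupp.single_add, one_mul]
    exact Set.mem_setOf.2 (this ▸ Ideal.mul_mem_mul (bN_mem hA) (bN_mem hB))
  · have hne : {b : ℕ | monomial (Finsupp.single (1 : Fin 2) b) (1 : k) ∈ A * B}.Nonempty :=
      (hA.mul hB).hy
    apply le_csInf hne
    intro c hc
    obtain ⟨u, v, hu, hv, hle⟩ := mem_mul_decomp hA.mono hB.mono hc
    have h1 : u 0 = 0 ∧ v 0 = 0 := by
      have := hle 0
      simp [Finsupp.single_apply] at this
      omega
    have hu' : bN A ≤ u 1 := bN_le (by rwa [← eq_single1 u h1.1])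
    have hv' : bN B ≤ v 1 := bN_le (by rwa [← eq_single1 v h1.2])
    have h0 : u 1 + v 1 ≤ c := by
      have := hle 1
      simpa [Finsupp.single_apply] using this
    omega

/-! ### Convexity facts -/

def posQuad : Set (ℝ × ℝ) := {p : ℝ × ℝ | 0 ≤ p.1 ∧ 0 ≤ p.2}

lemma convex_posQuad : Convex ℝ posQuad := by
  intro p hp q hq a b ha hb hab
  constructor
  · have : (a • p + b • q).1 = a * p.1 + b * q.1 := by simp [Prod.smul_fst, smul_eq_mul]
    rw [this]
    exact add_nonneg (mul_nonneg ha hp.1) (mul_nonneg hb hq.1)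
  · have : (a • p + b • q).2 = a * p.2 + b * q.2 := by simp [Prod.smul_snd, smul_eq_mul]
    rw [this]
    exact add_nonneg (mul_nonneg ha hp.2) (mul_nonneg hb hq.2)

lemma pts_subset_posQuad (I : Ideal (MvPolynomial (Fin 2) k)) : pts I ⊆ posQuad := by
  rintro p ⟨s, hs, rfl⟩
  exact ⟨Nat.cast_nonneg _, Nat.cast_nonneg _⟩

lemma newton_subset_posQuad (I : Ideal (MvPolynomial (Fin 2) k)) : newton I ⊆ posQuad :=
  convexHull_min (pts_subset_posQuad I) convex_posQuad

/-- one lattice step up-closedness of the hull -/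
lemma hull_step {E : Set (ℝ × ℝ)} {v0 : ℝ × ℝ} (hE : ∀ p ∈ E, p + v0 ∈ E) :
    ∀ p ∈ convexHull ℝ E, p + v0 ∈ convexHull ℝ E := by
  intro p hp
  have h1 : p + v0 ∈ convexHull ℝ E + convexHull ℝ {v0} :=
    Set.add_mem_add hp (subset_convexHull ℝ _ rfl)
  rw [← convexHull_add] at h1
  refine convexHull_mono ?_ h1
  rintro q ⟨a, ha, b, hb, rfl⟩
  rw [Set.mem_singleton_iff] at hb
  subst hb
  exact hE a ha

lemma pts_step_x (I : Ideal (MvPolynomial (Fin 2) k)) :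
    ∀ p ∈ pts I, p + ((1 : ℝ), (0 : ℝ)) ∈ pts I := by
  rintro p ⟨s, hs, rfl⟩
  refine ⟨s + Finsupp.single (0 : Fin 2) 1, ?_, ?_⟩
  · have : monomial (s + Finsupp.single (0 : Fin 2) 1) (1 : k)
        = monomial (Finsupp.single (0 : Fin 2) 1) (1 : k) * monomial s (1 : k) := by
      rw [MvPolynomial.monomial_mul, one_mul, add_comm]
    rw [this]
    exact Ideal.mul_mem_left _ _ hs
  · simp [Finsupp.add_apply, Finsupp.single_apply, Prod.ext_iff]

lemma pts_step_y (I : Ideal (MvPolynomial (Fin 2) k)) :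
    ∀ p ∈ pts I, p + ((0 : ℝ), (1 : ℝ)) ∈ pts I := by
  rintro p ⟨s, hs, rfl⟩
  refine ⟨s + Finsupp.single (1 : Fin 2) 1, ?_, ?_⟩
  · have : monomial (s + Finsupp.single (1 : Fin 2) 1) (1 : k)
        = monomial (Finsupp.single (1 : Fin 2) 1) (1 : k) * monomial s (1 : k) := by
      rw [MvPolynomial.monomial_mul, one_mul, add_comm]
    rw [this]
    exact Ideal.mul_mem_left _ _ hs
  · simp [Finsupp.add_apply, Finsupp.single_apply, Prod.ext_iff]

/-- real up-closedness along a single axis direction -/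
lemma hull_ray {E : Set (ℝ × ℝ)} {v0 : ℝ × ℝ} (hE : ∀ p ∈ E, p + v0 ∈ E)
    {p : ℝ × ℝ} (hp : p ∈ convexHull ℝ E) {c : ℝ} (hc : 0 ≤ c) :
    p + c • v0 ∈ convexHull ℝ E := by
  have hn : ∀ n : ℕ, p + (n : ℝ) • v0 ∈ convexHull ℝ E := by
    intro n
    induction n with
    | zero => simpa using hp
    | succ n ih =>
      have := hull_step hE _ ih
      convert this using 1
      push_cast
      module
  set n : ℕ := ⌈c⌉₊ + 1 with hn'
  have hcn : c ≤ (n : ℝ) := le_trans (Nat.le_ceil c) (by rw [hn']; push_cast; linarith)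
  have hnpos : (0 : ℝ) < (n : ℝ) := by positivity
  have hmem := (convex_convexHull ℝ E) hp (hn n) (a := 1 - c / n) (b := c / n)
    (by rw [sub_nonneg]; exact div_le_one_of_le₀ hcn hnpos.le)
    (by positivity) (by ring)
  convert hmem using 1
  have : (c / n) * n = c := div_mul_cancel₀ c hnpos.ne'
  match_scalars <;> field_simp <;> ring

/-- The Newton polyhedron is closed under adding nonnegative vectors. -/
lemma newton_up (I : Ideal (MvPolynomial (Fin 2) k)) :
    ∀ p ∈ newton I, ∀ v : ℝ × ℝ, 0 ≤ v.1 → 0 ≤ v.2 → p + v ∈ newton I := by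
  intro p hp v hv1 hv2
  have h1 : p + v.1 • ((1 : ℝ), (0 : ℝ)) ∈ newton I := hull_ray (pts_step_x I) hp hv1
  have h2 := hull_ray (pts_step_y I) h1 hv2
  have hv : p + v = p + v.1 • ((1 : ℝ), (0 : ℝ)) + v.2 • ((0 : ℝ), (1 : ℝ)) := by
    ext
    · show p.1 + v.1 = p.1 + v.1 * 1 + v.2 * 0
      ring
    · show p.2 + v.2 = p.2 + v.1 * 0 + v.2 * 1
      ring
  rw [hv]
  exact h2

lemma corner_a {I : Ideal (MvPolynomial (Fin 2) k)} (h : Nice I) :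
    (((aN I : ℝ)), (0 : ℝ)) ∈ newton I := by
  apply subset_convexHull ℝ _
  exact ⟨Finsupp.single (0 : Fin 2) (aN I), aN_mem h, by simp [Finsupp.single_apply]⟩

lemma corner_b {I : Ideal (MvPolynomial (Fin 2) k)} (h : Nice I) :
    ((0 : ℝ), ((bN I : ℝ))) ∈ newton I := by
  apply subset_convexHull ℝ _
  exact ⟨Finsupp.single (1 : Fin 2) (bN I), bN_mem h, by simp [Finsupp.single_apply]⟩

lemma newton_subset_halfA {I : Ideal (MvPolynomial (Fin 2) k)} :
    newton I ⊆ {p : ℝ × ℝ | (aN I : ℝ) ≤ p.1 + (aN I : ℝ) * p.2} := by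
  apply convexHull_min
  · rintro p ⟨s, hs, rfl⟩
    simp only [Set.mem_setOf_eq]
    by_cases h1 : s 1 = 0
    · have ha : aN I ≤ s 0 := aN_le (by rwa [← eq_single0 s h1])
      have : (aN I : ℝ) ≤ (s 0 : ℝ) := by exact_mod_cast ha
      nlinarith [Nat.cast_nonneg (α := ℝ) (aN I), Nat.cast_nonneg (α := ℝ) (s 1)]
    · have : (1 : ℝ) ≤ (s 1 : ℝ) := by exact_mod_cast Nat.one_le_iff_ne_zero.2 h1
      nlinarith [Nat.cast_nonneg (α := ℝ) (aN I), Nat.cast_nonneg (α := ℝ) (s 0)]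
  · exact convex_halfSpace_ge
      ⟨fun x y => by simp [Prod.fst_add, Prod.snd_add]; ring,
       fun c x => by simp [Prod.smul_fst, Prod.smul_snd, smul_eq_mul]; ring⟩ _

lemma newton_subset_halfB {I : Ideal (MvPolynomial (Fin 2) k)} :
    newton I ⊆ {p : ℝ × ℝ | (bN I : ℝ) ≤ (bN I : ℝ) * p.1 + p.2} := by
  apply convexHull_min
  · rintro p ⟨s, hs, rfl⟩
    simp only [Set.mem_setOf_eq]
    by_cases h0 : s 0 = 0
    · have hb : bN I ≤ s 1 := bN_le (by rwa [← eq_single1 s h0])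
      have : (bN I : ℝ) ≤ (s 1 : ℝ) := by exact_mod_cast hb
      nlinarith [Nat.cast_nonneg (α := ℝ) (bN I), Nat.cast_nonneg (α := ℝ) (s 0)]
    · have : (1 : ℝ) ≤ (s 0 : ℝ) := by exact_mod_cast Nat.one_le_iff_ne_zero.2 h0
      nlinarith [Nat.cast_nonneg (α := ℝ) (bN I), Nat.cast_nonneg (α := ℝ) (s 1)]
  · exact convex_halfSpace_ge
      ⟨fun x y => by simp [Prod.fst_add, Prod.snd_add]; ring,
       fun c x => by simp [Prod.smul_fst, Prod.smul_snd, smul_eq_mul]; ring⟩ _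

lemma aEnd_eq' {I : Ideal (MvPolynomial (Fin 2) k)} (h : Nice I) : aEnd I = (aN I : ℝ) := by
  apply IsLeast.csInf_eq
  constructor
  · exact corner_a h
  · intro t ht
    have := newton_subset_halfA (I := I) ht
    simpa using this

lemma bEnd_eq' {I : Ideal (MvPolynomial (Fin 2) k)} (h : Nice I) : bEnd I = (bN I : ℝ) := by
  apply IsLeast.csInf_eq
  constructor
  · exact corner_b h
  · intro t ht
    have := newton_subset_halfB (I := I) ht
    simpa using this

/-- Newton polyhedra multiply to Minkowski sums. -/
lemma newton_mul {A B : Ideal (MvPolynomial (Fin 2) k)} (hA : Nice A) (hB : Nice B) :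
    newton (A * B) = newton A + newton B := by
  apply Set.Subset.antisymm
  · apply convexHull_min
    · rintro p ⟨s, hs, rfl⟩
      obtain ⟨u, v, hu, hv, hle⟩ := mem_mul_decomp hA.mono hB.mono hs
      have hu0 : u 0 + v 0 ≤ s 0 := by simpa using hle 0
      have hu1 : u 1 + v 1 ≤ s 1 := by simpa using hle 1
      refine ⟨((u 0 : ℝ), (u 1 : ℝ)), subset_convexHull ℝ _ ⟨u, hu, rfl⟩,
        ((s 0 : ℝ) - (u 0 : ℝ), (s 1 : ℝ) - (u 1 : ℝ)), ?_, by ext <;> simp⟩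
      have hv' : ((v 0 : ℝ), (v 1 : ℝ)) ∈ newton B := subset_convexHull ℝ _ ⟨v, hv, rfl⟩
      have := newton_up B _ hv'
        ((s 0 : ℝ) - (u 0 : ℝ) - (v 0 : ℝ), (s 1 : ℝ) - (u 1 : ℝ) - (v 1 : ℝ))
        (by
          show (0 : ℝ) ≤ (s 0 : ℝ) - (u 0 : ℝ) - (v 0 : ℝ)
          have h : (u 0 : ℝ) + (v 0 : ℝ) ≤ (s 0 : ℝ) := by exact_mod_cast hu0
          linarith)
        (by
          show (0 : ℝ) ≤ (s 1 : ℝ) - (u 1 : ℝ) - (v 1 : ℝ)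
          have h : (u 1 : ℝ) + (v 1 : ℝ) ≤ (s 1 : ℝ) := by exact_mod_cast hu1
          linarith)
      convert this using 1
      ext <;> simp <;> ring
    · exact ((convex_convexHull ℝ _).add (convex_convexHull ℝ _))
  · rw [newton_eq, newton_eq, ← convexHull_add]
    apply convexHull_mono
    rintro p ⟨a, ⟨u, hu, rfl⟩, b, ⟨v, hv, rfl⟩, rfl⟩
    refine ⟨u + v, ?_, by simp [Prod.ext_iff]⟩
    have : monomial (u + v) (1 : k) = monomial u (1 : k) * monomial v (1 : k) := by
      rw [MvPolynomial.monomial_mul, one_mul]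
    rw [this]
    exact Ideal.mul_mem_mul hu hv

/-! ### Box and clamping lemmas (pure real geometry) -/

def box (a b : ℝ) : Set (ℝ × ℝ) := Set.Icc (0 : ℝ) a ×ˢ Set.Icc (0 : ℝ) b

lemma mem_box {a b : ℝ} {p : ℝ × ℝ} :
    p ∈ box a b ↔ (0 ≤ p.1 ∧ p.1 ≤ a) ∧ (0 ≤ p.2 ∧ p.2 ≤ b) := by
  simp only [box, Set.mem_prod, Set.mem_Icc]

lemma box_add {a1 b1 a2 b2 : ℝ} (ha1 : 0 ≤ a1) (hb1 : 0 ≤ b1) (ha2 : 0 ≤ a2) (hb2 : 0 ≤ b2) :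
    box a1 b1 + box a2 b2 = box (a1 + a2) (b1 + b2) := by
  ext p
  constructor
  · rintro ⟨q, hq, r, hr, rfl⟩
    rw [mem_box] at hq hr ⊢
    constructor <;> constructor <;>
      simp only [Prod.fst_add, Prod.snd_add] <;> linarith [hq.1.1, hq.1.2, hq.2.1, hq.2.2,
        hr.1.1, hr.1.2, hr.2.1, hr.2.2]
  · intro hp
    rw [mem_box] at hp
    obtain ⟨⟨h0x, hax⟩, h0y, hby⟩ := hp
    refine ⟨(min p.1 a1, min p.2 b1), ?_, (p.1 - min p.1 a1, p.2 - min p.2 b1), ?_, by ext <;> simp⟩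
    · rw [mem_box]
      exact ⟨⟨le_min h0x ha1, min_le_right _ _⟩, le_min h0y hb1, min_le_right _ _⟩
    · rw [mem_box]
      constructor <;> constructor <;> simp only
      · linarith [min_le_left p.1 a1]
      · rcases le_total p.1 a1 with h | h
        · rw [min_eq_left h]; linarith
        · rw [min_eq_right h]; linarith
      · linarith [min_le_left p.2 b1]
      · rcases le_total p.2 b1 with h | h
        · rw [min_eq_left h]; linarith
        · rw [min_eq_right h]; linarith

/-- The clamping lemma: intersecting a Minkowski sum of up-closed sets with the sum box splits. -/
lemma clamp {N1 N2 : Set (ℝ × ℝ)} {a1 b1 a2 b2 : ℝ}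
    (hN1 : N1 ⊆ posQuad) (hN2 : N2 ⊆ posQuad)
    (up1 : ∀ p ∈ N1, ∀ v : ℝ × ℝ, 0 ≤ v.1 → 0 ≤ v.2 → p + v ∈ N1)
    (up2 : ∀ p ∈ N2, ∀ v : ℝ × ℝ, 0 ≤ v.1 → 0 ≤ v.2 → p + v ∈ N2)
    (ca1 : (a1, (0 : ℝ)) ∈ N1) (cb1 : ((0 : ℝ), b1) ∈ N1)
    (ca2 : (a2, (0 : ℝ)) ∈ N2) (cb2 : ((0 : ℝ), b2) ∈ N2)
    (ha1 : 0 ≤ a1) (hb1 : 0 ≤ b1) (ha2 : 0 ≤ a2) (hb2 : 0 ≤ b2) :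
    (N1 + N2) ∩ box (a1 + a2) (b1 + b2) = (N1 ∩ box a1 b1) + (N2 ∩ box a2 b2) := by
  apply Set.Subset.antisymm
  · rintro p ⟨⟨q1, hq1, q2, hq2, rfl⟩, hpbox⟩
    rw [mem_box] at hpbox
    simp only [Prod.fst_add, Prod.snd_add] at hpbox
    obtain ⟨⟨-, hx⟩, -, hy⟩ := hpbox
    -- step 1 : fix the x-coordinates
    have step1 : ∃ r1 r2 : ℝ × ℝ, r1 ∈ N1 ∧ r2 ∈ N2 ∧ r1 + r2 = q1 + q2 ∧
        r1.1 ≤ a1 ∧ r2.1 ≤ a2 := by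
      rcases le_or_gt q1.1 a1 with h1 | h1
      · rcases le_or_gt q2.1 a2 with h2 | h2
        · exact ⟨q1, q2, hq1, hq2, rfl, h1, h2⟩
        · -- q2.1 > a2 : clamp q2
          refine ⟨q1 + (q2.1 - a2, 0), (a2, q2.2), ?_, ?_, by ext <;> simp <;> ring, ?_, le_refl _⟩
          · exact up1 q1 hq1 _ (by simp; linarith) (by simp)
          · have := up2 _ ca2 (0, q2.2) (by simp) (by simp [(hN2 hq2).2])
            simpa using this
          · simp only [Prod.fst_add]
            linarith
      · -- q1.1 > a1 : clamp q1
        refine ⟨(a1, q1.2), q2 + (q1.1 - a1, 0), ?_, ?_, by ext <;> simp <;> ring, le_refl _, ?_⟩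
        · have := up1 _ ca1 (0, q1.2) (by simp) (by simp [(hN1 hq1).2])
          simpa using this
        · exact up2 q2 hq2 _ (by simp; linarith) (by simp)
        · simp only [Prod.fst_add]
          linarith
    obtain ⟨r1, r2, hr1, hr2, hsum, hra, hrb⟩ := step1
    have hy' : r1.2 + r2.2 ≤ b1 + b2 := by
      have : (r1 + r2).2 = (q1 + q2).2 := by rw [hsum]
      simp only [Prod.snd_add] at this
      linarith
    -- step 2 : fix the y-coordinates keeping the x-coordinates
    have step2 : ∃ w1 w2 : ℝ × ℝ, w1 ∈ N1 ∧ w2 ∈ N2 ∧ w1 + w2 = r1 + r2 ∧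
        w1.1 ≤ a1 ∧ w2.1 ≤ a2 ∧ w1.2 ≤ b1 ∧ w2.2 ≤ b2 := by
      rcases le_or_gt r1.2 b1 with h1 | h1
      · rcases le_or_gt r2.2 b2 with h2 | h2
        · exact ⟨r1, r2, hr1, hr2, rfl, hra, hrb, h1, h2⟩
        · refine ⟨r1 + (0, r2.2 - b2), (r2.1, b2), ?_, ?_, by ext <;> simp <;> ring,
            by simpa using hra, by simpa using hrb, by simp; linarith, le_refl _⟩
          · exact up1 r1 hr1 _ (by simp) (by simp; linarith)
          · have := up2 _ cb2 (r2.1, 0) (by simp [(hN2 hr2).1]) (by simp)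
            simpa using this
      · refine ⟨(r1.1, b1), r2 + (0, r1.2 - b1), ?_, ?_, by ext <;> simp <;> ring,
          by simpa using hra, by simpa using hrb, le_refl _, by simp; linarith⟩
        · have := up1 _ cb1 (r1.1, 0) (by simp [(hN1 hr1).1]) (by simp)
          simpa using this
        · exact up2 r2 hr2 _ (by simp) (by simp; linarith)
    obtain ⟨w1, w2, hw1, hw2, hsum2, h1a, h2a, h1b, h2b⟩ := step2
    have m1 : w1 ∈ N1 ∩ box a1 b1 :=
      Set.mem_inter hw1 (mem_box.2 ⟨⟨(hN1 hw1).1, h1a⟩, ⟨(hN1 hw1).2, h1b⟩⟩)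
    have m2 : w2 ∈ N2 ∩ box a2 b2 :=
      Set.mem_inter hw2 (mem_box.2 ⟨⟨(hN2 hw2).1, h2a⟩, ⟨(hN2 hw2).2, h2b⟩⟩)
    have hmem := Set.add_mem_add m1 m2
    rw [hsum] at hsum2
    rwa [hsum2] at hmem
  · rintro p ⟨q, ⟨hqN, hqB⟩, r, ⟨hrN, hrB⟩, rfl⟩
    refine ⟨Set.add_mem_add hqN hrN, ?_⟩
    rw [← box_add ha1 hb1 ha2 hb2]
    exact Set.add_mem_add hqB hrB

/-! ### Putting it together for ideals -/

lemma Qset_eq {I : Ideal (MvPolynomial (Fin 2) k)} (h : Nice I) :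
    Qset I = box ((aN I : ℝ)) ((bN I : ℝ)) := by
  rw [Qset, aEnd_eq' h, bEnd_eq' h]
  rfl

lemma Qset_mul {A B : Ideal (MvPolynomial (Fin 2) k)} (hA : Nice A) (hB : Nice B) :
    Qset (A * B) = Qset A + Qset B := by
  rw [Qset_eq (hA.mul hB), Qset_eq hA, Qset_eq hB, aN_mul hA hB, bN_mul hA hB,
    box_add (Nat.cast_nonneg _) (Nat.cast_nonneg _) (Nat.cast_nonneg _) (Nat.cast_nonneg _)]
  push_cast
  rfl

lemma Pset_mul {A B : Ideal (MvPolynomial (Fin 2) k)} (hA : Nice A) (hB : Nice B) :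
    Pset (A * B) = Pset A + Pset B := by
  rw [Pset, Pset, Pset, Qset_eq (hA.mul hB), Qset_eq hA, Qset_eq hB, newton_mul hA hB,
    aN_mul hA hB, bN_mul hA hB]
  push_cast
  exact clamp (newton_subset_posQuad A) (newton_subset_posQuad B) (newton_up A) (newton_up B)
    (corner_a hA) (corner_b hA) (corner_a hB) (corner_b hB)
    (Nat.cast_nonneg _) (Nat.cast_nonneg _) (Nat.cast_nonneg _) (Nat.cast_nonneg _)

lemma nice_of_mprimary {I : Ideal (MvPolynomial (Fin 2) k)}
    (hm : IsMonomialIdeal I) (hp : IsMPrimary I) : Nice I := by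
  refine ⟨hm, ?_, ?_⟩
  · have hx : (MvPolynomial.X (0 : Fin 2) : MvPolynomial (Fin 2) k) ∈ I.radical := by
      rw [hp.2]
      exact Ideal.subset_span (Set.mem_insert _ _)
    obtain ⟨n, hn⟩ := hx
    exact ⟨n, by rwa [← MvPolynomial.X_pow_eq_monomial]⟩
  · have hy : (MvPolynomial.X (1 : Fin 2) : MvPolynomial (Fin 2) k) ∈ I.radical := by
      rw [hp.2]
      exact Ideal.subset_span (Set.mem_insert_of_mem _ rfl)
    obtain ⟨n, hn⟩ := hy
    exact ⟨n, by rwa [← MvPolynomial.X_pow_eq_monomial]⟩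

lemma nice_pow_mul {I J : Ideal (MvPolynomial (Fin 2) k)} (hI : Nice I) (hJ : Nice J)
    (m n : ℕ) : Nice (I ^ m * J ^ n) := by
  have hpow : ∀ (A : Ideal (MvPolynomial (Fin 2) k)), Nice A → ∀ l : ℕ, Nice (A ^ l) := by
    intro A hA l
    induction l with
    | zero => simpa [Ideal.one_eq_top] using Nice.top
    | succ l ih => rw [pow_succ]; exact ih.mul hA
  exact (hpow I hI m).mul (hpow J hJ n)

lemma aN_top : aN (⊤ : Ideal (MvPolynomial (Fin 2) k)) = 0 :=
  Nat.le_zero.1 (aN_le trivial)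

lemma bN_top : bN (⊤ : Ideal (MvPolynomial (Fin 2) k)) = 0 :=
  Nat.le_zero.1 (bN_le trivial)

lemma Qset_top : Qset (⊤ : Ideal (MvPolynomial (Fin 2) k)) = {(0 : ℝ × ℝ)} := by
  rw [Qset_eq Nice.top, aN_top, bN_top]
  simp only [Nat.cast_zero, box, Set.Icc_self, Set.singleton_prod_singleton]
  rfl

lemma Pset_top : Pset (⊤ : Ideal (MvPolynomial (Fin 2) k)) = {(0 : ℝ × ℝ)} := by
  rw [Pset, Qset_top, Set.inter_eq_right]
  rintro p rfl
  exact subset_convexHull ℝ _ ⟨0, trivial, by simp [Prod.ext_iff]⟩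

end MinkAux


/-- **Lemma 3.2.** For `𝔪`-primary complete monomial ideals `I, J` in `k[x,y]` and
`m + n ≥ 1`: (i) `Q(I^m J^n) = mQ(I) + nQ(J)` and (ii) `P(I^m J^n) = mP(I) + nP(J)`,
where the sums are Minkowski sums. -/
theorem minkowski_additivity {k : Type*} [Field k]
    (I J : Ideal (MvPolynomial (Fin 2) k))
    (hIm : IsMonomialIdeal I) (hIc : IsCompleteIdeal I) (hIp : IsMPrimary I)
    (hJm : IsMonomialIdeal J) (hJc : IsCompleteIdeal J) (hJp : IsMPrimary J) :
    ∀ m n : ℕ, 1 ≤ m + n →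
      Qset (I ^ m * J ^ n) = iterMink (Qset I) m + iterMink (Qset J) n ∧
      Pset (I ^ m * J ^ n) = iterMink (Pset I) m + iterMink (Pset J) n := by
  have hI : MinkAux.Nice I := MinkAux.nice_of_mprimary hIm hIp
  have hJ : MinkAux.Nice J := MinkAux.nice_of_mprimary hJm hJp
  have hstep : ∀ P Q R : Set (ℝ × ℝ), P + (Q + R) = (P + Q) + R := fun P Q R => (add_assoc P Q R).symm
  have main : ∀ m n : ℕ,
      Qset (I ^ m * J ^ n) = iterMink (Qset I) m + iterMink (Qset J) n ∧
      Pset (I ^ m * J ^ n) = iterMink (Pset I) m + iterMink (Pset J) n := by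
    intro m n
    induction m with
    | zero =>
      induction n with
      | zero =>
        have h0 : (I ^ 0 * J ^ 0 : Ideal (MvPolynomial (Fin 2) k)) = ⊤ := by
          simp [Ideal.one_eq_top]
        rw [h0]
        constructor
        · rw [MinkAux.Qset_top]
          show ({0} : Set (ℝ × ℝ)) = {0} + {0}
          rw [Set.singleton_add_singleton, add_zero]
        · rw [MinkAux.Pset_top]
          show ({0} : Set (ℝ × ℝ)) = {0} + {0}
          rw [Set.singleton_add_singleton, add_zero]
      | succ n ihn =>
        have h0 : (I ^ 0 * J ^ (n + 1) : Ideal (MvPolynomial (Fin 2) k))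
            = J * (I ^ 0 * J ^ n) := by ring
        rw [h0]
        constructor
        · rw [MinkAux.Qset_mul hJ (MinkAux.nice_pow_mul hI hJ 0 n), ihn.1]
          show Qset J + (iterMink (Qset I) 0 + iterMink (Qset J) n)
              = iterMink (Qset I) 0 + (Qset J + iterMink (Qset J) n)
          rw [← add_assoc, add_comm (Qset J) (iterMink (Qset I) 0), add_assoc]
        · rw [MinkAux.Pset_mul hJ (MinkAux.nice_pow_mul hI hJ 0 n), ihn.2]
          show Pset J + (iterMink (Pset I) 0 + iterMink (Pset J) n)
              = iterMink (Pset I) 0 + (Pset J + iterMink (Pset J) n)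
          rw [← add_assoc, add_comm (Pset J) (iterMink (Pset I) 0), add_assoc]
    | succ m ihm =>
      have h0 : (I ^ (m + 1) * J ^ n : Ideal (MvPolynomial (Fin 2) k))
          = I * (I ^ m * J ^ n) := by ring
      rw [h0]
      constructor
      · rw [MinkAux.Qset_mul hI (MinkAux.nice_pow_mul hI hJ m n), ihm.1]
        show Qset I + (iterMink (Qset I) m + iterMink (Qset J) n)
            = (Qset I + iterMink (Qset I) m) + iterMink (Qset J) n
        rw [add_assoc]
      · rw [MinkAux.Pset_mul hI (MinkAux.nice_pow_mul hI hJ m n), ihm.2]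
        show Pset I + (iterMink (Pset I) m + iterMink (Pset J) n)
            = (Pset I + iterMink (Pset I) m) + iterMink (Pset J) n
        rw [add_assoc]
  intro m n _
  exact main m n
end
end

section
/- Let I = J₁ ⋯ J_r in R = k[x,y], where J_i is the integral closure of (x^{c_i}, y^{d_i}) for positive integers c_i, d_i, i = 1,...,r, with d₁/c₁ ≥ ⋯ ≥ d_r/c_r, and let s = max{i : d_i/c_i ≥ 1} (s = 0 if d₁/c₁ < 1). Then the minimal number of generators of I is v(I) = Σ_{i=1}^s c_i + Σ_{j=s+1}^r d_j + 1. -/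
open MvPolynomial Pointwise

noncomputable section

namespace Gen

/-- `ceil (D*z / C)` as an `sInf`. -/
def psi (C D z : ℕ) : ℕ := sInf {β : ℕ | D * z ≤ β * C}

variable {C D : ℕ}

lemma psi_mem (hC : 0 < C) (z : ℕ) : D * z ≤ psi C D z * C := by
  have hne : {β : ℕ | D * z ≤ β * C}.Nonempty := ⟨D * z, by simp only [Set.mem_setOf_eq]; exact Nat.le_mul_of_pos_right (D * z) hC⟩
  exact Nat.sInf_mem hne

lemma psi_le {β z : ℕ} (h : D * z ≤ β * C) : psi C D z ≤ β := Nat.sInf_le h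

lemma psi_zero : psi C D 0 = 0 :=
  Nat.eq_zero_of_le_zero (psi_le (by simp))

lemma psi_mono (hC : 0 < C) {z z' : ℕ} (h : z ≤ z') : psi C D z ≤ psi C D z' :=
  psi_le <| le_trans (Nat.mul_le_mul_left _ h) (psi_mem hC z')

lemma psi_self (hC : 0 < C) : psi C D C = D := by
  refine le_antisymm (psi_le (by ring_nf; exact le_rfl)) ?_
  have := psi_mem (D := D) hC C
  exact Nat.le_of_mul_le_mul_right (by linarith [this]) hC

/-- steep case: every step is a strict increase -/
lemma psi_strict (hC : 0 < C) (hCD : C ≤ D) (z : ℕ) : psi C D z < psi C D (z + 1) := by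
  have h1 : 0 < psi C D (z+1) := by
    rcases Nat.eq_zero_or_pos (psi C D (z+1)) with h | h
    · exfalso
      have := psi_mem (D := D) hC (z+1)
      rw [h] at this; simp at this
      omega
    · exact h
  have h2 : psi C D z ≤ psi C D (z+1) - 1 := by
    apply psi_le
    have := psi_mem (D := D) hC (z+1)
    have : D * z + D ≤ psi C D (z+1) * C := by
      calc D * z + D = D * (z+1) := by ring
        _ ≤ _ := this
    have hc : C ≤ D := hCD
    nlinarith [Nat.sub_add_cancel h1]
  omega

/-- shallow case: steps are at most 1 -/
lemma psi_step_le (hC : 0 < C) (hDC : D ≤ C) (z : ℕ) : psi C D (z + 1) ≤ psi C D z + 1 := by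
  apply psi_le
  have := psi_mem (D := D) hC z
  nlinarith

lemma sum_telescope_mono (f : ℕ → ℕ) (hf : ∀ n, f n ≤ f (n+1)) (n : ℕ) :
    ∑ z ∈ Finset.range n, (f (z+1) - f z) = f n - f 0 := by
  induction n with
  | zero => simp
  | succ n ih =>
    rw [Finset.sum_range_succ, ih]
    have h1 : f 0 ≤ f n := by
      clear ih; induction n with
      | zero => exact le_refl _
      | succ n ih2 => exact le_trans ih2 (hf n)
    have h2 := hf n
    omega

lemma psi_descent_count (hC : 0 < C) (hD : 0 < D) :
    ((Finset.range C).filter fun z => psi C D z < psi C D (z+1)).card = min C D := by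
  rcases le_or_gt C D with h | h
  · rw [min_eq_left h]
    rw [Finset.filter_true_of_mem fun z _ => psi_strict hC h z, Finset.card_range]
  · rw [min_eq_right h.le]
    have key : ∀ z, (if psi C D z < psi C D (z+1) then 1 else 0) = psi C D (z+1) - psi C D z := by
      intro z
      have h1 := psi_mono (D := D) hC (Nat.le_succ z)
      have h2 := psi_step_le hC h.le z
      split <;> omega
    rw [Finset.card_filter]
    calc (∑ z ∈ Finset.range C, if psi C D z < psi C D (z+1) then 1 else 0)
        = ∑ z ∈ Finset.range C, (psi C D (z+1) - psi C D z) := by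
          exact Finset.sum_congr rfl fun z _ => key z
      _ = psi C D C - psi C D 0 := sum_telescope_mono _ (fun n => psi_mono hC (Nat.le_succ n)) C
      _ = D := by rw [psi_self hC, psi_zero]; omega



variable {r : ℕ}

/-- Support-function value `H_t = Σ_i min(c_i d_t, d_i c_t)`. -/
def Hmin (c d : Fin r → ℕ) (t : Fin r) : ℕ := ∑ i, min (c i * d t) (d i * c t)

/-- The staircase function of the product ideal. -/
def gS (c d : Fin r → ℕ) (a : ℕ) : ℕ :=
  sInf {b : ℕ | ∀ t, Hmin c d t ≤ a * d t + b * c t}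

/-- partial sums of `c`. -/
def Cp (c : Fin r → ℕ) (t : ℕ) : ℕ := ∑ i ∈ Finset.univ.filter (fun i : Fin r => (i : ℕ) < t), c i

/-- tail sums of `d`. -/
def Dgt (d : Fin r → ℕ) (t : ℕ) : ℕ := ∑ i ∈ Finset.univ.filter (fun i : Fin r => t < (i : ℕ)), d i

/-- decomposability of `(a,b)` as a sum of points above the segments. -/
def Dec (c d : Fin r → ℕ) (a b : ℕ) : Prop :=
  ∃ α β : Fin r → ℕ, (∀ i, c i * d i ≤ α i * d i + β i * c i) ∧ (∑ i, α i) = a ∧ (∑ i, β i) = b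

section Family

variable {c d : Fin r → ℕ}

/-- A point above one segment satisfies all the support-line inequalities for that factor. -/
lemma factor_bound {ci di ct dt α β : ℕ} (hci : 0 < ci)
    (h : ci * di ≤ α * di + β * ci) : min (ci * dt) (di * ct) ≤ α * dt + β * ct := by
  rcases le_or_gt ci α with hca | hca
  · calc min (ci * dt) (di * ct) ≤ ci * dt := min_le_left _ _
      _ ≤ α * dt := Nat.mul_le_mul_right _ hca
      _ ≤ _ := Nat.le_add_right _ _
  · -- α < ci; multiply through by ci
    obtain ⟨γ, rfl⟩ : ∃ γ, ci = α + γ := ⟨ci - α, by omega⟩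
    have hβ : di * γ ≤ β * (α + γ) := by
      have e : (α + γ) * di = α * di + di * γ := by ring
      linarith
    have key : min ((α + γ) * dt) (di * ct) * (α + γ) ≤ (α * dt + β * ct) * (α + γ) := by
      rcases min_cases ((α + γ) * dt) (di * ct) with ⟨hm, hle⟩ | ⟨hm, hlt⟩
      · rw [hm]
        have e1 : (α + γ) * dt * (α + γ) = α * dt * (α + γ) + ((α + γ) * dt) * γ := by ring
        have e2 : ((α + γ) * dt) * γ ≤ (di * ct) * γ := Nat.mul_le_mul_right _ hle
        have e3 : (di * ct) * γ = (di * γ) * ct := by ring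
        have e4 : (di * γ) * ct ≤ (β * (α + γ)) * ct := Nat.mul_le_mul_right _ hβ
        have e5 : (α * dt + β * ct) * (α + γ) = α * dt * (α + γ) + (β * (α + γ)) * ct := by ring
        linarith
      · rw [hm]
        have e1 : di * ct * (α + γ) = α * (di * ct) + (di * γ) * ct := by ring
        have e2 : α * (di * ct) ≤ α * ((α + γ) * dt) := Nat.mul_le_mul_left _ hlt.le
        have e3 : (di * γ) * ct ≤ (β * (α + γ)) * ct := Nat.mul_le_mul_right _ hβ
        have e4 : (α * dt + β * ct) * (α + γ) = α * ((α + γ) * dt) + (β * (α + γ)) * ct := by ring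
        linarith
    exact Nat.le_of_mul_le_mul_right key hci

/-- Easy direction: decomposable points satisfy all support-line inequalities. -/
lemma dec_bound (hc : ∀ i, 0 < c i) {a b : ℕ} (h : Dec c d a b) (t : Fin r) :
    Hmin c d t ≤ a * d t + b * c t := by
  obtain ⟨α, β, hi, ha, hb⟩ := h
  subst ha hb
  rw [Hmin, Finset.sum_mul, Finset.sum_mul, ← Finset.sum_add_distrib]
  exact Finset.sum_le_sum fun i _ => factor_bound (hc i) (hi i)

lemma gS_nonempty (hc : ∀ i, 0 < c i) (a : ℕ) :
    {b : ℕ | ∀ t, Hmin c d t ≤ a * d t + b * c t}.Nonempty := by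
  refine ⟨∑ i, d i, fun t => ?_⟩
  calc Hmin c d t ≤ ∑ i, d i * c t := Finset.sum_le_sum fun i _ => min_le_right _ _
    _ = (∑ i, d i) * c t := by rw [Finset.sum_mul]
    _ ≤ _ := Nat.le_add_left _ _

lemma gS_spec (hc : ∀ i, 0 < c i) (a : ℕ) (t : Fin r) :
    Hmin c d t ≤ a * d t + gS c d a * c t := Nat.sInf_mem (gS_nonempty hc a) t

lemma gS_le {a b : ℕ} (h : ∀ t, Hmin c d t ≤ a * d t + b * c t) : gS c d a ≤ b := Nat.sInf_le h

lemma gS_anti (hc : ∀ i, 0 < c i) {a a' : ℕ} (h : a ≤ a') : gS c d a' ≤ gS c d a :=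
  gS_le fun t => le_trans (gS_spec hc a t) (by have := Nat.mul_le_mul_right (d t) h; omega)

lemma gS_le_iff (hc : ∀ i, 0 < c i) {a b : ℕ} :
    gS c d a ≤ b ↔ ∀ t, Hmin c d t ≤ a * d t + b * c t := by
  constructor
  · intro h t
    have := gS_spec (d := d) hc a t
    have h2 : gS c d a * c t ≤ b * c t := Nat.mul_le_mul_right _ h
    omega
  · exact gS_le

lemma Cp_zero : Cp c 0 = 0 := by simp [Cp]

lemma Cp_mono {t t' : ℕ} (h : t ≤ t') : Cp c t ≤ Cp c t' := by
  apply Finset.sum_le_sum_of_subset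
  intro i hi
  simp only [Finset.mem_filter, Finset.mem_univ, true_and] at hi ⊢
  omega

lemma Cp_succ (t : Fin r) : Cp c ((t : ℕ) + 1) = Cp c t + c t := by
  rw [Cp, Cp]
  have : (Finset.univ.filter fun i : Fin r => (i : ℕ) < (t : ℕ) + 1)
      = insert t (Finset.univ.filter fun i : Fin r => (i : ℕ) < (t : ℕ)) := by
    ext i
    simp only [Finset.mem_filter, Finset.mem_univ, true_and, Finset.mem_insert]
    constructor
    · intro h
      rcases Nat.lt_succ_iff_lt_or_eq.1 h with h | h
      · exact Or.inr h
      · exact Or.inl (Fin.ext h)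
    · rintro (rfl | h)
      · omega
      · omega
  rw [this, Finset.sum_insert (by simp)]
  ring

lemma Cp_top (t : ℕ) (h : r ≤ t) : Cp c t = ∑ i, c i := by
  rw [Cp]
  congr 1
  rw [Finset.filter_true_of_mem]
  intro i _
  exact lt_of_lt_of_le i.isLt h

lemma Dgt_top (t : ℕ) (h : r ≤ t + 1) : Dgt d t = 0 := by
  rw [Dgt, Finset.sum_eq_zero_iff]
  intro i hi
  simp only [Finset.mem_filter] at hi
  omega

end Family


section Sorted

variable {c d : Fin r → ℕ}

/-- `H_t = d_t·Cp(t+1) + c_t·Dgt(t)` under the slope-sorting assumption. -/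
lemma Hmin_eq (hsort : ∀ i j : Fin r, i ≤ j → d j * c i ≤ d i * c j) (t : Fin r) :
    Hmin c d t = d t * Cp c ((t : ℕ) + 1) + c t * Dgt d (t : ℕ) := by
  rw [Hmin, ← Finset.sum_filter_add_sum_filter_not Finset.univ (fun i : Fin r => (i : ℕ) < (t : ℕ) + 1)]
  congr 1
  · rw [Cp, Finset.mul_sum]
    apply Finset.sum_congr rfl
    intro i hi
    simp only [Finset.mem_filter, Finset.mem_univ, true_and] at hi
    have h := hsort i t (by omega)
    rw [min_eq_left (by rw [mul_comm (c i)]; exact h), mul_comm]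
  · rw [Dgt, Finset.mul_sum]
    rw [Finset.sum_congr rfl (g := fun i => d i * c t) ?_]
    · congr 1
      · apply Finset.filter_congr
        intro i _
        simp only [not_lt, eq_iff_iff]
        omega
      · ext i; rw [mul_comm]
    · intro i hi
      simp only [Finset.mem_filter, Finset.mem_univ, true_and, not_lt] at hi
      have h := hsort t i (by omega)
      exact min_eq_right (h.trans_eq (mul_comm _ _))

end Sorted

/-- Hard direction: points satisfying all the support-line inequalities decompose. -/
lemma dec_of_bounds : ∀ {r : ℕ} (c d : Fin (r + 1) → ℕ), (∀ i, 0 < c i) → (∀ i, 0 < d i) →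
    (∀ i j : Fin (r + 1), i ≤ j → d j * c i ≤ d i * c j) → ∀ a b : ℕ,
    (∀ t, Hmin c d t ≤ a * d t + b * c t) → Dec c d a b := by
  intro r
  induction r with
  | zero =>
    intro c d hc hd hsort a b hab
    refine ⟨fun _ => a, fun _ => b, ?_, by simp, by simp⟩
    intro i
    have h0 := hab 0
    have : Hmin c d 0 = c 0 * d 0 := by
      rw [Hmin]
      simp [min_eq_left (le_of_eq (mul_comm _ _))]
    rw [Fin.fin_one_eq_zero i]
    rw [this] at h0
    simpa using h0
  | succ r ih =>
    intro c d hc hd hsort a b hab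
    set c' : Fin (r + 1) → ℕ := fun i => c i.succ with hc'
    set d' : Fin (r + 1) → ℕ := fun i => d i.succ with hd'
    have hHsucc : ∀ t : Fin (r + 1),
        Hmin c d t.succ = c 0 * d t.succ + Hmin c' d' t := by
      intro t
      rw [Hmin, Fin.sum_univ_succ, Hmin]
      congr 1
      rw [min_eq_left (by rw [mul_comm (c 0)]; exact hsort 0 t.succ (Fin.zero_le _))]
    rcases le_or_gt (c 0) a with hca | hca
    · obtain ⟨a₂, rfl⟩ : ∃ a₂, a = c 0 + a₂ := ⟨a - c 0, by omega⟩
      obtain ⟨α', β', hcond, hSa, hSb⟩ :=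
        ih c' d' (fun i => hc i.succ) (fun i => hd i.succ)
          (fun i j hij => hsort i.succ j.succ (by simpa using hij)) a₂ b
          (by
            intro t
            have h := hab t.succ
            rw [hHsucc t] at h
            have e : (c 0 + a₂) * d t.succ = c 0 * d t.succ + a₂ * d t.succ := by ring
            rw [e] at h
            simpa [c', d'] using (by omega : Hmin c' d' t ≤ a₂ * d t.succ + b * c t.succ))
      refine ⟨Fin.cons (c 0) α', Fin.cons 0 β', ?_, ?_, ?_⟩
      · intro i
        refine Fin.cases ?_ ?_ i
        · simp
        · intro j
          simpa using hcond j
      · rw [Fin.sum_univ_succ]; simpa using hSa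
      · rw [Fin.sum_univ_succ]; simpa using hSb
    · -- a < c 0 : put everything on the first factor
      set Dt : ℕ := ∑ i : Fin (r + 1), d i.succ with hDt
      have hH0 : Hmin c d 0 = c 0 * d 0 + Dt * c 0 := by
        rw [Hmin, Fin.sum_univ_succ]
        congr 1
        · exact min_eq_left (le_of_eq (mul_comm _ _))
        · rw [hDt, Finset.sum_mul]
          apply Finset.sum_congr rfl
          intro i _
          refine min_eq_right ?_
          have := hsort 0 i.succ (Fin.zero_le _)
          exact this.trans_eq (mul_comm _ _)
      have h0 := hab 0
      rw [hH0] at h0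
      have hbDt : Dt ≤ b := by
        have h1 : a * d 0 + d 0 ≤ c 0 * d 0 := by
          have : (a + 1) * d 0 ≤ c 0 * d 0 := Nat.mul_le_mul_right _ (by omega)
          linarith [this]
        have h2 : Dt * c 0 ≤ b * c 0 := by omega
        exact Nat.le_of_mul_le_mul_right h2 (hc 0)
      obtain ⟨b₂, rfl⟩ : ∃ b₂, b = Dt + b₂ := ⟨b - Dt, by omega⟩
      refine ⟨Fin.cons a 0, Fin.cons b₂ (fun i => d i.succ), ?_, ?_, ?_⟩
      · intro i
        refine Fin.cases ?_ ?_ i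
        · simp only [Fin.cons_zero]
          have e : (Dt + b₂) * c 0 = Dt * c 0 + b₂ * c 0 := by ring
          rw [e] at h0
          omega
        · intro j
          simp only [Fin.cons_succ, Pi.zero_apply, zero_mul, zero_add, mul_comm]
          exact le_rfl
      · rw [Fin.sum_univ_succ]; simp
      · rw [Fin.sum_univ_succ]; simp [hDt]; omega


section Seg

variable {r : ℕ} {c d : Fin (r + 1) → ℕ}
variable (hc : ∀ i, 0 < c i) (hd : ∀ i, 0 < d i)
variable (hsort : ∀ i j : Fin (r + 1), i ≤ j → d j * c i ≤ d i * c j)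

include hc hd hsort in
/-- The staircase function on the `t`-th segment. -/
lemma gS_segment (t : Fin (r + 1)) {a : ℕ} (h1 : Cp c (t : ℕ) ≤ a) (h2 : a ≤ Cp c ((t : ℕ) + 1)) :
    gS c d a = Dgt d (t : ℕ) + psi (c t) (d t) (Cp c ((t : ℕ) + 1) - a) := by
  set z := Cp c ((t : ℕ) + 1) - a with hz
  have hzz : Cp c ((t : ℕ) + 1) = a + z := by omega
  have hzc : z ≤ c t := by
    have := Cp_succ (c := c) t
    omega
  apply le_antisymm
  · -- upper bound: exhibit a decomposition
    apply gS_le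
    apply dec_bound hc
    refine ⟨fun i => if (i : ℕ) < (t : ℕ) then c i else if i = t then a - Cp c (t : ℕ) else 0,
      fun i => if i = t then psi (c t) (d t) z else if (t : ℕ) < (i : ℕ) then d i else 0,
      ?_, ?_, ?_⟩
    · intro i
      rcases lt_trichotomy ((i : ℕ)) ((t : ℕ)) with hit | hit | hit
      · have hne : i ≠ t := fun h => by simp [h] at hit
        simp only [if_pos hit, if_neg hne, if_neg (by omega : ¬ (t : ℕ) < (i : ℕ))]
        simp
      · have heq : i = t := Fin.ext hit
        subst heq
        simp only [lt_self_iff_false, if_false, eq_self_iff_true, if_true]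
        have hw : a - Cp c (i : ℕ) = c i - z := by
          have := Cp_succ (c := c) i
          omega
        rw [hw]
        have hpsi := psi_mem (C := c i) (D := d i) (hc i) z
        have e : (c i - z) * d i + z * d i = c i * d i := by
          rw [← Nat.add_mul]
          congr 1
          omega
        have : z * d i ≤ psi (c i) (d i) z * c i := by
          calc z * d i = d i * z := mul_comm _ _
            _ ≤ _ := hpsi
        omega
      · have hne : i ≠ t := fun h => by simp [h] at hit
        simp only [if_neg (by omega : ¬ (i : ℕ) < (t : ℕ)), if_neg hne, if_pos hit]
        simp [mul_comm]
    · rw [← Finset.sum_filter_add_sum_filter_not Finset.univ (fun i : Fin (r+1) => (i : ℕ) < (t : ℕ))]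
      have e1 : ∑ i ∈ Finset.univ.filter (fun i : Fin (r+1) => (i : ℕ) < (t : ℕ)),
          (if (i : ℕ) < (t : ℕ) then c i else if i = t then a - Cp c (t : ℕ) else 0) = Cp c (t : ℕ) := by
        rw [Cp]
        apply Finset.sum_congr rfl
        intro i hi
        simp only [Finset.mem_filter, Finset.mem_univ, true_and] at hi
        rw [if_pos hi]
      have e2 : ∑ i ∈ Finset.univ.filter (fun i : Fin (r+1) => ¬ (i : ℕ) < (t : ℕ)),
          (if (i : ℕ) < (t : ℕ) then c i else if i = t then a - Cp c (t : ℕ) else 0)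
          = a - Cp c (t : ℕ) := by
        rw [Finset.sum_congr rfl (g := fun i => if i = t then a - Cp c (t : ℕ) else 0) ?_]
        · rw [Finset.sum_ite_eq' _ t]
          simp
        · intro i hi
          simp only [Finset.mem_filter, Finset.mem_univ, true_and] at hi
          rw [if_neg hi]
      rw [e1, e2]
      omega
    · rw [← Finset.sum_filter_add_sum_filter_not Finset.univ (fun i : Fin (r+1) => i = t)]
      have e1 : ∑ i ∈ Finset.univ.filter (fun i : Fin (r+1) => i = t),
          (if i = t then psi (c t) (d t) z else if (t : ℕ) < (i : ℕ) then d i else 0)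
          = psi (c t) (d t) z := by
        rw [Finset.filter_eq']
        simp
      have e2 : ∑ i ∈ Finset.univ.filter (fun i : Fin (r+1) => ¬ i = t),
          (if i = t then psi (c t) (d t) z else if (t : ℕ) < (i : ℕ) then d i else 0)
          = Dgt d (t : ℕ) := by
        rw [Finset.sum_filter, Dgt, Finset.sum_filter]
        apply Finset.sum_congr rfl
        intro i _
        by_cases hit : i = t
        · subst hit; simp
        · simp [hit]
      rw [e1, e2]
      ring
  · -- lower bound from the t-th support line
    have hspec := gS_spec (d := d) hc a t
    rw [Hmin_eq hsort t, hzz] at hspec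
    have h3 : d t * z + c t * Dgt d (t : ℕ) ≤ gS c d a * c t := by
      have e : d t * (a + z) = a * d t + d t * z := by ring
      rw [e] at hspec
      omega
    have hgD : Dgt d (t : ℕ) ≤ gS c d a := by
      have h5 : c t * Dgt d (t : ℕ) ≤ gS c d a * c t := by omega
      rw [mul_comm (c t)] at h5
      exact Nat.le_of_mul_le_mul_right h5 (hc t)
    have h4 : d t * z ≤ (gS c d a - Dgt d (t : ℕ)) * c t := by
      rw [Nat.sub_mul]
      have e3 : c t * Dgt d (t : ℕ) = Dgt d (t : ℕ) * c t := mul_comm _ _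
      omega
    have := psi_le (C := c t) h4
    omega

include hc hd hsort in
/-- Counting strict descents of `gS` on the `t`-th segment. -/
lemma seg_descent_count (t : Fin (r + 1)) :
    ((Finset.Icc (Cp c (t : ℕ) + 1) (Cp c ((t : ℕ) + 1))).filter
      (fun a => gS c d a < gS c d (a - 1))).card = min (c t) (d t) := by
  rw [← psi_descent_count (C := c t) (D := d t) (hc t) (hd t)]
  apply Finset.card_bij' (fun a _ => Cp c ((t : ℕ) + 1) - a) (fun z _ => Cp c ((t : ℕ) + 1) - z)
  · intro a ha
    simp only [Finset.mem_filter, Finset.mem_Icc] at ha ⊢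
    obtain ⟨⟨ha1, ha2⟩, hdesc⟩ := ha
    have hCs := Cp_succ (c := c) t
    constructor
    · rw [Finset.mem_range]; omega
    · have e1 : gS c d a = Dgt d (t : ℕ) + psi (c t) (d t) (Cp c ((t : ℕ) + 1) - a) :=
        gS_segment hc hd hsort t (by omega) ha2
      have e2 : gS c d (a - 1) = Dgt d (t : ℕ) + psi (c t) (d t) (Cp c ((t : ℕ) + 1) - (a - 1)) :=
        gS_segment hc hd hsort t (by omega) (by omega)
      have e3 : Cp c ((t : ℕ) + 1) - (a - 1) = (Cp c ((t : ℕ) + 1) - a) + 1 := by omega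
      rw [e1, e2, e3] at hdesc
      omega
  · intro z hz
    simp only [Finset.mem_filter, Finset.mem_range] at hz
    obtain ⟨hz1, hdesc⟩ := hz
    have hCs := Cp_succ (c := c) t
    simp only [Finset.mem_filter, Finset.mem_Icc]
    refine ⟨⟨by omega, by omega⟩, ?_⟩
    set a := Cp c ((t : ℕ) + 1) - z with haz
    have e1 : gS c d a = Dgt d (t : ℕ) + psi (c t) (d t) z := by
      rw [gS_segment hc hd hsort t (by omega) (by omega)]
      congr 1
      congr 1
      omega
    have e2 : gS c d (a - 1) = Dgt d (t : ℕ) + psi (c t) (d t) (z + 1) := by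
      rw [gS_segment hc hd hsort t (by omega) (by omega)]
      congr 1
      congr 1
      omega
    rw [e1, e2]
    omega
  · intro a ha
    simp only [Finset.mem_filter, Finset.mem_Icc] at ha
    omega
  · intro z hz
    simp only [Finset.mem_filter, Finset.mem_range] at hz
    have hCs := Cp_succ (c := c) t
    omega

include hc hd hsort in
/-- Total number of strict descents. -/
lemma total_descent_count :
    ((Finset.Icc 1 (Cp c (r + 1))).filter (fun a => gS c d a < gS c d (a - 1))).card
      = ∑ i, min (c i) (d i) := by
  have hcover : Finset.Icc 1 (Cp c (r + 1))
      = Finset.univ.biUnion (fun t : Fin (r + 1) => Finset.Icc (Cp c (t : ℕ) + 1) (Cp c ((t : ℕ) + 1))) := by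
    ext a
    simp only [Finset.mem_Icc, Finset.mem_biUnion, Finset.mem_univ, true_and]
    constructor
    · rintro ⟨h1, h2⟩
      -- take the largest t with Cp t < a
      obtain ⟨t, ht, hmax⟩ := Finset.exists_max_image
        (Finset.univ.filter fun t : Fin (r + 1) => Cp c (t : ℕ) < a) (fun t => (t : ℕ))
        ⟨0, by simp [Cp_zero]; omega⟩
      simp only [Finset.mem_filter, Finset.mem_univ, true_and] at ht
      refine ⟨t, by omega, ?_⟩
      by_contra hcon
      push_neg at hcon
      rcases Nat.lt_or_ge ((t : ℕ) + 1) (r + 1) with hlt | hge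
      · have := hmax ⟨(t : ℕ) + 1, hlt⟩ (by
          simp only [Finset.mem_filter, Finset.mem_univ, true_and]
          exact lt_of_lt_of_le hcon le_rfl)
        simp at this
      · have h6 : Cp c (r + 1) ≤ Cp c ((t : ℕ) + 1) := Cp_mono hge
        omega
    · rintro ⟨t, h1, h2⟩
      have h0 : Cp c ((t : ℕ) + 1) ≤ Cp c (r + 1) := Cp_mono (by omega)
      omega
  rw [hcover, Finset.filter_biUnion, Finset.card_biUnion, Finset.sum_congr rfl
    (fun t _ => seg_descent_count hc hd hsort t)]
  intro t _ t' _ htt'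
  apply Finset.disjoint_filter_filter
  rw [Finset.disjoint_left]
  intro a ha ha'
  simp only [Finset.mem_Icc] at ha ha'
  rcases Fin.lt_or_lt_of_ne htt' with h | h
  · have : Cp c ((t : ℕ) + 1) ≤ Cp c (t' : ℕ) := Cp_mono (by omega)
    omega
  · have : Cp c ((t' : ℕ) + 1) ≤ Cp c (t : ℕ) := Cp_mono (by omega)
    omega

end Seg



/-! ### Polynomial layer -/

section Poly

variable {k : Type*} [Field k]

/-- The exponent vector `(a, b)`. -/
def ee (a b : ℕ) : Fin 2 →₀ ℕ := Finsupp.single 0 a + Finsupp.single 1 b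

@[simp] lemma ee_apply0 (a b : ℕ) : ee a b 0 = a := by
  simp [ee, Finsupp.single_apply]

@[simp] lemma ee_apply1 (a b : ℕ) : ee a b 1 = b := by
  simp [ee, Finsupp.single_apply]

lemma fin2_ext {u v : Fin 2 →₀ ℕ} (h0 : u 0 = v 0) (h1 : u 1 = v 1) : u = v := by
  ext i
  have : i = 0 ∨ i = 1 := by omega
  rcases this with rfl | rfl <;> assumption

lemma eq_ee (u : Fin 2 →₀ ℕ) : u = ee (u 0) (u 1) := fin2_ext (by simp) (by simp)

lemma ee_le_iff {a b : ℕ} {u : Fin 2 →₀ ℕ} : ee a b ≤ u ↔ a ≤ u 0 ∧ b ≤ u 1 := by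
  rw [Finsupp.le_def]
  constructor
  · intro h; exact ⟨by simpa using h 0, by simpa using h 1⟩
  · rintro ⟨h0, h1⟩ i
    have : i = 0 ∨ i = 1 := by omega
    rcases this with rfl | rfl <;> simpa

lemma le_iff_2 {u v : Fin 2 →₀ ℕ} : u ≤ v ↔ u 0 ≤ v 0 ∧ u 1 ≤ v 1 := by
  conv_lhs => rw [eq_ee u]
  rw [ee_le_iff]

/-- The monomial ideal with exponent set `S`. -/
def MIdeal (k : Type*) [Field k] (S : Set (Fin 2 →₀ ℕ)) : Ideal (MvPolynomial (Fin 2) k) :=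
  Ideal.span ((fun s => MvPolynomial.monomial s (1 : k)) '' S)

lemma mem_MIdeal_iff {S : Set (Fin 2 →₀ ℕ)} {f : MvPolynomial (Fin 2) k} :
    f ∈ MIdeal k S ↔ ∀ u ∈ f.support, ∃ s ∈ S, s ≤ u :=
  MvPolynomial.mem_ideal_span_monomial_image

lemma monomial_mem_MIdeal {S : Set (Fin 2 →₀ ℕ)} {u : Fin 2 →₀ ℕ} (hu : u ∈ S) :
    (MvPolynomial.monomial u (1 : k)) ∈ MIdeal k S :=
  Ideal.subset_span (Set.mem_image_of_mem _ hu)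

/-- the weight of an exponent vector: `x ↦ dd`, `y ↦ cc`. -/
def wt (cc dd : ℕ) (u : Fin 2 →₀ ℕ) : ℕ := u 0 * dd + u 1 * cc

lemma wt_mono {cc dd : ℕ} {u v : Fin 2 →₀ ℕ} (h : u ≤ v) : wt cc dd u ≤ wt cc dd v := by
  rw [le_iff_2] at h
  exact Nat.add_le_add (Nat.mul_le_mul_right _ h.1) (Nat.mul_le_mul_right _ h.2)

lemma wt_add (cc dd : ℕ) (u v : Fin 2 →₀ ℕ) :
    wt cc dd (u + v) = wt cc dd u + wt cc dd v := by
  simp [wt, Finsupp.add_apply]; ring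

lemma wt_smul (cc dd n : ℕ) (u : Fin 2 →₀ ℕ) : wt cc dd (n • u) = n * wt cc dd u := by
  simp [wt, Finsupp.smul_apply]; ring

/-- The ideal of polynomials all of whose monomials have weight at least `M`. -/
def Wid (k : Type*) [Field k] (cc dd M : ℕ) : Ideal (MvPolynomial (Fin 2) k) :=
  MIdeal k {u | M ≤ wt cc dd u}

lemma mem_Wid_iff {cc dd M : ℕ} {f : MvPolynomial (Fin 2) k} :
    f ∈ Wid k cc dd M ↔ ∀ u ∈ f.support, M ≤ wt cc dd u := by
  rw [Wid, mem_MIdeal_iff]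
  constructor
  · intro h u hu
    obtain ⟨s, hs, hle⟩ := h u hu
    exact le_trans hs (wt_mono hle)
  · intro h u hu
    exact ⟨u, h u hu, le_rfl⟩

lemma Wid_mul {cc dd M M' : ℕ} {f g : MvPolynomial (Fin 2) k}
    (hf : f ∈ Wid k cc dd M) (hg : g ∈ Wid k cc dd M') : f * g ∈ Wid k cc dd (M + M') := by
  rw [mem_Wid_iff] at *
  intro u hu
  obtain ⟨p, hp, q, hq, rfl⟩ := Finset.mem_add.1 (MvPolynomial.support_mul f g hu)
  rw [wt_add]
  exact Nat.add_le_add (hf p hp) (hg q hq)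

lemma Wid_anti {cc dd M M' : ℕ} (h : M' ≤ M) : Wid k cc dd M ≤ Wid k cc dd M' := by
  intro f hf
  rw [mem_Wid_iff] at *
  exact fun u hu => le_trans h (hf u hu)

lemma span_le_Wid {cI dI : ℕ} :
    Ideal.span {(MvPolynomial.X 0 : MvPolynomial (Fin 2) k) ^ cI, MvPolynomial.X 1 ^ dI}
      ≤ Wid k cI dI (cI * dI) := by
  classical
  rw [Ideal.span_le]
  intro f hf
  rcases hf with rfl | hf
  · rw [SetLike.mem_coe, MvPolynomial.X_pow_eq_monomial, mem_Wid_iff]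
    intro u hu
    rw [MvPolynomial.support_monomial, if_neg (one_ne_zero)] at hu
    rw [Finset.mem_singleton] at hu
    subst hu
    simp [wt, Finsupp.single_apply]
  · rw [Set.mem_singleton_iff] at hf
    subst hf
    rw [SetLike.mem_coe, MvPolynomial.X_pow_eq_monomial, mem_Wid_iff]
    intro u hu
    rw [MvPolynomial.support_monomial, if_neg (one_ne_zero)] at hu
    rw [Finset.mem_singleton] at hu
    subst hu
    simp [wt, Finsupp.single_apply, mul_comm]

lemma pow_le_Wid {cI dI : ℕ} (j : ℕ) :
    (Ideal.span {(MvPolynomial.X 0 : MvPolynomial (Fin 2) k) ^ cI, MvPolynomial.X 1 ^ dI}) ^ j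
      ≤ Wid k cI dI (j * (cI * dI)) := by
  induction j with
  | zero =>
    simp only [pow_zero, zero_mul, Ideal.one_eq_top]
    intro f _
    rw [mem_Wid_iff]
    intro u _
    exact Nat.zero_le _
  | succ j ih =>
    rw [pow_succ]
    refine le_trans (Ideal.mul_le.2 ?_) le_rfl
    intro p hp q hq
    have := Wid_mul (ih hp) (span_le_Wid hq)
    have e : j * (cI * dI) + cI * dI = (j + 1) * (cI * dI) := by ring
    rw [e] at this
    exact this

end Poly


section Integral

variable {k : Type*} [Field k]

open MvPolynomial

/-- Monomials above the segment are integral over `(x^c, y^d)`. -/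
lemma monomial_isIntegral {cI dI : ℕ} (hc : 0 < cI) (hd : 0 < dI) {u : Fin 2 →₀ ℕ}
    (hu : cI * dI ≤ wt cI dI u) :
    IsIntegralOverIdeal (Ideal.span {(X 0 : MvPolynomial (Fin 2) k) ^ cI, X 1 ^ dI})
      (monomial u (1 : k)) := by
  set I := Ideal.span {(X 0 : MvPolynomial (Fin 2) k) ^ cI, X 1 ^ dI} with hI
  set n := cI * dI with hn
  have hn0 : 0 < n := Nat.mul_pos hc hd
  set f : MvPolynomial (Fin 2) k := monomial u 1 with hf
  have hfn : f ^ n ∈ I ^ n := by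
    have hx : (X 0 : MvPolynomial (Fin 2) k) ^ cI ∈ I := Ideal.subset_span (by simp)
    have hy : (X 1 : MvPolynomial (Fin 2) k) ^ dI ∈ I := Ideal.subset_span (by simp)
    have h1 : ((X 0 : MvPolynomial (Fin 2) k) ^ cI) ^ (u 0 * dI) * ((X 1) ^ dI) ^ (u 1 * cI)
        ∈ I ^ (u 0 * dI) * I ^ (u 1 * cI) :=
      Ideal.mul_mem_mul (Ideal.pow_mem_pow hx _) (Ideal.pow_mem_pow hy _)
    rw [← pow_add] at h1
    have h2 : I ^ (u 0 * dI + u 1 * cI) ≤ I ^ n := Ideal.pow_le_pow_right hu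
    have heq : ((X 0 : MvPolynomial (Fin 2) k) ^ cI) ^ (u 0 * dI) * ((X 1) ^ dI) ^ (u 1 * cI)
        = f ^ n := by
      rw [hf, monomial_pow, one_pow, ← pow_mul, ← pow_mul, X_pow_eq_monomial,
        X_pow_eq_monomial, monomial_mul, one_mul]
      have harg : (Finsupp.single (0 : Fin 2) (cI * (u 0 * dI)) + Finsupp.single 1 (dI * (u 1 * cI)))
          = n • u := by
        apply fin2_ext
        · simp [Finsupp.single_apply, Finsupp.smul_apply, hn]
          ring
        · simp [Finsupp.single_apply, Finsupp.smul_apply, hn]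
          ring
      rw [harg]
    rw [heq] at h1
    exact h2 h1
  refine ⟨n, hn0, fun j => if j = n then -(f ^ n) else 0, ?_, ?_⟩
  · intro j hj
    by_cases h : j = n
    · subst h
      simp only [if_pos rfl]
      exact neg_mem hfn
    · simp only [if_neg h]
      exact zero_mem _
  · have e : ∀ j ∈ Finset.Icc 1 n, (if j = n then -(f ^ n) else 0) * f ^ (n - j)
        = if j = n then -(f ^ n) * f ^ (n - j) else 0 := by
      intro j _
      split <;> simp
    rw [Finset.sum_congr rfl e, Finset.sum_ite_eq' (Finset.Icc 1 n) n
      (fun j => -(f ^ n) * f ^ (n - j))]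
    rw [if_pos (by simp [Finset.mem_Icc]; omega)]
    simp

/-- The extremal-coefficient lemma for powers. -/
lemma pow_coeff_extremal {cc dd : ℕ} (hcc : 0 < cc) {f : MvPolynomial (Fin 2) k}
    {u : Fin 2 →₀ ℕ} (hu : u ∈ f.support)
    (hmin : ∀ v ∈ f.support, wt cc dd u ≤ wt cc dd v)
    (hmax : ∀ v ∈ f.support, wt cc dd v = wt cc dd u → v 0 ≤ u 0) (n : ℕ) :
    MvPolynomial.coeff (n • u) (f ^ n) = (MvPolynomial.coeff u f) ^ n ∧
      ∀ q ∈ (f ^ n).support, n * wt cc dd u ≤ wt cc dd q ∧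
        (wt cc dd q = n * wt cc dd u → q 0 ≤ n * u 0) := by
  classical
  induction n with
  | zero =>
    constructor
    · simp
    · intro q hq
      rw [pow_zero] at hq
      have h1 : (1 : MvPolynomial (Fin 2) k) = monomial 0 1 := by
        rw [monomial_zero']; simp
      rw [h1, support_monomial, if_neg one_ne_zero, Finset.mem_singleton] at hq
      subst hq
      simp [wt]
  | succ n ih =>
    obtain ⟨ihc, ihs⟩ := ih
    have hsupp : (f ^ (n + 1)).support ⊆ (f ^ n).support + f.support := by
      rw [pow_succ]
      exact support_mul _ _
    constructor
    · rw [pow_succ, coeff_mul]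
      rw [Finset.sum_eq_single (n • u, u)]
      · rw [ihc, pow_succ]
      · rintro ⟨p, v⟩ hpv hne
        rw [Finset.HasAntidiagonal.mem_antidiagonal] at hpv
        by_contra hcon
        have hp : p ∈ (f ^ n).support := by
          rw [mem_support_iff]; intro h; rw [h, zero_mul] at hcon; exact hcon rfl
        have hv : v ∈ f.support := by
          rw [mem_support_iff]; intro h; rw [h, mul_zero] at hcon; exact hcon rfl
        have h1 := (ihs p hp).1
        have h2 := hmin v hv
        have h3 : wt cc dd p + wt cc dd v = n * wt cc dd u + wt cc dd u := by
          rw [← wt_add, hpv, wt_smul, Nat.succ_mul]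
        have h4 : wt cc dd p = n * wt cc dd u := by omega
        have h5 : wt cc dd v = wt cc dd u := by omega
        have h6 := (ihs p hp).2 h4
        have h7 := hmax v hv h5
        have h8 : p 0 + v 0 = n * u 0 + u 0 := by
          have h8' := congrArg (fun w => w 0) hpv
          simp only [Finsupp.add_apply, Finsupp.smul_apply, smul_eq_mul] at h8'
          rw [Nat.succ_mul] at h8'
          exact h8'
        have h9 : v 0 = u 0 := by omega
        have h10 : v = u := by
          apply fin2_ext h9
          have e1 : v 0 * dd + v 1 * cc = u 0 * dd + u 1 * cc := h5
          rw [h9] at e1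
          have : v 1 * cc = u 1 * cc := by omega
          exact Nat.eq_of_mul_eq_mul_right hcc this
        have h11 : p = n • u := by
          have : p + v = n • u + u := by rw [hpv, succ_nsmul]
          rw [h10] at this
          exact add_right_cancel this
        exact hne (by rw [h10, h11])
      · intro h
        exfalso
        apply h
        rw [Finset.HasAntidiagonal.mem_antidiagonal, succ_nsmul]
    · intro q hq
      obtain ⟨p, hp, v, hv, rfl⟩ := Finset.mem_add.1 (hsupp hq)
      have h1 := (ihs p hp).1
      have h2 := hmin v hv
      rw [wt_add, Nat.succ_mul]
      constructor
      · omega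
      · intro he
        have h4 : wt cc dd p = n * wt cc dd u := by omega
        have h5 : wt cc dd v = wt cc dd u := by omega
        have h6 := (ihs p hp).2 h4
        have h7 := hmax v hv h5
        have e2 : (p + v) 0 = p 0 + v 0 := by simp [Finsupp.add_apply]
        rw [e2, Nat.succ_mul]
        omega

/-- Valuation bound: integral elements lie in the monomial ideal. -/
lemma integral_mem_Wid {cI dI : ℕ} (hc : 0 < cI) (hd : 0 < dI) {f : MvPolynomial (Fin 2) k}
    (hf : IsIntegralOverIdeal (Ideal.span {(X 0 : MvPolynomial (Fin 2) k) ^ cI, X 1 ^ dI}) f) :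
    f ∈ Wid k cI dI (cI * dI) := by
  classical
  rw [mem_Wid_iff]
  by_contra hcon
  push_neg at hcon
  obtain ⟨ustar, hustar, hwt⟩ := hcon
  -- pick u of minimal weight, maximal first coordinate
  obtain ⟨u₀, hu₀, hu₀min⟩ := Finset.exists_min_image f.support (wt cI dI) ⟨ustar, hustar⟩
  set m := wt cI dI u₀ with hm
  have hmlt : m < cI * dI := lt_of_le_of_lt (hu₀min ustar hustar) hwt
  obtain ⟨u, hu, humax⟩ := Finset.exists_max_image
    (f.support.filter fun v => wt cI dI v = m) (fun v => v 0)
    ⟨u₀, by simp [hm, Finset.mem_filter, hu₀]⟩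
  rw [Finset.mem_filter] at hu
  obtain ⟨huf, huwt⟩ := hu
  obtain ⟨n, hn0, cf, hcf, heq⟩ := hf
  have hext2 : ∀ n' : ℕ, MvPolynomial.coeff (n' • u) (f ^ n') = (MvPolynomial.coeff u f) ^ n' ∧
      ∀ q ∈ (f ^ n').support, n' * wt cI dI u ≤ wt cI dI q ∧
        (wt cI dI q = n' * wt cI dI u → q 0 ≤ n' * u 0) := fun n' =>
    pow_coeff_extremal hc (f := f) (u := u) huf
      (fun v hv => by rw [huwt]; exact hu₀min v hv)
      (fun v hv hwv => humax v (by rw [Finset.mem_filter]; exact ⟨hv, by rw [hwv, huwt]⟩)) n'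
  have hcoeff : MvPolynomial.coeff (n • u) (f ^ n) = (MvPolynomial.coeff u f) ^ n := (hext2 n).1
  have hne : MvPolynomial.coeff (n • u) (f ^ n) ≠ 0 := by
    rw [hcoeff]
    exact pow_ne_zero _ (mem_support_iff.1 huf)
  have hwtsmul : wt cI dI (n • u) = n * m := by rw [wt_smul, huwt]
  have hzero : ∀ j ∈ Finset.Icc 1 n, MvPolynomial.coeff (n • u) (cf j * f ^ (n - j)) = 0 := by
    intro j hj
    rw [Finset.mem_Icc] at hj
    rw [← MvPolynomial.notMem_support_iff]
    intro hmem
    obtain ⟨p, hp, q, hq, hpq⟩ := Finset.mem_add.1 (support_mul _ _ hmem)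
    have hpwt : j * (cI * dI) ≤ wt cI dI p := by
      have hcfj := pow_le_Wid (k := k) (cI := cI) (dI := dI) j (hcf j (by rw [Finset.mem_Icc]; omega))
      exact (mem_Wid_iff.1 hcfj) p hp
    have hqwt : (n - j) * m ≤ wt cI dI q := by
      have := (hext2 (n - j)).2 q hq
      rw [← huwt]
      exact this.1
    have hjm : j * m + j ≤ j * (cI * dI) := by
      calc j * m + j = j * (m + 1) := by ring
        _ ≤ j * (cI * dI) := Nat.mul_le_mul_left _ (by omega)
    have hsum : j * m + (n - j) * m = n * m := by
      rw [← Nat.add_mul]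
      congr 1
      omega
    have : wt cI dI (n • u) = wt cI dI p + wt cI dI q := by rw [← hpq, wt_add]
    omega
  have hfinal := congrArg (MvPolynomial.coeff (n • u)) heq
  rw [MvPolynomial.coeff_add, MvPolynomial.coeff_sum, MvPolynomial.coeff_zero,
    Finset.sum_eq_zero hzero, add_zero] at hfinal
  exact hne hfinal

end Integral


section Product

variable {k : Type*} [Field k]

open MvPolynomial

lemma prod_monomial {ι : Type*} (s : Finset ι) (v : ι → (Fin 2 →₀ ℕ)) :
    (∏ i ∈ s, monomial (v i) (1 : k)) = monomial (∑ i ∈ s, v i) (1 : k) := by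
  classical
  induction s using Finset.cons_induction with
  | empty => simp [MvPolynomial.monomial_zero', map_one]
  | cons a s ha ih =>
    rw [Finset.prod_cons, Finset.sum_cons, ih, monomial_mul, one_mul]

/-- Products of ideals between monomial ideals land in the Minkowski-sum monomial ideal. -/
lemma prod_le_MIdeal : ∀ {r : ℕ} (S : Fin r → Set (Fin 2 →₀ ℕ))
    (J : Fin r → Ideal (MvPolynomial (Fin 2) k)), (∀ i, J i ≤ MIdeal k (S i)) →
    (∏ i, J i) ≤ MIdeal k {u | ∃ v : Fin r → (Fin 2 →₀ ℕ), (∀ i, v i ∈ S i) ∧ ∑ i, v i = u} := by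
  intro r
  induction r with
  | zero =>
    intro S J _
    have h1 : (1 : MvPolynomial (Fin 2) k) ∈ MIdeal k
        {u | ∃ v : Fin 0 → (Fin 2 →₀ ℕ), (∀ i, v i ∈ S i) ∧ ∑ i, v i = u} := by
      have h0 : (0 : Fin 2 →₀ ℕ) ∈ {u | ∃ v : Fin 0 → (Fin 2 →₀ ℕ), (∀ i, v i ∈ S i) ∧ ∑ i, v i = u} :=
        ⟨fun i => i.elim0, fun i => i.elim0, by simp⟩
      have := monomial_mem_MIdeal (k := k) h0
      rwa [MvPolynomial.monomial_zero', map_one] at this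
    intro f _
    rw [show f = f * 1 by ring]
    exact Ideal.mul_mem_left _ f h1
  | succ r ih =>
    intro S J hJS
    rw [Fin.prod_univ_succ]
    refine Ideal.mul_le.2 ?_
    intro f hf g hg
    have hf' := hJS 0 hf
    have hg' := ih (fun i => S i.succ) (fun i => J i.succ) (fun i => hJS i.succ) hg
    rw [mem_MIdeal_iff] at hf' hg' ⊢
    intro u hu
    obtain ⟨p, hp, q, hq, rfl⟩ := Finset.mem_add.1 (support_mul _ _ hu)
    obtain ⟨s0, hs0, hs0le⟩ := hf' p hp
    obtain ⟨sq, hsq, hsqle⟩ := hg' q hq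
    obtain ⟨v', hv', hv'sum⟩ := hsq
    refine ⟨s0 + sq, ⟨Fin.cons s0 v', ?_, ?_⟩, add_le_add hs0le hsqle⟩
    · intro i
      refine Fin.cases ?_ ?_ i
      · simpa using hs0
      · intro j
        simpa using hv' j
    · rw [Fin.sum_univ_succ]
      simp [hv'sum]

variable {r : ℕ} {c d : Fin (r + 1) → ℕ}

/-- The sum-set is the decomposable set. -/
lemma sumset_eq_dec {u : Fin 2 →₀ ℕ} :
    (∃ v : Fin (r + 1) → (Fin 2 →₀ ℕ),
      (∀ i, v i ∈ {w : Fin 2 →₀ ℕ | c i * d i ≤ wt (c i) (d i) w}) ∧ ∑ i, v i = u)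
      ↔ Dec c d (u 0) (u 1) := by
  constructor
  · rintro ⟨v, hv, rfl⟩
    refine ⟨fun i => v i 0, fun i => v i 1, fun i => hv i, ?_, ?_⟩
    · rw [Finsupp.finset_sum_apply]
    · rw [Finsupp.finset_sum_apply]
  · rintro ⟨α, β, hi, ha, hb⟩
    refine ⟨fun i => ee (α i) (β i), fun i => ?_, ?_⟩
    · simpa [wt] using hi i
    · apply fin2_ext
      · rw [Finsupp.finset_sum_apply]
        simpa using ha
      · rw [Finsupp.finset_sum_apply]
        simpa using hb

variable (hc : ∀ i, 0 < c i) (hd : ∀ i, 0 < d i)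
variable (hsort : ∀ i j : Fin (r + 1), i ≤ j → d j * c i ≤ d i * c j)
variable {J : Fin (r + 1) → Ideal (MvPolynomial (Fin 2) k)}
variable (hJ : ∀ i, IsIntegralClosureOfIdeal (J i)
  (Ideal.span {(X 0 : MvPolynomial (Fin 2) k) ^ c i, X 1 ^ d i}))

include hc hd hsort hJ in
/-- The membership characterization of the product ideal. -/
lemma mem_prodJ_iff {f : MvPolynomial (Fin 2) k} :
    f ∈ (∏ i, J i) ↔ ∀ u ∈ f.support, gS c d (u 0) ≤ u 1 := by
  constructor
  · intro hf u hu
    have hle : (∏ i, J i) ≤ MIdeal k {u | ∃ v : Fin (r + 1) → (Fin 2 →₀ ℕ),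
        (∀ i, v i ∈ {w : Fin 2 →₀ ℕ | c i * d i ≤ wt (c i) (d i) w}) ∧ ∑ i, v i = u} := by
      apply prod_le_MIdeal
      intro i g hg
      exact integral_mem_Wid (hc i) (hd i) ((hJ i g).1 hg)
    obtain ⟨s, hs, hsle⟩ := mem_MIdeal_iff.1 (hle hf) u hu
    have hdec : Dec c d (s 0) (s 1) := sumset_eq_dec.1 hs
    rw [le_iff_2] at hsle
    rw [gS_le_iff hc]
    intro t
    calc Hmin c d t ≤ s 0 * d t + s 1 * c t := dec_bound hc hdec t
      _ ≤ u 0 * d t + u 1 * c t :=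
        Nat.add_le_add (Nat.mul_le_mul_right _ hsle.1) (Nat.mul_le_mul_right _ hsle.2)
  · intro hsupp
    have hle : MIdeal k {u : Fin 2 →₀ ℕ | Dec c d (u 0) (u 1)} ≤ ∏ i, J i := by
      rw [MIdeal, Ideal.span_le]
      rintro g ⟨u, hu, rfl⟩
      obtain ⟨α, β, hi, ha, hb⟩ := hu
      have hexp : u = ∑ i, ee (α i) (β i) := by
        apply fin2_ext
        · rw [Finsupp.finset_sum_apply]
          simpa using ha.symm
        · rw [Finsupp.finset_sum_apply]
          simpa using hb.symm
      have hmon : (monomial u (1 : k)) = ∏ i, monomial (ee (α i) (β i)) (1 : k) := by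
        rw [prod_monomial, ← hexp]
      show (monomial u (1 : k)) ∈ ∏ i, J i
      rw [hmon]
      apply Ideal.prod_mem_prod
      intro i _
      exact (hJ i _).2 (monomial_isIntegral (hc i) (hd i) (by simpa [wt] using hi i))
    apply hle
    rw [mem_MIdeal_iff]
    intro u hu
    refine ⟨u, ?_, le_rfl⟩
    have := hsupp u hu
    rw [gS_le_iff hc] at this
    exact dec_of_bounds c d hc hd hsort _ _ this

end Product


section Count

variable {k : Type*} [Field k]

open MvPolynomial

variable {r : ℕ} {c d : Fin (r + 1) → ℕ}
variable (hc : ∀ i, 0 < c i) (hd : ∀ i, 0 < d i)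
variable (hsort : ∀ i j : Fin (r + 1), i ≤ j → d j * c i ≤ d i * c j)
variable {J : Fin (r + 1) → Ideal (MvPolynomial (Fin 2) k)}
variable (hJ : ∀ i, IsIntegralClosureOfIdeal (J i)
  (Ideal.span {(X 0 : MvPolynomial (Fin 2) k) ^ c i, X 1 ^ d i}))

/-- The descent set. -/
def descents (c d : Fin (r + 1) → ℕ) : Finset ℕ :=
  (Finset.Icc 1 (Cp c (r + 1))).filter (fun a => gS c d a < gS c d (a - 1))

/-- index set of minimal generators. -/
def Dset (c d : Fin (r + 1) → ℕ) : Finset ℕ := insert 0 (descents c d)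

include hc in
lemma gS_zero_of_ge {a : ℕ} (h : Cp c (r + 1) ≤ a) : gS c d a = 0 := by
  refine Nat.eq_zero_of_le_zero (gS_le fun t => ?_)
  have h1 : Hmin c d t ≤ (∑ i, c i) * d t := by
    rw [Finset.sum_mul]
    exact Finset.sum_le_sum fun i _ => min_le_left _ _
  have h2 : (∑ i, c i) = Cp c (r + 1) := (Cp_top _ le_rfl).symm
  have h3 : Cp c (r + 1) * d t ≤ a * d t := Nat.mul_le_mul_right _ h
  rw [h2] at h1
  omega

include hc in
lemma gS_const_of_no_descent {x y : ℕ} (hxy : x ≤ y)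
    (hno : ∀ z, x < z → z ≤ y → ¬ (gS c d z < gS c d (z - 1))) : gS c d x = gS c d y := by
  induction y, hxy using Nat.le_induction with
  | base => rfl
  | succ y hy ih =>
    rw [ih (fun z h1 h2 => hno z h1 (by omega))]
    have h1 := gS_anti (d := d) hc (show y ≤ y + 1 by omega)
    have h2 := hno (y + 1) (by omega) le_rfl
    simp only [Nat.add_sub_cancel] at h2
    omega

include hc in
lemma key_minimal {a : ℕ} (ha : a ∈ Dset c d) {w : Fin 2 →₀ ℕ}
    (hw : gS c d (w 0) ≤ w 1) (hle : w ≤ ee a (gS c d a)) : w = ee a (gS c d a) := by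
  rw [le_iff_2, ee_apply0, ee_apply1] at hle
  obtain ⟨h0, h1⟩ := hle
  rcases Nat.lt_or_ge (w 0) a with hlt | hge
  · exfalso
    rw [Dset, Finset.mem_insert] at ha
    rcases ha with rfl | ha
    · omega
    · rw [descents, Finset.mem_filter] at ha
      have h2 : gS c d (a - 1) ≤ gS c d (w 0) := gS_anti hc (by omega)
      omega
  · have h2 : w 0 = a := by omega
    apply fin2_ext
    · simpa using h2
    · rw [h2] at hw
      simp only [ee_apply1]
      omega

include hc hd hsort hJ in
lemma span_gens :
    Ideal.span ((fun a => monomial (ee a (gS c d a)) (1 : k)) '' ↑(Dset c d)) = ∏ i, J i := by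
  classical
  apply le_antisymm
  · rw [Ideal.span_le]
    intro g hg
    obtain ⟨a, _, rfl⟩ := hg
    rw [SetLike.mem_coe, mem_prodJ_iff hc hd hsort hJ]
    intro u hu
    rw [support_monomial, if_neg one_ne_zero, Finset.mem_singleton] at hu
    subst hu
    simp
  · intro f hf
    have hchar := (mem_prodJ_iff hc hd hsort hJ).1 hf
    have hcoe : ((fun a => monomial (ee a (gS c d a)) (1 : k)) '' ↑(Dset c d))
        = (fun s => monomial s (1 : k)) '' ((fun a => ee a (gS c d a)) '' ↑(Dset c d)) := by
      rw [Set.image_image]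
    rw [hcoe, mem_ideal_span_monomial_image]
    intro u hu
    have hne : ((Dset c d).filter (· ≤ u 0)).Nonempty :=
      ⟨0, by simp [Dset]⟩
    set a' := ((Dset c d).filter (· ≤ u 0)).max' hne with ha'
    have ha'mem := ((Dset c d).filter (· ≤ u 0)).max'_mem hne
    rw [Finset.mem_filter] at ha'mem
    obtain ⟨ha'D, ha'le⟩ := ha'mem
    have hconst : gS c d a' = gS c d (u 0) := by
      apply gS_const_of_no_descent hc ha'le
      intro z h1 h2 hdesc
      have hzA : z ≤ Cp c (r + 1) := by
        by_contra hcon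
        have e1 : gS c d z = 0 := gS_zero_of_ge hc (by omega)
        have e2 : gS c d (z - 1) = 0 := gS_zero_of_ge hc (by omega)
        omega
      have hz : z ∈ (Dset c d).filter (· ≤ u 0) := by
        rw [Finset.mem_filter]
        refine ⟨Finset.mem_insert_of_mem ?_, h2.trans ?_⟩
        · rw [descents, Finset.mem_filter, Finset.mem_Icc]
          exact ⟨⟨by omega, hzA⟩, hdesc⟩
        · exact le_rfl
      have := Finset.le_max' _ z hz
      omega
    refine ⟨ee a' (gS c d a'), Set.mem_image_of_mem _ ha'D, ?_⟩
    rw [ee_le_iff]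
    exact ⟨ha'le, by rw [hconst]; exact hchar u hu⟩

include hc hd hsort hJ in
lemma card_lower_bound (G : Finset (MvPolynomial (Fin 2) k))
    (hG : Ideal.span (G : Set (MvPolynomial (Fin 2) k)) = ∏ i, J i) :
    (Dset c d).card ≤ G.card := by
  classical
  set I := ∏ i, J i with hI
  set eeg : ℕ → (Fin 2 →₀ ℕ) := fun a => ee a (gS c d a) with heeg
  set π : MvPolynomial (Fin 2) k →ₗ[k] (↥(Dset c d) → k) :=
    LinearMap.pi (fun a : ↥(Dset c d) => MvPolynomial.lcoeff (R := k) (eeg (a : ℕ))) with hπ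
  have hπapply : ∀ p (a : ↥(Dset c d)), π p a = MvPolynomial.coeff (eeg (a : ℕ)) p :=
    fun p a => rfl
  -- coefficients of elements of 𝔪·I vanish at the minimal exponents
  have mI0 : ∀ h g : MvPolynomial (Fin 2) k, MvPolynomial.coeff 0 h = 0 → g ∈ I →
      ∀ a ∈ Dset c d, MvPolynomial.coeff (eeg a) (h * g) = 0 := by
    intro h g hh hg a ha
    rw [← MvPolynomial.notMem_support_iff]
    intro hmem
    obtain ⟨p, hp, w, hw, hpw⟩ := Finset.mem_add.1 (support_mul _ _ hmem)
    have hwgS : gS c d (w 0) ≤ w 1 := (mem_prodJ_iff hc hd hsort hJ).1 hg w hw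
    have hwle : w ≤ eeg a := by
      rw [← hpw, le_iff_2]
      simp [Finsupp.add_apply]
    have hw2 : w = ee a (gS c d a) := key_minimal hc ha hwgS hwle
    rw [hw2] at hpw
    have hp0 : p = 0 := by
      have h9 : p + ee a (gS c d a) = 0 + ee a (gS c d a) := by
        rw [zero_add]
        exact hpw
      exact add_right_cancel h9
    rw [hp0] at hp
    rw [MvPolynomial.mem_support_iff] at hp
    exact hp hh
  have hmulstep : ∀ g ∈ I, ∀ h : MvPolynomial (Fin 2) k,
      π (h * g) = (MvPolynomial.coeff 0 h) • π g := by
    intro g hg h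
    have hsplit : h * g = MvPolynomial.C (MvPolynomial.coeff 0 h) * g
        + (h - MvPolynomial.C (MvPolynomial.coeff 0 h)) * g := by ring
    rw [hsplit, map_add]
    have h2 : π ((h - MvPolynomial.C (MvPolynomial.coeff 0 h)) * g) = 0 := by
      funext a
      rw [hπapply]
      refine mI0 _ _ ?_ hg _ a.2
      rw [MvPolynomial.coeff_sub, MvPolynomial.coeff_zero_C, sub_self]
    rw [h2, add_zero, ← MvPolynomial.smul_eq_C_mul, map_smul]
  have hspanstep : ∀ p ∈ I, π p ∈ Submodule.span k (π '' (G : Set (MvPolynomial (Fin 2) k))) := by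
    intro p hp
    rw [← hG] at hp
    obtain ⟨h, -, hsum⟩ := Submodule.mem_span_finset.1 hp
    rw [← hsum, map_sum]
    apply Submodule.sum_mem
    intro g hgG
    have hgI : g ∈ I := by rw [← hG]; exact Ideal.subset_span hgG
    rw [smul_eq_mul, hmulstep g hgI (h g)]
    exact Submodule.smul_mem _ _ (Submodule.subset_span (Set.mem_image_of_mem _ hgG))
  have hsingle : ∀ a : ↥(Dset c d),
      Pi.single a (1 : k) ∈ Submodule.span k (π '' (G : Set (MvPolynomial (Fin 2) k))) := by
    intro a
    have hmonI : (monomial (eeg (a : ℕ)) (1 : k)) ∈ I := by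
      rw [hI, mem_prodJ_iff hc hd hsort hJ]
      intro u hu
      rw [support_monomial, if_neg one_ne_zero, Finset.mem_singleton] at hu
      subst hu
      simp [heeg]
    have hπmon : π (monomial (eeg (a : ℕ)) (1 : k)) = Pi.single a 1 := by
      funext a'
      rw [hπapply, MvPolynomial.coeff_monomial, Pi.single_apply]
      by_cases hab : a' = a
      · subst hab
        rw [if_pos rfl, if_pos rfl]
      · rw [if_neg, if_neg hab]
        intro hcon
        apply hab
        have := congrArg (fun w : Fin 2 →₀ ℕ => w 0) hcon
        simp only [heeg, ee_apply0] at this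
        exact Subtype.ext this.symm
    rw [← hπmon]
    exact hspanstep _ hmonI
  have htop : Submodule.span k (π '' (G : Set (MvPolynomial (Fin 2) k))) = ⊤ := by
    refine le_antisymm le_top ?_
    rw [← (Pi.basisFun k ↥(Dset c d)).span_eq]
    refine Submodule.span_le.2 ?_
    rintro x ⟨a, rfl⟩
    rw [Pi.basisFun_apply]
    exact hsingle a
  have h1 : Module.finrank k (↥(Dset c d) → k) = (Dset c d).card := by
    rw [Module.finrank_pi, Fintype.card_coe]
  have h2 : Module.finrank k (↥(Dset c d) → k)
      ≤ (G.image (fun g => π g)).card := by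
    calc Module.finrank k (↥(Dset c d) → k)
        = Module.finrank k (⊤ : Submodule k (↥(Dset c d) → k)) := (finrank_top _ _).symm
      _ = Module.finrank k (Submodule.span k (π '' (G : Set (MvPolynomial (Fin 2) k)))) := by
          rw [htop]
      _ = Module.finrank k (Submodule.span k ((G.image (fun g => π g) : Finset _) :
            Set (↥(Dset c d) → k))) := by rw [Finset.coe_image]
      _ ≤ (G.image (fun g => π g)).card := finrank_span_finset_le_card _
  calc (Dset c d).card = Module.finrank k (↥(Dset c d) → k) := h1.symm
    _ ≤ (G.image (fun g => π g)).card := h2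
    _ ≤ G.card := Finset.card_image_le

include hc hd hsort in
lemma Dset_card : (Dset c d).card = (∑ i, min (c i) (d i)) + 1 := by
  rw [Dset, Finset.card_insert_of_notMem (by simp [descents])]
  simp only [descents]
  rw [total_descent_count hc hd hsort]

end Count
end Gen

/-- **Corollary 3.7.** The minimal number of generators of `I = J₁ ⋯ J_r` as above:
`v(I) = Σ_{i≤s} c_i + Σ_{j>s} d_j + 1`. -/
theorem minimal_number_of_generators {k : Type*} [Field k] (r : ℕ) (hr : 0 < r)
    (c d : Fin r → ℕ) (hc : ∀ i, 0 < c i) (hd : ∀ i, 0 < d i)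
    (hsort : ∀ i j : Fin r, i ≤ j → d j * c i ≤ d i * c j)
    (s : ℕ) (hsr : s ≤ r)
    (hs1 : ∀ i : Fin r, (i : ℕ) < s → c i ≤ d i)
    (hs2 : ∀ i : Fin r, s ≤ (i : ℕ) → d i < c i)
    (J : Fin r → Ideal (MvPolynomial (Fin 2) k))
    (hJ : ∀ i, IsIntegralClosureOfIdeal (J i)
      (Ideal.span {(X 0 : MvPolynomial (Fin 2) k) ^ c i, X 1 ^ d i}))
    (I : Ideal (MvPolynomial (Fin 2) k)) (hI : I = ∏ i, J i) :
    minGens I = ∑ i ∈ Finset.univ.filter (fun i : Fin r => (i : ℕ) < s), c i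
      + ∑ j ∈ Finset.univ.filter (fun j : Fin r => s ≤ (j : ℕ)), d j + 1 := by
  classical
  obtain ⟨r', rfl⟩ : ∃ r', r = r' + 1 := ⟨r - 1, by omega⟩
  subst hI
  set G₀ : Finset (MvPolynomial (Fin 2) k) :=
    (Gen.Dset c d).image (fun a => MvPolynomial.monomial (Gen.ee a (Gen.gS c d a)) (1 : k))
    with hG₀
  have hspan : Ideal.span (G₀ : Set (MvPolynomial (Fin 2) k)) = ∏ i, J i := by
    rw [hG₀, Finset.coe_image]
    exact Gen.span_gens hc hd hsort hJ
  have hinj : Function.Injective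
      (fun a : ℕ => MvPolynomial.monomial (Gen.ee a (Gen.gS c d a)) (1 : k)) := by
    intro a a' hEq
    have h1 := MvPolynomial.monomial_left_injective (one_ne_zero (α := k)) hEq
    have h2 := congrArg (fun w : Fin 2 →₀ ℕ => w 0) h1
    simpa using h2
  have hcard : G₀.card = (Gen.Dset c d).card := Finset.card_image_of_injective _ hinj
  have hDcard : (Gen.Dset c d).card = (∑ i, min (c i) (d i)) + 1 :=
    Gen.Dset_card hc hd hsort
  have hmain : minGens (∏ i, J i) = (∑ i, min (c i) (d i)) + 1 := by
    rw [minGens]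
    apply le_antisymm
    · exact Nat.sInf_le ⟨G₀, by rw [hcard, hDcard], hspan⟩
    · have hne : {n : ℕ | ∃ s : Finset (MvPolynomial (Fin 2) k),
          s.card = n ∧ Ideal.span (s : Set (MvPolynomial (Fin 2) k)) = ∏ i, J i}.Nonempty :=
        ⟨G₀.card, G₀, rfl, hspan⟩
      apply le_csInf hne
      rintro n ⟨G, rfl, hGspan⟩
      rw [← hDcard]
      exact Gen.card_lower_bound hc hd hsort hJ G hGspan
  rw [hmain]
  congr 1
  rw [← Finset.sum_filter_add_sum_filter_not Finset.univ (fun i : Fin (r' + 1) => (i : ℕ) < s)]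
  congr 1
  · apply Finset.sum_congr rfl
    intro i hi
    simp only [Finset.mem_filter, Finset.mem_univ, true_and] at hi
    exact min_eq_left (hs1 i hi)
  · have hfil : Finset.univ.filter (fun i : Fin (r' + 1) => ¬ (i : ℕ) < s)
        = Finset.univ.filter (fun j : Fin (r' + 1) => s ≤ (j : ℕ)) := by
      apply Finset.filter_congr
      intro i _
      simp only [not_lt]
    rw [hfil]
    apply Finset.sum_congr rfl
    intro i hi
    simp only [Finset.mem_filter, Finset.mem_univ, true_and] at hi
    exact min_eq_right (le_of_lt (hs2 i hi))
end
end

section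
/- Let p and q be positive integers with gcd(p,q) = 1, and let C be the integral closure of (x^p, y^q) in R = k[x,y]. Give R the weighted grading with deg x = q and deg y = p. Then every monomial x^a y^b lying in C satisfies aq + bp ≥ pq, and x^p and y^q are the only monomials in C of weighted degree exactly pq (i.e., aq + bp = pq with x^a y^b ∈ C forces (a,b) = (p,0) or (a,b) = (0,q)). -/
open MvPolynomial Pointwise

noncomputable section

lemma weighted_key_ineq {k : Type*} [Field k] (p q : ℕ) (hp : 0 < p) (hq : 0 < q)
    (a b : ℕ)
    (h : IsIntegralOverIdeal (Ideal.span {(X 0 : MvPolynomial (Fin 2) k) ^ p, X 1 ^ q})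
      ((X 0 : MvPolynomial (Fin 2) k) ^ a * X 1 ^ b)) : p * q ≤ a * q + b * p := by
  by_contra hlt
  push_neg at hlt
  obtain ⟨n, hn, c, hcj, heq⟩ := h
  set d := a * q + b * p with hd
  let φ : MvPolynomial (Fin 2) k →+* Polynomial k :=
    (MvPolynomial.aeval (fun i : Fin 2 =>
      if i = 0 then (Polynomial.X : Polynomial k) ^ q else Polynomial.X ^ p)).toRingHom
  have hφx : φ (X 0) = Polynomial.X ^ q := by simp [φ]
  have hφy : φ (X 1) = Polynomial.X ^ p := by simp [φ]
  have hφm : φ (X 0 ^ a * X 1 ^ b) = Polynomial.X ^ d := by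
    rw [map_mul, map_pow, map_pow, hφx, hφy, ← pow_mul, ← pow_mul, ← pow_add]
    rw [hd]; ring
  have hmap : ∀ j ∈ Finset.Icc 1 n, ∃ g : Polynomial k,
      φ (c j) = Polynomial.X ^ (p * q * j) * g := by
    intro j hj
    have h1 : φ (c j) ∈ Ideal.map φ
        ((Ideal.span {(X 0 : MvPolynomial (Fin 2) k) ^ p, X 1 ^ q}) ^ j) :=
      Ideal.mem_map_of_mem φ (hcj j hj)
    rw [Ideal.map_pow, Ideal.map_span] at h1
    have himg : φ '' {(X 0 : MvPolynomial (Fin 2) k) ^ p, X 1 ^ q}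
        = {(Polynomial.X : Polynomial k) ^ (p * q)} := by
      rw [Set.image_pair, map_pow, map_pow, hφx, hφy, ← pow_mul, ← pow_mul,
        mul_comm q p, Set.pair_eq_singleton]
    rw [himg, Ideal.span_singleton_pow, Ideal.mem_span_singleton, ← pow_mul] at h1
    obtain ⟨g, hg⟩ := h1
    exact ⟨g, hg⟩
  have h0 := congrArg φ heq
  rw [map_add, map_pow, hφm, map_sum, map_zero] at h0
  have h1 := congrArg (fun f => Polynomial.coeff f (d * n)) h0
  simp only [Polynomial.coeff_add, Polynomial.coeff_zero] at h1
  rw [← pow_mul, Polynomial.coeff_X_pow, if_pos rfl, Polynomial.finset_sum_coeff] at h1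
  have hzero : ∀ j ∈ Finset.Icc 1 n,
      (φ (c j * (X 0 ^ a * X 1 ^ b) ^ (n - j))).coeff (d * n) = 0 := by
    intro j hj
    obtain ⟨g, hg⟩ := hmap j hj
    rw [map_mul, map_pow, hφm, ← pow_mul, hg,
      show Polynomial.X ^ (p * q * j) * g * Polynomial.X ^ (d * (n - j))
        = g * Polynomial.X ^ (p * q * j + d * (n - j)) by ring]
    rw [Polynomial.coeff_mul_X_pow', if_neg]
    push_neg
    obtain ⟨hj1, hj2⟩ := Finset.mem_Icc.mp hj
    have hdj : d * j < p * q * j := by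
      exact Nat.mul_lt_mul_of_lt_of_le hlt le_rfl (by omega)
    have hsplit : d * n = d * (n - j) + d * j := by
      rw [← Nat.mul_add]
      congr 1
      omega
    omega
  rw [Finset.sum_congr rfl hzero, Finset.sum_const_zero] at h1
  simp at h1

/-- With `deg x = q`, `deg y = p` and `C` the integral closure of `(x^p, y^q)`,
`gcd(p,q) = 1`: every monomial `x^a y^b ∈ C` has weighted degree `aq + bp ≥ pq`,
and `x^p`, `y^q` are the only monomials in `C` of weighted degree exactly `pq`. -/
theorem weighted_degree_of_block_ideal {k : Type*} [Field k] (p q : ℕ)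
    (hp : 0 < p) (hq : 0 < q) (hpq : Nat.gcd p q = 1)
    (C : Ideal (MvPolynomial (Fin 2) k))
    (hC : IsIntegralClosureOfIdeal C
      (Ideal.span {(X 0 : MvPolynomial (Fin 2) k) ^ p, X 1 ^ q})) :
    (∀ a b : ℕ, (X 0 : MvPolynomial (Fin 2) k) ^ a * X 1 ^ b ∈ C → p * q ≤ a * q + b * p) ∧
    (∀ a b : ℕ, (X 0 : MvPolynomial (Fin 2) k) ^ a * X 1 ^ b ∈ C → a * q + b * p = p * q →
      (a = p ∧ b = 0) ∨ (a = 0 ∧ b = q)) := by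
  constructor
  · intro a b hmem
    exact weighted_key_ineq p q hp hq a b ((hC _).mp hmem)
  · intro a b _ heq
    have hble : b ≤ q := by nlinarith
    have hpa : p ∣ a := by
      refine (Nat.Coprime.dvd_of_dvd_mul_right hpq ?_)
      refine ⟨q - b, ?_⟩
      have heqz : (a : ℤ) * q + b * p = p * q := by exact_mod_cast heq
      zify [hble]
      linear_combination heqz
    obtain ⟨m, hm⟩ := hpa
    have hm1 : m ≤ 1 := by
      by_contra hc
      push_neg at hc
      have h2 : p * 2 ≤ a := hm ▸ Nat.mul_le_mul_left p hc
      have h3 : p * 2 * q ≤ a * q := Nat.mul_le_mul_right q h2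
      nlinarith
    interval_cases m
    · right
      rw [Nat.mul_zero] at hm
      subst hm
      rw [Nat.zero_mul, Nat.zero_add] at heq
      exact ⟨rfl, Nat.eq_of_mul_eq_mul_right hp (by linarith)⟩
    · left
      rw [Nat.mul_one] at hm
      refine ⟨hm, ?_⟩
      rw [hm] at heq
      have hb0 : b * p = 0 := Nat.add_left_cancel (heq.trans (Nat.add_zero (p * q)).symm)
      rcases Nat.mul_eq_zero.mp hb0 with h | h
      · exact h
      · omega
end
end
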